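/- arXiv:2103.09332 — 11 statements merged into one kernel-verified Lean document; each statement's English description precedes it below -/
import Mathlib

section
/- Let X and Y be real normed vector spaces with X nontrivial (containing a nonzero vector), let f : X → Y, let x ∈ X, and suppose f has Fréchet derivative A at x. Then the operator norm of A equals the limit superior, as y → x through values y ≠ x, of ‖f(y) − f(x)‖/‖y − x‖; that is, ‖A‖ = limsup_{y → x, y ≠ x} ‖f(y) − f(x)‖/‖y − x‖. -/
open Filter Topology

/-- The operator norm of the Fréchet derivative equals the limsup of difference
quotients along the punctured neighborhood filter. -/
theorem fderiv_norm_eq_limsup_diff_quot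
    {X Y : Type*} [NormedAddCommGroup X] [NormedSpace ℝ X]
    [NormedAddCommGroup Y] [NormedSpace ℝ Y] [Nontrivial X]
    (f : X → Y) (x : X) (A : X →L[ℝ] Y) (hf : HasFDerivAt f A x) :
    ‖A‖ = Filter.limsup (fun y => ‖f y - f x‖ / ‖y - x‖) (𝓝[≠] x) := by
  have : NeBot (𝓝[≠] x) := Module.punctured_nhds_neBot ℝ X x
  set u : X → ℝ := fun y => ‖f y - f x‖ / ‖y - x‖ with hu
  have hx : ∀ᶠ y in 𝓝[≠] x, y ≠ x := eventually_mem_nhdsWithin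
  have key : ∀ ε > (0:ℝ), ∀ᶠ y in 𝓝[≠] x, u y ≤ ‖A‖ + ε := by
    intro ε hε
    have h1 := hf.isLittleO.def hε
    filter_upwards [nhdsWithin_le_nhds h1, hx] with y h hy
    have hpos : (0:ℝ) < ‖y - x‖ := by
      simpa [norm_pos_iff, sub_ne_zero] using hy
    rw [hu, div_le_iff₀ hpos]
    calc ‖f y - f x‖ = ‖(f y - f x - A (y - x)) + A (y - x)‖ := by congr 1; abel
      _ ≤ ‖f y - f x - A (y - x)‖ + ‖A (y - x)‖ := norm_add_le _ _
      _ ≤ ε * ‖y - x‖ + ‖A‖ * ‖y - x‖ := add_le_add h (A.le_opNorm _)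
      _ = (‖A‖ + ε) * ‖y - x‖ := by ring
  have hbdd : IsBoundedUnder (· ≤ ·) (𝓝[≠] x) u := ⟨‖A‖ + 1, by
    simpa [eventually_map] using key 1 one_pos⟩
  have hnn : ∀ y, 0 ≤ u y := fun y => div_nonneg (norm_nonneg _) (norm_nonneg _)
  apply le_antisymm
  · -- ‖A‖ ≤ limsup
    have hls_nonneg : (0:ℝ) ≤ limsup u (𝓝[≠] x) :=
      le_limsup_of_frequently_le (Eventually.of_forall hnn).frequently hbdd
    refine A.opNorm_le_bound hls_nonneg fun v => ?_
    rcases eq_or_ne v 0 with rfl | hv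
    · simp
    have hvpos : (0:ℝ) < ‖v‖ := norm_pos_iff.2 hv
    rw [← div_le_iff₀ hvpos]
    set g : ℝ → X := fun t => x + t • v with hg
    have hc : Continuous g := by fun_prop
    have hgx : Tendsto g (𝓝[>] (0:ℝ)) (𝓝 x) := by
      have h0 : Tendsto g (𝓝[>] (0:ℝ)) (𝓝 (g 0)) :=
        (hc.tendsto 0).mono_left nhdsWithin_le_nhds
      simpa [hg] using h0
    have hgne : ∀ᶠ t in 𝓝[>] (0:ℝ), g t ≠ x := by
      filter_upwards [self_mem_nhdsWithin] with t (ht : 0 < t)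
      simp [hg, smul_eq_zero, ht.ne', hv, sub_eq_zero]
    have hgmap : Tendsto g (𝓝[>] (0:ℝ)) (𝓝[≠] x) :=
      tendsto_nhdsWithin_iff.2 ⟨hgx, hgne⟩
    have herr : (fun t : ℝ => f (g t) - f x - A (g t - x)) =o[𝓝[>] (0:ℝ)]
        (fun t => g t - x) := hf.isLittleO.comp_tendsto hgx
    have herr2 : Tendsto (fun t => ‖f (g t) - f x - A (g t - x)‖ / ‖g t - x‖)
        (𝓝[>] (0:ℝ)) (𝓝 0) := herr.norm_norm.tendsto_div_nhds_zero
    have hcomp : Tendsto (u ∘ g) (𝓝[>] (0:ℝ)) (𝓝 (‖A v‖ / ‖v‖)) := by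
      rw [tendsto_iff_dist_tendsto_zero]
      refine squeeze_zero' (Eventually.of_forall fun t => dist_nonneg) ?_ herr2
      filter_upwards [self_mem_nhdsWithin] with t (ht : 0 < t)
      have hsub : g t - x = t • v := by simp [hg]
      have h2 : ‖A v‖ / ‖v‖ = ‖A (g t - x)‖ / ‖g t - x‖ := by
        rw [hsub, map_smul, norm_smul, norm_smul, Real.norm_eq_abs, abs_of_pos ht,
          mul_div_mul_left _ _ ht.ne']
      simp only [Function.comp_apply, Real.dist_eq, hu, h2, div_sub_div_same]
      rw [abs_div, abs_norm]
      gcongr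
      exact abs_norm_sub_norm_le _ _
    have h2 : limsup (u ∘ g) (𝓝[>] (0:ℝ)) = limsup u (map g (𝓝[>] (0:ℝ))) := by
      rw [limsup, limsup, map_map]
    have hcob : IsCoboundedUnder (· ≤ ·) (map g (𝓝[>] (0:ℝ))) u := by
      rw [IsCoboundedUnder, map_map]
      exact isCoboundedUnder_le_of_le _ fun t => hnn (g t)
    calc ‖A v‖ / ‖v‖ = limsup (u ∘ g) (𝓝[>] (0:ℝ)) := hcomp.limsup_eq.symm
      _ = limsup u (map g (𝓝[>] (0:ℝ))) := h2
      _ ≤ limsup u (𝓝[≠] x) := limsup_le_limsup_of_le hgmap hcob hbdd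
  · -- limsup ≤ ‖A‖
    have hcobdd : IsCoboundedUnder (· ≤ ·) (𝓝[≠] x) u := isCoboundedUnder_le_of_le _ hnn
    have h : ∀ ε > (0:ℝ), limsup u (𝓝[≠] x) ≤ ‖A‖ + ε := fun ε hε =>
      limsup_le_of_le hcobdd (key ε hε)
    linarith [le_of_forall_pos_le_add h]
end

section
/- Let X and Y be real normed vector spaces, let Ω ⊆ X be an open convex set, let f : X → Y be Fréchet differentiable at every point of Ω, let ω : X → ℝ be continuous and nonnegative on Ω, and let m ≥ 0. If ‖d_f(z)‖ ≤ m · ω(z) for every z ∈ Ω, then for all x, y ∈ Ω: ‖f(x) − f(y)‖ ≤ m · ‖x − y‖ · ∫₀¹ ω((1 − t)x + t y) dt. -/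
open Filter Topology

/-- Weighted mean value estimate along segments: if `‖d_f‖ ≤ m·ω` on an open convex
set `Ω`, then `‖f x - f y‖ ≤ m · ‖x - y‖ · ∫₀¹ ω((1-t)x + ty) dt` for `x, y ∈ Ω`. -/
theorem norm_sub_le_mul_intervalIntegral_weight
    {X Y : Type*} [NormedAddCommGroup X] [NormedSpace ℝ X]
    [NormedAddCommGroup Y] [NormedSpace ℝ Y]
    (Ω : Set X) (hΩo : IsOpen Ω) (hΩc : Convex ℝ Ω)
    (f : X → Y) (hf : ∀ z ∈ Ω, DifferentiableAt ℝ f z)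
    (ω : X → ℝ) (hωc : ContinuousOn ω Ω) (hω0 : ∀ z ∈ Ω, 0 ≤ ω z)
    (m : ℝ) (hm : 0 ≤ m) (hbd : ∀ z ∈ Ω, ‖fderiv ℝ f z‖ ≤ m * ω z) :
    ∀ x ∈ Ω, ∀ y ∈ Ω,
      ‖f x - f y‖ ≤ m * ‖x - y‖ * ∫ t in (0:ℝ)..1, ω ((1 - t) • x + t • y) := by
  intro x hx y hy
  set γ : ℝ → X := fun t => (1 - t) • x + t • y with hγdef
  have hγmem : ∀ t ∈ Set.Icc (0:ℝ) 1, γ t ∈ Ω := by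
    intro t ht
    exact hΩc hx hy (by linarith [ht.2]) ht.1 (by ring)
  have hγderiv : ∀ t : ℝ, HasDerivAt γ (y - x) t := by
    intro t
    have h1 : HasDerivAt (fun t : ℝ => x + t • (y - x)) (y - x) t := by
      simpa using ((hasDerivAt_id t).smul_const (y - x)).const_add x
    convert h1 using 1
    funext s
    simp only [hγdef]
    module
  have hγcont : Continuous γ := by
    fun_prop
  set w : ℝ → ℝ := fun t => ω (γ t) with hwdef
  set U : Set ℝ := γ ⁻¹' Ω with hUdef
  have hUo : IsOpen U := hΩo.preimage hγcont
  have hwU : ContinuousOn w U := by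
    intro t ht
    exact ((hωc.continuousAt (hΩo.mem_nhds ht)).comp hγcont.continuousAt).continuousWithinAt
  have hIccU : Set.Icc (0:ℝ) 1 ⊆ U := fun t ht => hγmem t ht
  -- interval integrability of w on any subinterval of [0,1]
  have hwint : ∀ t ∈ Set.Icc (0:ℝ) 1, IntervalIntegrable w MeasureTheory.volume 0 t := by
    intro t ht
    apply ContinuousOn.intervalIntegrable
    apply hwU.mono
    rw [Set.uIcc_of_le ht.1]
    exact fun s hs => hIccU ⟨hs.1, hs.2.trans ht.2⟩
  set B : ℝ → ℝ := fun t => m * ‖x - y‖ * ∫ s in (0:ℝ)..t, w s with hBdef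
  set B' : ℝ → ℝ := fun t => m * ‖x - y‖ * w t with hB'def
  have hBderiv : ∀ t ∈ Set.Icc (0:ℝ) 1, HasDerivAt B (B' t) t := by
    intro t ht
    have hd : HasDerivAt (fun u => ∫ s in (0:ℝ)..u, w s) (w t) t := by
      apply intervalIntegral.integral_hasDerivAt_right (hwint t ht)
      · exact ContinuousOn.stronglyMeasurableAtFilter hUo hwU t (hIccU ht)
      · exact hwU.continuousAt (hUo.mem_nhds (hIccU ht))
    simpa [hBdef, hB'def] using hd.const_mul (m * ‖x - y‖)
  set g : ℝ → Y := fun t => f (γ t) - f x with hgdef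
  set g' : ℝ → Y := fun t => fderiv ℝ f (γ t) (y - x) with hg'def
  have hgderiv : ∀ t ∈ Set.Icc (0:ℝ) 1, HasDerivAt g (g' t) t := by
    intro t ht
    have h1 : HasDerivAt (fun t => f (γ t)) (fderiv ℝ f (γ t) (y - x)) t :=
      (hf (γ t) (hγmem t ht)).hasFDerivAt.comp_hasDerivAt t (hγderiv t)
    simpa [hgdef, hg'def] using h1.sub_const (f x)
  have hgcont : ContinuousOn g (Set.Icc 0 1) := fun t ht =>
    (hgderiv t ht).continuousAt.continuousWithinAt
  have hBcont : ContinuousOn B (Set.Icc 0 1) := fun t ht =>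
    (hBderiv t ht).continuousAt.continuousWithinAt
  have hbound : ∀ t ∈ Set.Ico (0:ℝ) 1, ‖g' t‖ ≤ B' t := by
    intro t ht
    have hz := hγmem t ⟨ht.1, le_of_lt ht.2⟩
    calc ‖g' t‖ ≤ ‖fderiv ℝ f (γ t)‖ * ‖y - x‖ := (fderiv ℝ f (γ t)).le_opNorm _
      _ ≤ (m * ω (γ t)) * ‖y - x‖ :=
          mul_le_mul_of_nonneg_right (hbd _ hz) (norm_nonneg _)
      _ = B' t := by rw [norm_sub_rev]; simp [hB'def, hwdef]; ring
  have key : ‖g 1‖ ≤ B 1 := by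
    apply image_norm_le_of_norm_deriv_right_le_deriv_boundary' hgcont
      (fun t ht => (hgderiv t ⟨ht.1, le_of_lt ht.2⟩).hasDerivWithinAt)
      _ hBcont
      (fun t ht => (hBderiv t ⟨ht.1, le_of_lt ht.2⟩).hasDerivWithinAt)
      hbound (Set.right_mem_Icc.2 zero_le_one)
    simp [hgdef, hBdef, hγdef]
  have hγ1 : γ 1 = y := by simp [hγdef]
  calc ‖f x - f y‖ = ‖g 1‖ := by rw [hgdef]; simp [hγ1, norm_sub_rev]
    _ ≤ B 1 := key
    _ = m * ‖x - y‖ * ∫ t in (0:ℝ)..1, ω ((1 - t) • x + t • y) := rfl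
end

section
/- Let X and Y be real normed vector spaces, let Ω ⊆ X be a nonempty open convex set, let δ > 0, and let M ∈ ℝ satisfy ‖x‖ < M for every x ∈ Ω. Let φ : ℝ → ℝ be differentiable on (−δ, M), with derivative φ′ continuous and strictly positive on (−δ, M), with φ′ monotone nondecreasing on [0, M), and satisfying φ(t) − φ(s) ≤ √(φ′(t) · φ′(s)) · (t − s) whenever −δ < s < t < M. Let f : Ω → Y be Fréchet differentiable at every point of Ω. Then, as elements of the extended nonnegative reals [0,∞], ⨆_{x ∈ Ω} ‖d_f(x)‖/φ′(‖x‖) = ⨆_{x, y ∈ Ω, x ≠ y} ‖f(x) − f(y)‖ / ( √(φ′(‖x‖)) · ‖x − y‖ · √(φ′(‖y‖)) ). In particular, one side is finite if and only if the other is, and then they are equal. -/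
open Filter Topology

section Aux
open Set in

lemma mvt_key {X Y : Type*} [NormedAddCommGroup X] [NormedSpace ℝ X]
    [NormedAddCommGroup Y] [NormedSpace ℝ Y]
    {Ω : Set X} (hΩc : Convex ℝ Ω)
    {δ M : ℝ} (hδ : 0 < δ) (hM : ∀ x ∈ Ω, ‖x‖ < M)
    {φ φ' : ℝ → ℝ}
    (hφ : ∀ t ∈ Set.Ioo (-δ) M, HasDerivAt φ (φ' t) t)
    (hφ'pos : ∀ t ∈ Set.Ioo (-δ) M, 0 < φ' t)
    (hφ'mono : MonotoneOn φ' (Set.Ico 0 M))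
    (hineq : ∀ s t : ℝ, -δ < s → s < t → t < M →
      φ t - φ s ≤ Real.sqrt (φ' t * φ' s) * (t - s))
    {f : X → Y} (hf : ∀ z ∈ Ω, DifferentiableAt ℝ f z)
    {a : ℝ} (ha0 : 0 ≤ a) (ha : ∀ z ∈ Ω, ‖fderiv ℝ f z‖ ≤ a * φ' ‖z‖)
    {x y : X} (hx : x ∈ Ω) (hy : y ∈ Ω) (hyx : ‖y‖ ≤ ‖x‖) :
    ‖f x - f y‖ ≤ a * (Real.sqrt (φ' ‖x‖) * ‖x - y‖ * Real.sqrt (φ' ‖y‖)) := by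
  have hxM : ‖x‖ < M := hM x hx
  have hyM : ‖y‖ < M := hM y hy
  have hy0 : (0:ℝ) ≤ ‖y‖ := norm_nonneg y
  have hx0 : (0:ℝ) ≤ ‖x‖ := norm_nonneg x
  set z : ℝ → X := fun t => y + t • (x - y) with hzdef
  have hzΩ : ∀ t ∈ Icc (0:ℝ) 1, z t ∈ Ω := fun t ht =>
    hΩc.add_smul_sub_mem hy hx ht
  set ℓ : ℝ → ℝ := fun t => ‖y‖ + t * (‖x‖ - ‖y‖) with hldef
  have hℓmem : ∀ t ∈ Icc (0:ℝ) 1, ℓ t ∈ Ico 0 M := by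
    intro t ht
    constructor
    · have : 0 ≤ t * (‖x‖ - ‖y‖) := mul_nonneg ht.1 (by linarith)
      simp only [hldef]; linarith
    · have : t * (‖x‖ - ‖y‖) ≤ 1 * (‖x‖ - ‖y‖) :=
        mul_le_mul_of_nonneg_right ht.2 (by linarith)
      simp only [hldef]; linarith
  have hznorm : ∀ t ∈ Icc (0:ℝ) 1, ‖z t‖ ≤ ℓ t := by
    intro t ht
    have : z t = (1 - t) • y + t • x := by
      simp only [hzdef]; module
    rw [this]
    calc ‖(1-t) • y + t • x‖ ≤ ‖(1-t) • y‖ + ‖t • x‖ := norm_add_le _ _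
      _ = (1-t) * ‖y‖ + t * ‖x‖ := by
          rw [norm_smul, norm_smul, Real.norm_eq_abs, Real.norm_eq_abs,
            abs_of_nonneg (by linarith [ht.2] : (0:ℝ) ≤ 1 - t), abs_of_nonneg ht.1]
      _ = ℓ t := by simp only [hldef]; ring
  have hznorm_mem : ∀ t ∈ Icc (0:ℝ) 1, ‖z t‖ ∈ Ico (0:ℝ) M := by
    intro t ht
    exact ⟨norm_nonneg _, lt_of_le_of_lt (hznorm t ht) (hℓmem t ht).2⟩
  -- derivative of g t = f (z t)
  set g : ℝ → Y := fun t => f (z t) - f y with hgdef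
  have hg' : ∀ t ∈ Icc (0:ℝ) 1, HasDerivAt g (fderiv ℝ f (z t) (x - y)) t := by
    intro t ht
    have hz' : HasDerivAt z (x - y) t := by
      have h := ((hasDerivAt_id t).smul_const (x - y)).const_add y
      rw [one_smul] at h; exact h
    have := ((hf _ (hzΩ t ht)).hasFDerivAt.comp_hasDerivAt t hz')
    simpa [hgdef] using this.sub_const (f y)
  have hbound : ∀ t ∈ Icc (0:ℝ) 1,
      ‖fderiv ℝ f (z t) (x - y)‖ ≤ a * φ' (ℓ t) * ‖x - y‖ := by
    intro t ht
    calc ‖fderiv ℝ f (z t) (x - y)‖ ≤ ‖fderiv ℝ f (z t)‖ * ‖x - y‖ :=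
          (fderiv ℝ f (z t)).le_opNorm _
      _ ≤ a * φ' ‖z t‖ * ‖x - y‖ := by
          gcongr; exact ha _ (hzΩ t ht)
      _ ≤ a * φ' (ℓ t) * ‖x - y‖ := by
          gcongr
          exact hφ'mono (hznorm_mem t ht) (hℓmem t ht) (hznorm t ht)
  -- case split
  rcases eq_or_lt_of_le hyx with heq | hlt
  · -- equal norms: constant bound
    have hφx : φ' ‖x‖ = φ' (ℓ 1) := by simp [hldef]
    have hconst : ∀ t ∈ Icc (0:ℝ) 1, φ' (ℓ t) = φ' ‖x‖ := by
      intro t ht; simp [hldef, ← heq]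
    have := norm_image_sub_le_of_norm_deriv_le_segment'
      (f := g) (f' := fun t => fderiv ℝ f (z t) (x - y)) (a := 0) (b := 1)
      (C := a * φ' ‖x‖ * ‖x - y‖)
      (fun t ht => (hg' t ht).hasDerivWithinAt)
      (fun t ht => by
        rw [← hconst t (Set.Ico_subset_Icc_self ht)]
        exact hbound t (Set.Ico_subset_Icc_self ht))
      1 (by norm_num)
    have h1 : g 1 - g 0 = f x - f y := by simp [hgdef, hzdef]
    rw [h1] at this
    have hsq : Real.sqrt (φ' ‖x‖) * Real.sqrt (φ' ‖y‖) = φ' ‖x‖ := by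
      rw [← heq]
      exact Real.mul_self_sqrt (le_of_lt (hφ'pos _ ⟨by linarith, hyM⟩))
    calc ‖f x - f y‖ ≤ a * φ' ‖x‖ * ‖x - y‖ * (1 - 0) := this
      _ = a * (Real.sqrt (φ' ‖x‖) * ‖x - y‖ * Real.sqrt (φ' ‖y‖)) := by
          linear_combination (-(a * ‖x - y‖)) * hsq
  · -- strict: use boundary function B t = c * (φ (ℓ t) - φ ‖y‖)
    set c : ℝ := a * ‖x - y‖ / (‖x‖ - ‖y‖) with hcdef
    have hc0 : 0 ≤ c := div_nonneg (mul_nonneg ha0 (norm_nonneg _)) (by linarith)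
    set B : ℝ → ℝ := fun t => c * (φ (ℓ t) - φ ‖y‖) with hBdef
    have hℓIoo : ∀ t ∈ Icc (0:ℝ) 1, ℓ t ∈ Ioo (-δ) M := by
      intro t ht
      exact ⟨lt_of_lt_of_le (by linarith) (hℓmem t ht).1, (hℓmem t ht).2⟩
    have hB' : ∀ t ∈ Icc (0:ℝ) 1, HasDerivAt B (a * φ' (ℓ t) * ‖x - y‖) t := by
      intro t ht
      have hℓ' : HasDerivAt ℓ (‖x‖ - ‖y‖) t := by
        have hℓeq : ℓ = fun s => ‖y‖ + (‖x‖ - ‖y‖) * s := by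
          funext s; simp only [hldef]; ring
        rw [hℓeq]
        simpa using ((hasDerivAt_id t).const_mul (‖x‖ - ‖y‖)).const_add ‖y‖
      have hφℓ : HasDerivAt (fun t => φ (ℓ t)) (φ' (ℓ t) * (‖x‖ - ‖y‖)) t :=
        (hφ _ (hℓIoo t ht)).comp t hℓ'
      have hD := ((hφℓ.sub_const (φ ‖y‖)).const_mul c)
      have hne : ‖x‖ - ‖y‖ ≠ 0 := sub_ne_zero.2 hlt.ne'
      have harith : a * φ' (ℓ t) * ‖x - y‖ = c * (φ' (ℓ t) * (‖x‖ - ‖y‖)) := by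
        rw [hcdef]; generalize φ' (ℓ t) = w; field_simp
      rw [harith]
      exact hD
    have hmain := image_norm_le_of_norm_deriv_right_le_deriv_boundary'
      (f := g) (f' := fun t => fderiv ℝ f (z t) (x - y)) (a := 0) (b := 1)
      (B := B) (B' := fun t => a * φ' (ℓ t) * ‖x - y‖)
      (fun t ht => (hg' t ht).continuousAt.continuousWithinAt)
      (fun t ht => ((hg' t (Ico_subset_Icc_self ht)).hasDerivWithinAt))
      (by simp [hgdef, hBdef, hldef, hzdef])
      (fun t ht => (hB' t ht).continuousAt.continuousWithinAt)
      (fun t ht => (hB' t (Ico_subset_Icc_self ht)).hasDerivWithinAt)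
      (fun t ht => hbound t (Ico_subset_Icc_self ht))
      (right_mem_Icc.2 zero_le_one)
    have hg1 : g 1 = f x - f y := by simp [hgdef, hzdef]
    have hB1 : B 1 = c * (φ ‖x‖ - φ ‖y‖) := by simp [hBdef, hldef]
    rw [hg1, hB1] at hmain
    have hineq' := hineq ‖y‖ ‖x‖ (by linarith) hlt hxM
    have hsqrt : Real.sqrt (φ' ‖x‖ * φ' ‖y‖) = Real.sqrt (φ' ‖x‖) * Real.sqrt (φ' ‖y‖) :=
      Real.sqrt_mul (le_of_lt (hφ'pos _ ⟨by linarith, hxM⟩)) _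
    calc ‖f x - f y‖ ≤ c * (φ ‖x‖ - φ ‖y‖) := hmain
      _ ≤ c * (Real.sqrt (φ' ‖x‖ * φ' ‖y‖) * (‖x‖ - ‖y‖)) := by
          apply mul_le_mul_of_nonneg_left hineq' hc0
      _ = a * ‖x - y‖ * Real.sqrt (φ' ‖x‖ * φ' ‖y‖) := by
          have hne : ‖x‖ - ‖y‖ ≠ 0 := sub_ne_zero.2 hlt.ne'
          rw [hcdef]; generalize Real.sqrt (φ' ‖x‖ * φ' ‖y‖) = w
          field_simp
      _ = a * (Real.sqrt (φ' ‖x‖) * ‖x - y‖ * Real.sqrt (φ' ‖y‖)) := by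
          rw [hsqrt]; ring

end Aux

set_option maxHeartbeats 1000000 in
/-- Jocić-type representation of the Bloch type semi-norm with weight `φ'(‖·‖)`,
for `φ` with the properties of a nonconstant operator monotone function on `(-δ, M)`
whose derivative is nondecreasing on `[0, M)`. -/
theorem blochSeminorm_eq_of_opMonotoneLike
    {X Y : Type*} [NormedAddCommGroup X] [NormedSpace ℝ X]
    [NormedAddCommGroup Y] [NormedSpace ℝ Y]
    (Ω : Set X) (hΩne : Ω.Nonempty) (hΩo : IsOpen Ω) (hΩc : Convex ℝ Ω)
    (δ M : ℝ) (hδ : 0 < δ) (hM : ∀ x ∈ Ω, ‖x‖ < M)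
    (φ φ' : ℝ → ℝ)
    (hφ : ∀ t ∈ Set.Ioo (-δ) M, HasDerivAt φ (φ' t) t)
    (hφ'c : ContinuousOn φ' (Set.Ioo (-δ) M))
    (hφ'pos : ∀ t ∈ Set.Ioo (-δ) M, 0 < φ' t)
    (hφ'mono : MonotoneOn φ' (Set.Ico 0 M))
    (hineq : ∀ s t : ℝ, -δ < s → s < t → t < M →
      φ t - φ s ≤ Real.sqrt (φ' t * φ' s) * (t - s))
    (f : X → Y) (hf : ∀ z ∈ Ω, DifferentiableAt ℝ f z) :
    (⨆ x ∈ Ω, ENNReal.ofReal ‖fderiv ℝ f x‖ / ENNReal.ofReal (φ' ‖x‖))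
      = ⨆ x ∈ Ω, ⨆ y ∈ Ω, ⨆ _ : x ≠ y,
          ENNReal.ofReal ‖f x - f y‖ /
            (ENNReal.ofReal (Real.sqrt (φ' ‖x‖)) * ENNReal.ofReal ‖x - y‖ *
              ENNReal.ofReal (Real.sqrt (φ' ‖y‖))) := by
  have hmem : ∀ x ∈ Ω, ‖x‖ ∈ Set.Ioo (-δ) M := fun x hx =>
    ⟨by linarith [norm_nonneg x], hM x hx⟩
  have hpos : ∀ x ∈ Ω, 0 < φ' ‖x‖ := fun x hx => hφ'pos _ (hmem x hx)
  set A := ⨆ x ∈ Ω, ENNReal.ofReal ‖fderiv ℝ f x‖ / ENNReal.ofReal (φ' ‖x‖) with hA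
  set B := ⨆ x ∈ Ω, ⨆ y ∈ Ω, ⨆ _ : x ≠ y,
          ENNReal.ofReal ‖f x - f y‖ /
            (ENNReal.ofReal (Real.sqrt (φ' ‖x‖)) * ENNReal.ofReal ‖x - y‖ *
              ENNReal.ofReal (Real.sqrt (φ' ‖y‖))) with hB
  -- denominator facts
  have hDne : ∀ x ∈ Ω, ∀ y ∈ Ω, x ≠ y →
      (ENNReal.ofReal (Real.sqrt (φ' ‖x‖)) * ENNReal.ofReal ‖x - y‖ *
        ENNReal.ofReal (Real.sqrt (φ' ‖y‖))) ≠ 0 := by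
    intro x hx y hy hxy
    have h1 : 0 < Real.sqrt (φ' ‖x‖) := Real.sqrt_pos.2 (hpos x hx)
    have h2 : 0 < Real.sqrt (φ' ‖y‖) := Real.sqrt_pos.2 (hpos y hy)
    have h3 : 0 < ‖x - y‖ := norm_sub_pos_iff.2 hxy
    simp only [ne_eq, mul_eq_zero, ENNReal.ofReal_eq_zero, not_or, not_le]
    exact ⟨⟨h1, h3⟩, h2⟩
  have hDnt : ∀ (x y : X),
      (ENNReal.ofReal (Real.sqrt (φ' ‖x‖)) * ENNReal.ofReal ‖x - y‖ *
        ENNReal.ofReal (Real.sqrt (φ' ‖y‖))) ≠ ⊤ := by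
    intro x y
    exact ENNReal.mul_ne_top (ENNReal.mul_ne_top ENNReal.ofReal_ne_top
      ENNReal.ofReal_ne_top) ENNReal.ofReal_ne_top
  have hDeq : ∀ (x y : X),
      (ENNReal.ofReal (Real.sqrt (φ' ‖x‖)) * ENNReal.ofReal ‖x - y‖ *
        ENNReal.ofReal (Real.sqrt (φ' ‖y‖)))
        = ENNReal.ofReal (Real.sqrt (φ' ‖x‖) * ‖x - y‖ * Real.sqrt (φ' ‖y‖)) := by
    intro x y
    rw [← ENNReal.ofReal_mul (Real.sqrt_nonneg _),
      ← ENNReal.ofReal_mul (by positivity)]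
  apply le_antisymm
  · -- A ≤ B
    rcases eq_top_or_lt_top B with hBtop | hBlt
    · rw [hBtop]; exact le_top
    set b := B.toReal with hbdef
    have hb0 : 0 ≤ b := ENNReal.toReal_nonneg
    have hBb : B = ENNReal.ofReal b := (ENNReal.ofReal_toReal hBlt.ne).symm
    have hbound : ∀ p ∈ Ω, ∀ q ∈ Ω, p ≠ q →
        ‖f p - f q‖ ≤ b * (Real.sqrt (φ' ‖p‖) * ‖p - q‖ * Real.sqrt (φ' ‖q‖)) := by
      intro p hp q hq hpq
      have hterm : ENNReal.ofReal ‖f p - f q‖ /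
          (ENNReal.ofReal (Real.sqrt (φ' ‖p‖)) * ENNReal.ofReal ‖p - q‖ *
            ENNReal.ofReal (Real.sqrt (φ' ‖q‖))) ≤ B := by
        rw [hB]
        exact le_iSup₂_of_le p hp (le_iSup₂_of_le q hq (le_iSup_of_le hpq le_rfl))
      rw [ENNReal.div_le_iff (hDne p hp q hq hpq) (hDnt p q), hBb, hDeq,
        ← ENNReal.ofReal_mul hb0] at hterm
      exact (ENNReal.ofReal_le_ofReal_iff
        (mul_nonneg hb0 (by positivity))).1 hterm
    refine iSup₂_le fun x hx => ?_
    have hd : ‖fderiv ℝ f x‖ ≤ b * φ' ‖x‖ := by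
      refine ContinuousLinearMap.opNorm_le_bound _
        (mul_nonneg hb0 (le_of_lt (hpos x hx))) fun v => ?_
      rcases eq_or_ne v 0 with rfl | hv
      · simp
      -- derivative of t ↦ f (x + t • v) at 0
      have hfd : HasFDerivAt f (fderiv ℝ f x) (x + (0:ℝ) • v) := by
        simpa using (hf x hx).hasFDerivAt
      have hinner : HasDerivAt (fun t : ℝ => x + t • v) v 0 := by
        simpa using ((hasDerivAt_id (0:ℝ)).smul_const v).const_add x
      have hder : HasDerivAt (fun t : ℝ => f (x + t • v)) (fderiv ℝ f x v) 0 :=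
        hfd.comp_hasDerivAt 0 hinner
      set g : ℝ → Y := fun t => f (x + t • v) with hgdef
      have hslope : Filter.Tendsto (fun t : ℝ => ‖g t - g 0‖ / t) (𝓝[>] 0)
          (𝓝 ‖fderiv ℝ f x v‖) := by
        have h1 := (hasDerivAt_iff_tendsto_slope.1 hder).mono_left
          (nhdsWithin_mono 0 (fun t (ht : t ∈ Set.Ioi (0:ℝ)) => ne_of_gt ht))
        have h2 := h1.norm
        refine h2.congr' ?_
        filter_upwards [self_mem_nhdsWithin] with t (ht : (0:ℝ) < t)
        rw [slope_def_module, norm_smul, sub_zero, norm_inv, Real.norm_eq_abs,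
          abs_of_pos ht, inv_mul_eq_div]
      have hxcont : Filter.Tendsto (fun t : ℝ => ‖x + t • v‖) (𝓝 0) (𝓝 ‖x‖) := by
        have : Continuous (fun t : ℝ => ‖x + t • v‖) :=
          (continuous_const.add (continuous_id.smul continuous_const)).norm
        simpa using this.tendsto 0
      have hφcont : ContinuousAt φ' ‖x‖ :=
        hφ'c.continuousAt (isOpen_Ioo.mem_nhds (hmem x hx))
      have hrhs : Filter.Tendsto
          (fun t : ℝ => b * (Real.sqrt (φ' ‖x‖) * ‖v‖ * Real.sqrt (φ' ‖x + t • v‖)))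
          (𝓝[>] 0) (𝓝 (b * (Real.sqrt (φ' ‖x‖) * ‖v‖ * Real.sqrt (φ' ‖x‖)))) := by
        apply Filter.Tendsto.mono_left _ nhdsWithin_le_nhds
        exact (tendsto_const_nhds.mul (tendsto_const_nhds.mul
          ((Real.continuous_sqrt.tendsto _).comp (hφcont.tendsto.comp hxcont))))
      have hev : ∀ᶠ t in 𝓝[>] (0:ℝ), ‖g t - g 0‖ / t ≤
          b * (Real.sqrt (φ' ‖x‖) * ‖v‖ * Real.sqrt (φ' ‖x + t • v‖)) := by
        have hΩev : ∀ᶠ t in 𝓝 (0:ℝ), x + t • v ∈ Ω := by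
          have hc : Continuous (fun t : ℝ => x + t • v) :=
            continuous_const.add (continuous_id.smul continuous_const)
          have := hc.tendsto 0
          simp only [zero_smul, add_zero] at this
          exact this.eventually (hΩo.eventually_mem hx)
        filter_upwards [self_mem_nhdsWithin, eventually_nhdsWithin_of_eventually_nhds hΩev]
          with t (ht : (0:ℝ) < t) htΩ
        have hne : x ≠ x + t • v := by
          intro h
          apply hv
          have : t • v = 0 := by
            have := congrArg (fun w => w - x) h
            simpa using this.symm
          exact (smul_eq_zero.1 this).elim (fun h => absurd h (ne_of_gt ht)) id
        have := hbound x hx (x + t • v) htΩ hne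
        have hnorm1 : ‖f x - f (x + t • v)‖ = ‖g t - g 0‖ := by
          rw [norm_sub_rev]; simp [hgdef]
        have hnorm2 : ‖x - (x + t • v)‖ = t * ‖v‖ := by
          rw [norm_sub_rev]
          simp [norm_smul, abs_of_pos ht]
        rw [hnorm1, hnorm2] at this
        rw [div_le_iff₀ ht]
        calc ‖g t - g 0‖ ≤ b * (Real.sqrt (φ' ‖x‖) * (t * ‖v‖) * Real.sqrt (φ' ‖x + t • v‖)) := this
          _ = b * (Real.sqrt (φ' ‖x‖) * ‖v‖ * Real.sqrt (φ' ‖x + t • v‖)) * t := by ring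
      have hle := le_of_tendsto_of_tendsto hslope hrhs hev
      have hx0 : 0 ≤ φ' ‖x‖ := le_of_lt (hpos x hx)
      calc ‖fderiv ℝ f x v‖ ≤ b * (Real.sqrt (φ' ‖x‖) * ‖v‖ * Real.sqrt (φ' ‖x‖)) := hle
        _ = b * φ' ‖x‖ * ‖v‖ := by
            rw [show Real.sqrt (φ' ‖x‖) * ‖v‖ * Real.sqrt (φ' ‖x‖)
              = Real.sqrt (φ' ‖x‖) * Real.sqrt (φ' ‖x‖) * ‖v‖ by ring,
              Real.mul_self_sqrt hx0]
            ring
    rw [ENNReal.div_le_iff (by simpa [ENNReal.ofReal_eq_zero, not_le] using hpos x hx)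
      ENNReal.ofReal_ne_top, hBb, ← ENNReal.ofReal_mul hb0]
    exact ENNReal.ofReal_le_ofReal (by rw [mul_comm (ENNReal.toReal B)] at hd ⊢; exact hd)
  · -- B ≤ A
    rcases eq_top_or_lt_top A with hAtop | hAlt
    · rw [hAtop]; exact le_top
    set a := A.toReal with hadef
    have ha0 : 0 ≤ a := ENNReal.toReal_nonneg
    have hAa : A = ENNReal.ofReal a := (ENNReal.ofReal_toReal hAlt.ne).symm
    have ha : ∀ z ∈ Ω, ‖fderiv ℝ f z‖ ≤ a * φ' ‖z‖ := by
      intro z hz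
      have hterm : ENNReal.ofReal ‖fderiv ℝ f z‖ / ENNReal.ofReal (φ' ‖z‖) ≤ A := by
        rw [hA]
        exact le_iSup₂_of_le z hz le_rfl
      rw [ENNReal.div_le_iff (by simpa [ENNReal.ofReal_eq_zero, not_le] using hpos z hz)
        ENNReal.ofReal_ne_top, hAa, ← ENNReal.ofReal_mul ha0] at hterm
      have := (ENNReal.ofReal_le_ofReal_iff
        (mul_nonneg ha0 (le_of_lt (hpos z hz)))).1 hterm
      linarith [this]
    refine iSup₂_le fun x hx => iSup₂_le fun y hy => iSup_le fun hxy => ?_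
    have hkey : ‖f x - f y‖ ≤ a * (Real.sqrt (φ' ‖x‖) * ‖x - y‖ * Real.sqrt (φ' ‖y‖)) := by
      rcases le_total ‖y‖ ‖x‖ with h | h
      · exact mvt_key hΩc hδ hM hφ hφ'pos hφ'mono hineq hf ha0 ha hx hy h
      · have := mvt_key hΩc hδ hM hφ hφ'pos hφ'mono hineq hf ha0 ha hy hx h
        rw [norm_sub_rev (f y), norm_sub_rev y] at this
        calc ‖f x - f y‖ ≤ a * (Real.sqrt (φ' ‖y‖) * ‖x - y‖ * Real.sqrt (φ' ‖x‖)) := this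
          _ = a * (Real.sqrt (φ' ‖x‖) * ‖x - y‖ * Real.sqrt (φ' ‖y‖)) := by ring
    rw [ENNReal.div_le_iff (hDne x hx y hy hxy) (hDnt x y), hDeq, hAa,
      ← ENNReal.ofReal_mul ha0]
    exact ENNReal.ofReal_le_ofReal hkey
end

section
/- Let X and Y be real Banach spaces and let f be Fréchet differentiable at every point of the open unit ball B_X = {x ∈ X : ‖x‖ < 1}, with values in Y. Let μ be a nonzero finite Borel measure on the interval [−1,1] ⊆ ℝ, define w(r) = ∫_{[−1,1]} (1 − t r)^{−2} dμ(t) for r ∈ [0,1), and assume w is monotone nondecreasing on [0,1). Then, as elements of [0,∞], ⨆_{x ∈ B_X} ‖d_f(x)‖/w(‖x‖) = ⨆_{x, y ∈ B_X, x ≠ y} ‖f(x) − f(y)‖ / ( √(w(‖x‖)) · ‖x − y‖ · √(w(‖y‖)) ). -/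
open Filter Topology MeasureTheory Set

private lemma jw_bounds {t r : ℝ} (ht : t ∈ Set.Icc (-1:ℝ) 1) (hr0 : -1 < r) (hr1 : r < 1) :
    1 - |r| ≤ 1 - t * r ∧ 1 - t * r ≤ 1 + |r| := by
  obtain ⟨ht1, ht2⟩ := ht
  have h1 : |t * r| ≤ |r| := by
    rw [abs_mul]
    have : |t| ≤ 1 := abs_le.2 ⟨ht1, ht2⟩
    nlinarith [abs_nonneg r]
  have := abs_le.1 h1
  constructor <;> linarith [this.1, this.2]

private lemma jw_pos_den {t r : ℝ} (ht : t ∈ Set.Icc (-1:ℝ) 1) (hr0 : -1 < r) (hr1 : r < 1) :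
    0 < 1 - t * r := by
  have := (jw_bounds ht hr0 hr1).1
  have : |r| < 1 := abs_lt.2 ⟨hr0, hr1⟩
  linarith [(jw_bounds ht hr0 hr1).1]

private lemma jw_measurable (r : ℝ) : Measurable (fun t : ℝ => ((1 - t * r) ^ 2)⁻¹) :=
  ((measurable_const.sub (measurable_id.mul_const r)).pow_const 2).inv

private lemma jw_integrableOn {μ : Measure ℝ} [IsFiniteMeasure μ] {r : ℝ}
    (hr0 : -1 < r) (hr1 : r < 1) :
    IntegrableOn (fun t : ℝ => ((1 - t * r) ^ 2)⁻¹) (Set.Icc (-1:ℝ) 1) μ := by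
  refine Integrable.mono' (integrable_const ((1 - |r|) ^ 2)⁻¹)
    (jw_measurable r).aestronglyMeasurable ?_
  filter_upwards [ae_restrict_mem measurableSet_Icc] with t ht
  have h1 := (jw_bounds ht hr0 hr1).1
  have hab : |r| < 1 := abs_lt.2 ⟨hr0, hr1⟩
  have h0 : (0:ℝ) < 1 - |r| := by linarith
  have hpos : 0 < 1 - t * r := jw_pos_den ht hr0 hr1
  rw [Real.norm_eq_abs, abs_of_nonneg (by positivity)]
  apply inv_anti₀ (by positivity)
  nlinarith

private lemma jw_W_pos {μ : Measure ℝ} [IsFiniteMeasure μ]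
    (hμ : μ (Set.Icc (-1 : ℝ) 1) ≠ 0) {r : ℝ} (hr0 : 0 ≤ r) (hr1 : r < 1) :
    0 < ∫ t in Set.Icc (-1:ℝ) 1, ((1 - t * r) ^ 2)⁻¹ ∂μ := by
  have h4 : ∀ t ∈ Set.Icc (-1:ℝ) 1, (4:ℝ)⁻¹ ≤ ((1 - t * r) ^ 2)⁻¹ := by
    intro t ht
    have hb := jw_bounds ht (by linarith) hr1
    have : |r| = r := abs_of_nonneg hr0
    rw [this] at hb
    have hpos : 0 < 1 - t * r := jw_pos_den ht (by linarith) hr1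
    have h2 : (1 - t * r) ^ 2 ≤ 4 := by nlinarith [hb.2]
    exact inv_anti₀ (by positivity) h2
  have hInt := jw_integrableOn (μ := μ) (r := r) (by linarith) hr1
  have hconst : IntegrableOn (fun _ : ℝ => (4:ℝ)⁻¹) (Set.Icc (-1:ℝ) 1) μ := integrable_const _
  have hle := setIntegral_mono_on hconst hInt measurableSet_Icc h4
  have : ∫ _ in Set.Icc (-1:ℝ) 1, (4:ℝ)⁻¹ ∂μ = (μ (Set.Icc (-1:ℝ) 1)).toReal * 4⁻¹ := by
    simp [setIntegral_const, smul_eq_mul]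
    rfl
  rw [this] at hle
  have hμt : 0 < (μ (Set.Icc (-1:ℝ) 1)).toReal :=
    ENNReal.toReal_pos hμ (measure_ne_top μ _)
  nlinarith

private lemma jw_continuousAt {μ : Measure ℝ} [IsFiniteMeasure μ] {r₀ : ℝ}
    (hr0 : -1 < r₀) (hr1 : r₀ < 1) :
    ContinuousAt (fun r : ℝ => ∫ t in Set.Icc (-1:ℝ) 1, ((1 - t * r) ^ 2)⁻¹ ∂μ) r₀ := by
  set r₁ : ℝ := (|r₀| + 1) / 2 with hr₁def
  have habs : |r₀| < 1 := abs_lt.2 ⟨hr0, hr1⟩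
  have hr₁0 : 0 ≤ r₁ := by positivity
  have hr₁1 : r₁ < 1 := by rw [hr₁def]; linarith
  have hmem : Set.Ioo (-r₁) r₁ ∈ 𝓝 r₀ := by
    refine Ioo_mem_nhds ?_ ?_ <;> rw [hr₁def] <;> cases abs_cases r₀ <;> linarith
  refine continuousAt_of_dominated (bound := fun _ => ((1 - r₁)^2)⁻¹) ?_ ?_ ?_ ?_
  · exact Eventually.of_forall fun r => (jw_measurable r).aestronglyMeasurable
  · filter_upwards [hmem] with r hr
    filter_upwards [ae_restrict_mem measurableSet_Icc] with t ht
    have hrabs : |r| < r₁ := abs_lt.2 ⟨hr.1, hr.2⟩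
    have hb := (jw_bounds ht (by cases abs_cases r <;> linarith) (by cases abs_cases r <;> linarith)).1
    have hpos : 0 < 1 - t * r := by linarith
    rw [Real.norm_eq_abs, abs_of_nonneg (by positivity)]
    exact inv_anti₀ (by nlinarith) (by nlinarith)
  · exact integrable_const _
  · filter_upwards [ae_restrict_mem measurableSet_Icc] with t ht
    have hpos : 0 < 1 - t * r₀ := jw_pos_den ht hr0 hr1
    have h1 : ContinuousAt (fun r : ℝ => (1 - t * r) ^ 2) r₀ := by fun_prop
    exact h1.inv₀ (by positivity)

private lemma jw_cauchySchwarz {μ : Measure ℝ} [IsFiniteMeasure μ] {a b : ℝ}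
    (ha0 : 0 ≤ a) (ha1 : a < 1) (hb0 : 0 ≤ b) (hb1 : b < 1) :
    ∫ t in Set.Icc (-1:ℝ) 1, ((1 - t * a) * (1 - t * b))⁻¹ ∂μ ≤
      Real.sqrt (∫ t in Set.Icc (-1:ℝ) 1, ((1 - t * a) ^ 2)⁻¹ ∂μ) *
        Real.sqrt (∫ t in Set.Icc (-1:ℝ) 1, ((1 - t * b) ^ 2)⁻¹ ∂μ) := by
  have hpq : Real.HolderConjugate 2 2 := by
    constructor <;> norm_num
  set ν := μ.restrict (Set.Icc (-1:ℝ) 1) with hν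
  haveI : IsFiniteMeasure ν := by
    constructor
    rw [hν, Measure.restrict_apply_univ]
    exact (measure_lt_top μ _)
  have hmemA : ∀ (c : ℝ), 0 ≤ c → c < 1 →
      MemLp (fun t : ℝ => (1 - t * c)⁻¹) (ENNReal.ofReal 2) ν := by
    intro c hc0 hc1
    refine MemLp.of_bound ((measurable_const.sub (measurable_id.mul_const c)).inv).aestronglyMeasurable
      ((1 - c)⁻¹) ?_
    filter_upwards [ae_restrict_mem measurableSet_Icc] with t ht
    have hb' := (jw_bounds ht (by linarith) hc1).1
    rw [abs_of_nonneg hc0] at hb'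
    have hpos : 0 < 1 - t * c := jw_pos_den ht (by linarith) hc1
    rw [Real.norm_eq_abs, abs_of_nonneg (by positivity)]
    exact inv_anti₀ (by linarith) hb'
  have hA : ∀ᵐ t ∂ν, (0:ℝ) ≤ (1 - t * a)⁻¹ := by
    filter_upwards [ae_restrict_mem measurableSet_Icc] with t ht
    exact le_of_lt (inv_pos.2 (jw_pos_den ht (by linarith) ha1))
  have hB : ∀ᵐ t ∂ν, (0:ℝ) ≤ (1 - t * b)⁻¹ := by
    filter_upwards [ae_restrict_mem measurableSet_Icc] with t ht
    exact le_of_lt (inv_pos.2 (jw_pos_den ht (by linarith) hb1))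
  have key := MeasureTheory.integral_mul_le_Lp_mul_Lq_of_nonneg hpq hA hB
    (hmemA a ha0 ha1) (hmemA b hb0 hb1)
  have e1 : ∫ t, (1 - t * a)⁻¹ * (1 - t * b)⁻¹ ∂ν
      = ∫ t in Set.Icc (-1:ℝ) 1, ((1 - t * a) * (1 - t * b))⁻¹ ∂μ := by
    rw [hν]
    congr 1
    ext t
    rw [mul_inv]
  have e2 : ∀ (c : ℝ), (∫ t, ((1 - t * c)⁻¹) ^ (2:ℝ) ∂ν) ^ ((1:ℝ)/2)
      = Real.sqrt (∫ t in Set.Icc (-1:ℝ) 1, ((1 - t * c) ^ 2)⁻¹ ∂μ) := by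
    intro c
    rw [Real.sqrt_eq_rpow]
    congr 1
    rw [hν]
    congr 1
    ext t
    have h2 : ((1 - t * c)⁻¹) ^ (2:ℝ) = ((1 - t * c)⁻¹) ^ (2:ℕ) := by
      rw [← Real.rpow_natCast]; norm_num
    rw [h2, inv_pow]
  rw [e1, e2 a, e2 b] at key
  exact key

private lemma jw_prim {u c : ℝ} (hu : 0 < u) (huc : 0 < u + c) :
    ∫ s in (0:ℝ)..1, ((u + s * c) ^ 2)⁻¹ = (u * (u + c))⁻¹ := by
  have hpos : ∀ s ∈ Set.uIcc (0:ℝ) 1, 0 < u + s * c := by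
    rw [Set.uIcc_of_le (by norm_num : (0:ℝ) ≤ 1)]
    intro s hs
    rcases lt_or_ge s 1 with h | h
    · nlinarith [mul_pos (by linarith : (0:ℝ) < 1 - s) hu, mul_nonneg hs.1 huc.le]
    · have hs1 : s = 1 := le_antisymm hs.2 h
      rw [hs1]; linarith
  by_cases hc : c = 0
  · subst hc
    simp only [mul_zero, add_zero]
    rw [intervalIntegral.integral_const]
    simp [sq]
  · have hderiv : ∀ s ∈ Set.uIcc (0:ℝ) 1,
        HasDerivAt (fun s : ℝ => -c⁻¹ * (u + s * c)⁻¹) (((u + s * c) ^ 2)⁻¹) s := by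
      intro s hs
      have h1 : HasDerivAt (fun s : ℝ => u + s * c) c s := by
        simpa using (hasDerivAt_id s).mul_const c |>.const_add u
      have h2 := (h1.inv (ne_of_gt (hpos s hs))).const_mul (-c⁻¹)
      refine h2.congr_deriv ?_
      have := ne_of_gt (hpos s hs)
      field_simp
    have hint : IntervalIntegrable (fun s : ℝ => ((u + s * c) ^ 2)⁻¹) volume 0 1 := by
      apply ContinuousOn.intervalIntegrable
      apply ContinuousOn.inv₀
      · fun_prop
      · intro s hs
        exact pow_ne_zero 2 (ne_of_gt (hpos s hs))
    rw [intervalIntegral.integral_eq_sub_of_hasDerivAt hderiv hint]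
    have h0 : u + 0 * c = u := by ring
    have h1 : u + 1 * c = u + c := by ring
    rw [h0, h1]
    have := ne_of_gt hu
    have := ne_of_gt huc
    field_simp
    ring

private lemma jw_fubini {μ : Measure ℝ} [IsFiniteMeasure μ] {a b : ℝ}
    (ha0 : 0 ≤ a) (ha1 : a < 1) (hb0 : 0 ≤ b) (hb1 : b < 1) :
    ∫ s in (0:ℝ)..1, (∫ t in Set.Icc (-1:ℝ) 1, ((1 - t * (b + s * (a - b))) ^ 2)⁻¹ ∂μ)
      = ∫ t in Set.Icc (-1:ℝ) 1, ((1 - t * a) * (1 - t * b))⁻¹ ∂μ := by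
  set m : ℝ := max a b with hm
  have hm0 : 0 ≤ m := le_max_iff.2 (Or.inl ha0)
  have hm1 : m < 1 := max_lt ha1 hb1
  have hrange : ∀ s ∈ Set.Ioc (0:ℝ) 1, 0 ≤ b + s * (a - b) ∧ b + s * (a - b) ≤ m := by
    intro s hs
    constructor
    · nlinarith [hs.1, hs.2, le_max_left a b, le_max_right a b]
    · rcases le_total a b with h | h
      · have : b + s * (a - b) ≤ b := by nlinarith [hs.1]
        exact this.trans (le_max_right a b)
      · have : b + s * (a - b) ≤ a := by nlinarith [hs.2]
        exact this.trans (le_max_left a b)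
  rw [intervalIntegral.integral_of_le (by norm_num : (0:ℝ) ≤ 1)]
  haveI : IsFiniteMeasure (volume.restrict (Set.Ioc (0:ℝ) 1)) := by
    constructor
    rw [Measure.restrict_apply_univ]
    simp [Real.volume_Ioc]
  have hswap := MeasureTheory.integral_integral_swap
    (f := fun (s t : ℝ) => ((1 - t * (b + s * (a - b))) ^ 2)⁻¹)
    (μ := volume.restrict (Set.Ioc (0:ℝ) 1)) (ν := μ.restrict (Set.Icc (-1:ℝ) 1)) ?_
  · rw [hswap]
    refine setIntegral_congr_fun measurableSet_Icc (fun t ht => ?_)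
    have hu : 0 < 1 - t * b := jw_pos_den ht (by linarith) hb1
    have huc : 0 < 1 - t * a := jw_pos_den ht (by linarith) ha1
    have key := jw_prim (u := 1 - t * b) (c := -(t * (a - b))) hu (by
      have : 1 - t * b + -(t * (a - b)) = 1 - t * a := by ring
      rw [this]; exact huc)
    have e : ∀ s : ℝ, ((1 - t * b + s * -(t * (a - b))) ^ 2)⁻¹
        = ((1 - t * (b + s * (a - b))) ^ 2)⁻¹ := by
      intro s; ring_nf
    rw [← intervalIntegral.integral_of_le (by norm_num : (0:ℝ) ≤ 1)]
    calc ∫ s in (0:ℝ)..1, ((1 - t * (b + s * (a - b))) ^ 2)⁻¹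
        = ∫ s in (0:ℝ)..1, ((1 - t * b + s * -(t * (a - b))) ^ 2)⁻¹ := by
          refine intervalIntegral.integral_congr (fun s _ => ?_)
          rw [e]
      _ = ((1 - t * b) * (1 - t * b + -(t * (a - b))))⁻¹ := key
      _ = ((1 - t * a) * (1 - t * b))⁻¹ := by ring_nf
  · rw [Measure.prod_restrict]
    haveI : IsFiniteMeasure ((volume.prod μ).restrict (Set.Ioc (0:ℝ) 1 ×ˢ Set.Icc (-1:ℝ) 1)) := by
      constructor
      rw [Measure.restrict_apply_univ, Measure.prod_prod]
      exact ENNReal.mul_lt_top (by simp [Real.volume_Ioc]) (measure_lt_top μ _)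
    refine Integrable.mono' (integrable_const (((1 - m) ^ 2)⁻¹)) ?_ ?_
    · refine Measurable.aestronglyMeasurable ?_
      fun_prop
    · filter_upwards [ae_restrict_mem (measurableSet_Ioc.prod measurableSet_Icc)] with p hp
      obtain ⟨hs, ht⟩ := hp
      obtain ⟨hr0, hr1⟩ := hrange p.1 hs
      have hb' := (jw_bounds (r := b + p.1 * (a - b)) ht (by linarith) (by linarith)).1
      rw [abs_of_nonneg hr0] at hb'
      have hpos : 0 < 1 - p.2 * (b + p.1 * (a - b)) := by linarith
      have h1 : 1 - m ≤ 1 - p.2 * (b + p.1 * (a - b)) := by linarith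
      rw [Real.norm_eq_abs, abs_of_nonneg (le_of_lt (inv_pos.2 (by positivity)))]
      exact inv_anti₀ (pow_pos (by linarith) 2) (pow_le_pow_left₀ (by linarith) h1 2)

private lemma jw_mvt {X Y : Type*} [NormedAddCommGroup X] [NormedSpace ℝ X]
    [NormedAddCommGroup Y] [NormedSpace ℝ Y] [CompleteSpace Y]
    (f : X → Y) (hf : ∀ z ∈ Metric.ball (0 : X) 1, DifferentiableAt ℝ f z)
    {μ : Measure ℝ} [IsFiniteMeasure μ]
    (w : ℝ → ℝ)
    (hw : ∀ r ∈ Set.Ico (0 : ℝ) 1,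
      w r = ∫ t in Set.Icc (-1 : ℝ) 1, ((1 - t * r) ^ 2)⁻¹ ∂μ)
    (hwmono : MonotoneOn w (Set.Ico (0 : ℝ) 1))
    {c : ℝ} (hc : 0 ≤ c)
    (hder : ∀ z ∈ Metric.ball (0 : X) 1, ‖fderiv ℝ f z‖ ≤ c * w ‖z‖)
    {x y : X} (hx : x ∈ Metric.ball (0 : X) 1) (hy : y ∈ Metric.ball (0 : X) 1) :
    ‖f x - f y‖ ≤ c * (Real.sqrt (w ‖x‖) * ‖x - y‖ * Real.sqrt (w ‖y‖)) := by
  set W : ℝ → ℝ := fun r => ∫ t in Set.Icc (-1:ℝ) 1, ((1 - t * r) ^ 2)⁻¹ ∂μ with hW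
  set a : ℝ := ‖x‖ with haa
  set b : ℝ := ‖y‖ with hbb
  have ha1 : a < 1 := mem_ball_zero_iff.1 hx
  have hb1 : b < 1 := mem_ball_zero_iff.1 hy
  have ha0 : 0 ≤ a := norm_nonneg x
  have hb0 : 0 ≤ b := norm_nonneg y
  set m : ℝ := max a b with hm
  have hm0 : 0 ≤ m := le_max_iff.2 (Or.inl ha0)
  have hm1 : m < 1 := max_lt ha1 hb1
  -- segment range
  have hseg : ∀ s : ℝ, 0 ≤ s → s ≤ 1 → 0 ≤ b + s * (a - b) ∧ b + s * (a - b) ≤ m := by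
    intro s hs0 hs1
    constructor
    · nlinarith
    · rcases le_total a b with h | h
      · have : b + s * (a - b) ≤ b := by nlinarith
        exact this.trans (le_max_right a b)
      · have : b + s * (a - b) ≤ a := by nlinarith
        exact this.trans (le_max_left a b)
  -- the clamped weight along the segment
  set φ : ℝ → ℝ := fun s => W (b + (min 1 (max 0 s)) * (a - b)) with hφdef
  have hclamp01 : ∀ s : ℝ, 0 ≤ min 1 (max 0 s) ∧ min 1 (max 0 s) ≤ 1 := by
    intro s
    exact ⟨le_min (by norm_num) (le_max_left 0 s), min_le_left _ _⟩
  have hφcont : Continuous φ := by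
    rw [continuous_iff_continuousAt]
    intro s
    have h1 : ContinuousAt (fun s : ℝ => b + (min 1 (max 0 s)) * (a - b)) s := by fun_prop
    have h2 := hseg (min 1 (max 0 s)) (hclamp01 s).1 (hclamp01 s).2
    exact (jw_continuousAt (μ := μ) (by linarith [h2.1]) (by linarith [h2.2])).comp h1
  have hφeq : ∀ s : ℝ, 0 ≤ s → s ≤ 1 → φ s = W (b + s * (a - b)) := by
    intro s hs0 hs1
    have : min 1 (max 0 s) = s := by
      rw [max_eq_right hs0, min_eq_right hs1]
    simp only [hφdef, this]
  -- the comparison function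
  set J : ℝ → ℝ := fun s => ∫ σ in (0:ℝ)..s, φ σ with hJ
  have hJderiv : ∀ s : ℝ, HasDerivAt J (φ s) s := by
    intro s
    exact intervalIntegral.integral_hasDerivAt_right
      (hφcont.intervalIntegrable _ _)
      (hφcont.stronglyMeasurableAtFilter _ _)
      hφcont.continuousAt
  set B : ℝ → ℝ := fun s => (c * ‖x - y‖) * J s with hB
  have hBderiv : ∀ s : ℝ, HasDerivAt B ((c * ‖x - y‖) * φ s) s := by
    intro s
    exact (hJderiv s).const_mul _
  -- the path
  set z : ℝ → X := fun s => y + s • (x - y) with hz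
  have hznorm : ∀ s : ℝ, 0 ≤ s → s ≤ 1 → ‖z s‖ ≤ b + s * (a - b) := by
    intro s hs0 hs1
    have : z s = (1 - s) • y + s • x := by
      simp only [hz, smul_sub, sub_smul, one_smul]
      abel
    rw [this]
    calc ‖(1 - s) • y + s • x‖ ≤ ‖(1 - s) • y‖ + ‖s • x‖ := norm_add_le _ _
      _ = (1 - s) * b + s * a := by
          rw [norm_smul, norm_smul, Real.norm_of_nonneg (by linarith), Real.norm_of_nonneg hs0]
      _ = b + s * (a - b) := by ring
  have hzball : ∀ s : ℝ, 0 ≤ s → s ≤ 1 → z s ∈ Metric.ball (0 : X) 1 := by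
    intro s hs0 hs1
    rw [mem_ball_zero_iff]
    have h1 := hznorm s hs0 hs1
    have h2 := (hseg s hs0 hs1).2
    linarith
  set g : ℝ → Y := fun s => f (z s) with hg
  have hgderiv : ∀ s : ℝ, 0 ≤ s → s ≤ 1 →
      HasDerivAt g ((fderiv ℝ f (z s)) (x - y)) s := by
    intro s hs0 hs1
    have hline : HasDerivAt (fun s : ℝ => y + s • (x - y)) (x - y) s := by
      have := (hasDerivAt_id s).smul_const (x - y)
      simpa using this.const_add y
    exact ((hf (z s) (hzball s hs0 hs1)).hasFDerivAt).comp_hasDerivAt s hline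
  -- bound on the derivative
  have hbound : ∀ s ∈ Set.Ico (0:ℝ) 1, ‖(fderiv ℝ f (z s)) (x - y)‖ ≤ (c * ‖x - y‖) * φ s := by
    intro s hs
    have hs0 := hs.1
    have hs1 := le_of_lt hs.2
    have h1 : ‖(fderiv ℝ f (z s)) (x - y)‖ ≤ ‖fderiv ℝ f (z s)‖ * ‖x - y‖ :=
      ContinuousLinearMap.le_opNorm _ _
    have h2 : ‖fderiv ℝ f (z s)‖ ≤ c * w ‖z s‖ := hder _ (hzball s hs0 hs1)
    have hsegm := hseg s hs0 hs1
    have hmem1 : ‖z s‖ ∈ Set.Ico (0:ℝ) 1 := by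
      constructor
      · exact norm_nonneg _
      · exact mem_ball_zero_iff.1 (hzball s hs0 hs1)
    have hmem2 : b + s * (a - b) ∈ Set.Ico (0:ℝ) 1 :=
      ⟨hsegm.1, lt_of_le_of_lt hsegm.2 hm1⟩
    have h3 : w ‖z s‖ ≤ w (b + s * (a - b)) :=
      hwmono hmem1 hmem2 (hznorm s hs0 hs1)
    have h4 : w (b + s * (a - b)) = φ s := by
      rw [hφeq s hs0 hs1, hw _ hmem2]
    calc ‖(fderiv ℝ f (z s)) (x - y)‖ ≤ ‖fderiv ℝ f (z s)‖ * ‖x - y‖ := h1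
      _ ≤ (c * w ‖z s‖) * ‖x - y‖ := by
          apply mul_le_mul_of_nonneg_right h2 (norm_nonneg _)
      _ ≤ (c * φ s) * ‖x - y‖ := by
          have := mul_le_mul_of_nonneg_left h3 hc
          rw [h4] at this
          nlinarith [norm_nonneg (x - y)]
      _ = (c * ‖x - y‖) * φ s := by ring
  -- mean value inequality
  have hmv : ‖g 1 - g 0‖ ≤ B 1 := by
    have := image_norm_le_of_norm_deriv_right_le_deriv_boundary
      (f := fun s => g s - g 0) (f' := fun s => (fderiv ℝ f (z s)) (x - y))
      (a := 0) (b := 1) (B := B) (B' := fun s => (c * ‖x - y‖) * φ s)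
      ?_ ?_ ?_ hBderiv hbound (Set.right_mem_Icc.2 (by norm_num))
    · simpa using this
    · intro s hs
      exact (((hgderiv s hs.1 hs.2).sub_const (g 0)).continuousAt).continuousWithinAt
    · intro s hs
      exact ((hgderiv s hs.1 (le_of_lt hs.2)).sub_const (g 0)).hasDerivWithinAt
    · have : B 0 = 0 := by simp [hB, hJ]
      simp [this]
  -- identify endpoints
  have hg1 : g 1 = f x := by simp [hg, hz]
  have hg0 : g 0 = f y := by simp [hg, hz]
  -- compute B 1 and bound it
  have hB1 : B 1 = (c * ‖x - y‖) * ∫ s in (0:ℝ)..1, W (b + s * (a - b)) := by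
    simp only [hB, hJ]
    congr 1
    refine intervalIntegral.integral_congr (fun s hs => ?_)
    rw [Set.uIcc_of_le (by norm_num : (0:ℝ) ≤ 1)] at hs
    exact hφeq s hs.1 hs.2
  have hfub : ∫ s in (0:ℝ)..1, W (b + s * (a - b))
      = ∫ t in Set.Icc (-1:ℝ) 1, ((1 - t * a) * (1 - t * b))⁻¹ ∂μ :=
    jw_fubini ha0 ha1 hb0 hb1
  have hcs := jw_cauchySchwarz (μ := μ) ha0 ha1 hb0 hb1
  have hfinal : ∫ s in (0:ℝ)..1, W (b + s * (a - b))
      ≤ Real.sqrt (w a) * Real.sqrt (w b) := by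
    rw [hfub, hw a ⟨ha0, ha1⟩, hw b ⟨hb0, hb1⟩]
    exact hcs
  calc ‖f x - f y‖ = ‖g 1 - g 0‖ := by rw [hg1, hg0]
    _ ≤ B 1 := hmv
    _ = (c * ‖x - y‖) * ∫ s in (0:ℝ)..1, W (b + s * (a - b)) := hB1
    _ ≤ (c * ‖x - y‖) * (Real.sqrt (w a) * Real.sqrt (w b)) := by
        apply mul_le_mul_of_nonneg_left hfinal (by positivity)
    _ = c * (Real.sqrt (w a) * ‖x - y‖ * Real.sqrt (w b)) := by ring

private lemma jw_deriv_bound {X Y : Type*} [NormedAddCommGroup X] [NormedSpace ℝ X]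
    [NormedAddCommGroup Y] [NormedSpace ℝ Y]
    (f : X → Y) (hf : ∀ z ∈ Metric.ball (0 : X) 1, DifferentiableAt ℝ f z)
    {μ : Measure ℝ} [IsFiniteMeasure μ] (hμ : μ (Set.Icc (-1 : ℝ) 1) ≠ 0)
    (w : ℝ → ℝ)
    (hw : ∀ r ∈ Set.Ico (0 : ℝ) 1,
      w r = ∫ t in Set.Icc (-1 : ℝ) 1, ((1 - t * r) ^ 2)⁻¹ ∂μ)
    {c : ℝ} (hc : 0 ≤ c)
    (hT : ∀ x' ∈ Metric.ball (0 : X) 1, ∀ y' ∈ Metric.ball (0 : X) 1, x' ≠ y' →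
      ‖f x' - f y'‖ ≤ c * (Real.sqrt (w ‖x'‖) * ‖x' - y'‖ * Real.sqrt (w ‖y'‖)))
    {x : X} (hx : x ∈ Metric.ball (0 : X) 1) :
    ‖fderiv ℝ f x‖ ≤ c * w ‖x‖ := by
  set W : ℝ → ℝ := fun r => ∫ t in Set.Icc (-1:ℝ) 1, ((1 - t * r) ^ 2)⁻¹ ∂μ with hW
  have hx1 : ‖x‖ < 1 := mem_ball_zero_iff.1 hx
  have hx0 : 0 ≤ ‖x‖ := norm_nonneg x
  have hwx : w ‖x‖ = W ‖x‖ := hw _ ⟨hx0, hx1⟩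
  have hwxpos : 0 < w ‖x‖ := by rw [hwx]; exact jw_W_pos hμ hx0 hx1
  refine ContinuousLinearMap.opNorm_le_bound _ (mul_nonneg hc hwxpos.le) (fun v => ?_)
  by_cases hv : v = 0
  · simp [hv]
  have hvn : 0 < ‖v‖ := norm_pos_iff.2 hv
  set δ : ℝ := (1 - ‖x‖) / ‖v‖ with hδdef
  have hδ : 0 < δ := div_pos (by linarith) hvn
  have hmem : ∀ h : ℝ, 0 < h → h < δ → ‖x + h • v‖ < 1 := by
    intro h h0 h1
    calc ‖x + h • v‖ ≤ ‖x‖ + ‖h • v‖ := norm_add_le _ _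
      _ = ‖x‖ + h * ‖v‖ := by rw [norm_smul, Real.norm_of_nonneg h0.le]
      _ < ‖x‖ + δ * ‖v‖ := by nlinarith
      _ = 1 := by rw [hδdef]; field_simp; ring
  -- the difference quotient tends to the directional derivative
  have hline : HasDerivAt (fun h : ℝ => f (x + h • v)) ((fderiv ℝ f x) v) 0 := by
    have hl : HasDerivAt (fun h : ℝ => x + h • v) v 0 := by
      have := (hasDerivAt_id (0:ℝ)).smul_const v
      simpa using this.const_add x
    have hfd : HasFDerivAt f (fderiv ℝ f x) (x + (0:ℝ) • v) := by
      simpa using (hf x hx).hasFDerivAt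
    exact hfd.comp_hasDerivAt 0 hl
  have hslope : Filter.Tendsto (fun h : ℝ => ‖h⁻¹ • (f (x + h • v) - f x)‖)
      (𝓝[>] (0:ℝ)) (𝓝 ‖(fderiv ℝ f x) v‖) := by
    have h1 := hasDerivAt_iff_tendsto_slope.1 hline
    have h2 : Filter.Tendsto (slope (fun h : ℝ => f (x + h • v)) 0) (𝓝[>] (0:ℝ))
        (𝓝 ((fderiv ℝ f x) v)) :=
      h1.mono_left (nhdsWithin_mono _ (fun h hh => ne_of_gt hh))
    have h3 := h2.norm
    refine h3.congr (fun h => ?_)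
    simp [slope_def_module]
  -- the bound function tends to c * w ‖x‖ * ‖v‖
  have hnormt : Filter.Tendsto (fun h : ℝ => ‖x + h • v‖) (𝓝[>] (0:ℝ)) (𝓝 ‖x‖) := by
    have : Continuous (fun h : ℝ => ‖x + h • v‖) := by fun_prop
    have := this.continuousAt (x := (0:ℝ)).tendsto
    simp only [zero_smul, add_zero] at this
    exact this.mono_left nhdsWithin_le_nhds
  have hWt : Filter.Tendsto (fun h : ℝ => W ‖x + h • v‖) (𝓝[>] (0:ℝ)) (𝓝 (W ‖x‖)) :=
    (jw_continuousAt (μ := μ) (by linarith) hx1).tendsto.comp hnormt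
  have hwWt : Filter.Tendsto (fun h : ℝ => w ‖x + h • v‖) (𝓝[>] (0:ℝ)) (𝓝 (W ‖x‖)) := by
    refine hWt.congr' ?_
    filter_upwards [Ioo_mem_nhdsGT_of_mem (Set.left_mem_Ico.2 hδ)] with h hh
    exact (hw _ ⟨norm_nonneg _, hmem h hh.1 hh.2⟩).symm
  have hψt : Filter.Tendsto
      (fun h : ℝ => c * (Real.sqrt (w ‖x + h • v‖) * ‖v‖ * Real.sqrt (w ‖x‖)))
      (𝓝[>] (0:ℝ)) (𝓝 (c * (w ‖x‖ * ‖v‖))) := by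
    have h1 : Filter.Tendsto (fun h : ℝ => Real.sqrt (w ‖x + h • v‖)) (𝓝[>] (0:ℝ))
        (𝓝 (Real.sqrt (W ‖x‖))) :=
      (Real.continuous_sqrt.continuousAt).tendsto.comp hwWt
    have h2 := ((h1.mul_const ‖v‖).mul_const (Real.sqrt (w ‖x‖))).const_mul c
    have h3 : c * (Real.sqrt (W ‖x‖) * ‖v‖ * Real.sqrt (w ‖x‖)) = c * (w ‖x‖ * ‖v‖) := by
      rw [← hwx]
      have hss : Real.sqrt (w ‖x‖) * Real.sqrt (w ‖x‖) = w ‖x‖ :=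
        Real.mul_self_sqrt hwxpos.le
      calc c * (Real.sqrt (w ‖x‖) * ‖v‖ * Real.sqrt (w ‖x‖))
          = c * ((Real.sqrt (w ‖x‖) * Real.sqrt (w ‖x‖)) * ‖v‖) := by ring
        _ = c * (w ‖x‖ * ‖v‖) := by rw [hss]
    rw [h3] at h2
    exact h2
  -- eventual bound
  have hev : ∀ᶠ h in 𝓝[>] (0:ℝ), ‖h⁻¹ • (f (x + h • v) - f x)‖
      ≤ c * (Real.sqrt (w ‖x + h • v‖) * ‖v‖ * Real.sqrt (w ‖x‖)) := by
    filter_upwards [Ioo_mem_nhdsGT_of_mem (Set.left_mem_Ico.2 hδ),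
      self_mem_nhdsWithin] with h hh hpos
    have h0 : (0:ℝ) < h := hpos
    have hxball : x + h • v ∈ Metric.ball (0 : X) 1 :=
      mem_ball_zero_iff.2 (hmem h hh.1 hh.2)
    have hne : x + h • v ≠ x := by
      intro hcon
      apply hv
      have : h • v = 0 := by
        have := congrArg (fun u => u - x) hcon
        simpa [add_sub_cancel_left] using this
      exact (smul_eq_zero.1 this).resolve_left (ne_of_gt h0)
    have hd := hT (x + h • v) hxball x hx hne
    have hsub : ‖x + h • v - x‖ = h * ‖v‖ := by
      rw [add_sub_cancel_left, norm_smul, Real.norm_of_nonneg h0.le]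
    rw [hsub] at hd
    rw [norm_smul, Real.norm_of_nonneg (inv_nonneg.2 h0.le)]
    calc h⁻¹ * ‖f (x + h • v) - f x‖
        ≤ h⁻¹ * (c * (Real.sqrt (w ‖x + h • v‖) * (h * ‖v‖) * Real.sqrt (w ‖x‖))) := by
          apply mul_le_mul_of_nonneg_left hd (inv_nonneg.2 h0.le)
      _ = c * (Real.sqrt (w ‖x + h • v‖) * ‖v‖ * Real.sqrt (w ‖x‖)) := by
          field_simp
  have hle : ‖(fderiv ℝ f x) v‖ ≤ c * (w ‖x‖ * ‖v‖) :=
    le_of_tendsto_of_tendsto hslope hψt hev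
  calc ‖(fderiv ℝ f x) v‖ ≤ c * (w ‖x‖ * ‖v‖) := hle
    _ = c * w ‖x‖ * ‖v‖ := by ring

private lemma jw_ofReal_comb {p q : ℝ} (r : ℝ) (hp : 0 ≤ p) (hq : 0 ≤ q) :
    ENNReal.ofReal p * ENNReal.ofReal q * ENNReal.ofReal r = ENNReal.ofReal (p * q * r) := by
  rw [ENNReal.ofReal_mul (mul_nonneg hp hq), ENNReal.ofReal_mul hp]

/-- Jocić's theorem: the Bloch type semi-norm with weight
`w(r) = ∫_{[-1,1]} (1 - t r)⁻² dμ(t)` (the derivative of an operator monotone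
function, via the Nevanlinna representation), assumed nondecreasing on `[0,1)`,
has a differential-free representation on the unit ball of a Banach space. -/
theorem blochSeminorm_eq_of_nevanlinnaWeight
    {X Y : Type*} [NormedAddCommGroup X] [NormedSpace ℝ X] [CompleteSpace X]
    [NormedAddCommGroup Y] [NormedSpace ℝ Y] [CompleteSpace Y]
    (f : X → Y) (hf : ∀ z ∈ Metric.ball (0 : X) 1, DifferentiableAt ℝ f z)
    (μ : Measure ℝ) [IsFiniteMeasure μ] (hμ : μ (Set.Icc (-1 : ℝ) 1) ≠ 0)
    (w : ℝ → ℝ)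
    (hw : ∀ r ∈ Set.Ico (0 : ℝ) 1,
      w r = ∫ t in Set.Icc (-1 : ℝ) 1, ((1 - t * r) ^ 2)⁻¹ ∂μ)
    (hwmono : MonotoneOn w (Set.Ico (0 : ℝ) 1)) :
    (⨆ x ∈ Metric.ball (0 : X) 1,
        ENNReal.ofReal ‖fderiv ℝ f x‖ / ENNReal.ofReal (w ‖x‖))
      = ⨆ x ∈ Metric.ball (0 : X) 1, ⨆ y ∈ Metric.ball (0 : X) 1, ⨆ _ : x ≠ y,
          ENNReal.ofReal ‖f x - f y‖ /
            (ENNReal.ofReal (Real.sqrt (w ‖x‖)) * ENNReal.ofReal ‖x - y‖ *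
              ENNReal.ofReal (Real.sqrt (w ‖y‖))) := by
  have hwpos : ∀ r ∈ Set.Ico (0:ℝ) 1, 0 < w r := fun r hr => by
    rw [hw r hr]; exact jw_W_pos hμ hr.1 hr.2
  apply le_antisymm
  · -- derivative sup ≤ difference-quotient sup
    refine iSup₂_le fun x hx => ?_
    set T := ⨆ x ∈ Metric.ball (0 : X) 1, ⨆ y ∈ Metric.ball (0 : X) 1, ⨆ _ : x ≠ y,
          ENNReal.ofReal ‖f x - f y‖ /
            (ENNReal.ofReal (Real.sqrt (w ‖x‖)) * ENNReal.ofReal ‖x - y‖ *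
              ENNReal.ofReal (Real.sqrt (w ‖y‖))) with hTdef
    by_cases hT : T = ⊤
    · rw [hT]; exact le_top
    set c := T.toReal with hcdef
    have hc : 0 ≤ c := ENNReal.toReal_nonneg
    have hcT : T = ENNReal.ofReal c := (ENNReal.ofReal_toReal hT).symm
    have hTb : ∀ x' ∈ Metric.ball (0 : X) 1, ∀ y' ∈ Metric.ball (0 : X) 1, x' ≠ y' →
        ‖f x' - f y'‖ ≤ c * (Real.sqrt (w ‖x'‖) * ‖x' - y'‖ * Real.sqrt (w ‖y'‖)) := by
      intro x' hx' y' hy' hne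
      have hQ : ENNReal.ofReal ‖f x' - f y'‖ /
            (ENNReal.ofReal (Real.sqrt (w ‖x'‖)) * ENNReal.ofReal ‖x' - y'‖ *
              ENNReal.ofReal (Real.sqrt (w ‖y'‖))) ≤ T := by
        rw [hTdef]
        exact le_iSup_of_le x' (le_iSup_of_le hx' (le_iSup_of_le y'
          (le_iSup_of_le hy' (le_iSup_of_le hne le_rfl))))
      have hwx' : 0 < w ‖x'‖ := hwpos _ ⟨norm_nonneg _, mem_ball_zero_iff.1 hx'⟩
      have hwy' : 0 < w ‖y'‖ := hwpos _ ⟨norm_nonneg _, mem_ball_zero_iff.1 hy'⟩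
      have hxy : 0 < ‖x' - y'‖ := by
        rw [norm_pos_iff, sub_ne_zero]; exact hne
      rw [jw_ofReal_comb _ (Real.sqrt_nonneg _) (norm_nonneg _)] at hQ
      have hD : 0 < Real.sqrt (w ‖x'‖) * ‖x' - y'‖ * Real.sqrt (w ‖y'‖) := by
        have := Real.sqrt_pos.2 hwx'
        have := Real.sqrt_pos.2 hwy'
        positivity
      have h2 := (ENNReal.div_le_iff (by
          simp only [ne_eq, ENNReal.ofReal_eq_zero, not_le]; exact hD)
        ENNReal.ofReal_ne_top).1 hQ
      rw [hcT, ← ENNReal.ofReal_mul hc] at h2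
      exact (ENNReal.ofReal_le_ofReal_iff (mul_nonneg hc hD.le)).1 h2
    have hder := jw_deriv_bound f hf hμ w hw hc hTb hx
    have hwx : 0 < w ‖x‖ := hwpos _ ⟨norm_nonneg _, mem_ball_zero_iff.1 hx⟩
    rw [ENNReal.div_le_iff (by
        simp only [ne_eq, ENNReal.ofReal_eq_zero, not_le]; exact hwx)
      ENNReal.ofReal_ne_top, hcT, ← ENNReal.ofReal_mul hc]
    exact ENNReal.ofReal_le_ofReal hder
  · -- difference-quotient sup ≤ derivative sup
    refine iSup₂_le fun x hx => iSup₂_le fun y hy => iSup_le fun hne => ?_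
    set S := ⨆ x ∈ Metric.ball (0 : X) 1,
        ENNReal.ofReal ‖fderiv ℝ f x‖ / ENNReal.ofReal (w ‖x‖) with hSdef
    by_cases hS : S = ⊤
    · rw [hS]; exact le_top
    set c := S.toReal with hcdef
    have hc : 0 ≤ c := ENNReal.toReal_nonneg
    have hcS : S = ENNReal.ofReal c := (ENNReal.ofReal_toReal hS).symm
    have hder : ∀ z ∈ Metric.ball (0 : X) 1, ‖fderiv ℝ f z‖ ≤ c * w ‖z‖ := by
      intro z hz
      have hQ : ENNReal.ofReal ‖fderiv ℝ f z‖ / ENNReal.ofReal (w ‖z‖) ≤ S := by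
        rw [hSdef]
        exact le_iSup_of_le z (le_iSup_of_le hz le_rfl)
      have hwz : 0 < w ‖z‖ := hwpos _ ⟨norm_nonneg _, mem_ball_zero_iff.1 hz⟩
      have h2 := (ENNReal.div_le_iff (by
          simp only [ne_eq, ENNReal.ofReal_eq_zero, not_le]; exact hwz)
        ENNReal.ofReal_ne_top).1 hQ
      rw [hcS, ← ENNReal.ofReal_mul hc] at h2
      exact (ENNReal.ofReal_le_ofReal_iff (mul_nonneg hc hwz.le)).1 h2
    have key := jw_mvt f hf w hw hwmono hc hder hx hy
    have hwx : 0 < w ‖x‖ := hwpos _ ⟨norm_nonneg _, mem_ball_zero_iff.1 hx⟩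
    have hwy : 0 < w ‖y‖ := hwpos _ ⟨norm_nonneg _, mem_ball_zero_iff.1 hy⟩
    have hxy : 0 < ‖x - y‖ := by rw [norm_pos_iff, sub_ne_zero]; exact hne
    have hD : 0 < Real.sqrt (w ‖x‖) * ‖x - y‖ * Real.sqrt (w ‖y‖) := by
      have := Real.sqrt_pos.2 hwx
      have := Real.sqrt_pos.2 hwy
      positivity
    rw [jw_ofReal_comb _ (Real.sqrt_nonneg _) (norm_nonneg _),
      ENNReal.div_le_iff (by
        simp only [ne_eq, ENNReal.ofReal_eq_zero, not_le]; exact hD)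
      ENNReal.ofReal_ne_top, hcS, ← ENNReal.ofReal_mul hc]
    exact ENNReal.ofReal_le_ofReal key
end

section
/- Let X and Y be real normed vector spaces and let f be Fréchet differentiable at every point of the open unit ball B_X = {x ∈ X : ‖x‖ < 1}, with values in Y. Then, as elements of [0,∞], ⨆_{x ∈ B_X} (1 − ‖x‖²) · ‖d_f(x)‖ = ⨆_{x, y ∈ B_X, x ≠ y} √(1 − ‖x‖²) · √(1 − ‖y‖²) · ‖f(x) − f(y)‖ / ‖x − y‖. -/
open Filter Topology

open Set

section PavlovicAux

variable {X Y : Type*} [NormedAddCommGroup X] [NormedSpace ℝ X]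
    [NormedAddCommGroup Y] [NormedSpace ℝ Y]

lemma gm_le_lm {A B : ℝ} (hA : 0 < A) (hAB : A < B) :
    Real.sqrt A * Real.sqrt B * (Real.log B - Real.log A) ≤ B - A := by
  have hB : 0 < B := hA.trans hAB
  have hA' : (0:ℝ) < Real.sqrt A := Real.sqrt_pos.2 hA
  have hB' : (0:ℝ) < Real.sqrt B := Real.sqrt_pos.2 hB
  have e1 : Real.sqrt A * Real.sqrt A = A := Real.mul_self_sqrt hA.le
  have e2 : Real.sqrt B * Real.sqrt B = B := Real.mul_self_sqrt hB.le
  have hr : (0:ℝ) < Real.sqrt B / Real.sqrt A := by positivity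
  have h2 : Real.log (Real.sqrt B / Real.sqrt A)
      ≤ Real.sinh (Real.log (Real.sqrt B / Real.sqrt A)) :=
    Real.self_le_sinh_iff.2 (Real.log_nonneg (by
      rw [le_div_iff₀ hA']
      have := Real.sqrt_le_sqrt hAB.le
      linarith))
  rw [Real.sinh_log hr] at h2
  have h3 : Real.log B - Real.log A
      = 2 * Real.log (Real.sqrt B / Real.sqrt A) := by
    rw [Real.log_div hB'.ne' hA'.ne', Real.log_sqrt hB.le, Real.log_sqrt hA.le]
    ring
  rw [h3]
  have h4 : Real.sqrt A * Real.sqrt B *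
      (2 * ((Real.sqrt B / Real.sqrt A - (Real.sqrt B / Real.sqrt A)⁻¹) / 2)) = B - A := by
    rw [inv_div]
    field_simp
    nlinarith [e1, e2]
  calc Real.sqrt A * Real.sqrt B * (2 * Real.log (Real.sqrt B / Real.sqrt A))
      ≤ Real.sqrt A * Real.sqrt B *
        (2 * ((Real.sqrt B / Real.sqrt A - (Real.sqrt B / Real.sqrt A)⁻¹) / 2)) := by
        have : (0:ℝ) < Real.sqrt A * Real.sqrt B := by positivity
        nlinarith
    _ = B - A := h4

lemma seg_bound {g g' : ℝ → Y} {K A B : ℝ} (hK : 0 ≤ K) (hA : 0 < A) (hB : 0 < B) (hAB : A ≤ B)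
    (hg : ∀ t ∈ Set.Icc (0:ℝ) 1, HasDerivAt g (g' t) t)
    (hbound : ∀ t ∈ Set.Icc (0:ℝ) 1, ‖g' t‖ * (A + t * (B - A)) ≤ K) :
    Real.sqrt A * Real.sqrt B * ‖g 1 - g 0‖ ≤ K := by
  have hl : ∀ t ∈ Set.Icc (0:ℝ) 1, 0 < A + t * (B - A) := by
    intro t ht
    nlinarith [ht.1, ht.2]
  rcases eq_or_lt_of_le hAB with rfl | hAB'
  · -- A = B case
    have hb' : ∀ t ∈ Set.Icc (0:ℝ) 1, ‖g' t‖ ≤ K / A := by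
      intro t ht
      rw [le_div_iff₀ hA]
      have := hbound t ht
      simpa using this
    have := norm_image_sub_le_of_norm_deriv_le_segment'
      (f := g) (f' := g') (a := 0) (b := 1)
      (fun t ht => (hg t ht).hasDerivWithinAt)
      (fun t ht => hb' t (Ico_subset_Icc_self ht)) 1 (by norm_num)
    have e : Real.sqrt A * Real.sqrt A = A := Real.mul_self_sqrt hA.le
    calc Real.sqrt A * Real.sqrt A * ‖g 1 - g 0‖ = A * ‖g 1 - g 0‖ := by rw [e]
      _ ≤ A * (K / A * (1 - 0)) := by
          apply mul_le_mul_of_nonneg_left _ hA.le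
          simpa using this
      _ = K := by field_simp; ring
  · -- A < B case
    set L : ℝ → ℝ := fun t => A + t * (B - A) with hL
    have hD : (0:ℝ) < B - A := by linarith
    have hLder : ∀ t : ℝ, HasDerivAt L (B - A) t := by
      intro t
      simpa [hL] using ((hasDerivAt_id t).mul_const (B - A)).const_add A
    set Bnd : ℝ → ℝ := fun t => K / (B - A) * (Real.log (L t) - Real.log A) with hBnd
    have hBnd' : ∀ t ∈ Set.Ico (0:ℝ) 1,
        HasDerivWithinAt Bnd (K / L t) (Set.Ici t) t := by
      intro t ht
      have hlt : 0 < L t := hl t (Ico_subset_Icc_self ht)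
      have h1 : HasDerivAt (fun s => Real.log (L s)) ((B - A) / L t) t := by
        have := (Real.hasDerivAt_log hlt.ne').comp t (hLder t)
        simpa [div_eq_inv_mul, Function.comp_def] using this
      have h2 : HasDerivAt Bnd (K / (B - A) * ((B - A) / L t)) t := by
        exact ((h1.sub_const (Real.log A)).const_mul (K / (B - A)))
      have h3 : K / (B - A) * ((B - A) / L t) = K / L t := by
        field_simp
      rw [h3] at h2
      exact h2.hasDerivWithinAt
    have hcont : ContinuousOn (fun t => g t - g 0) (Set.Icc 0 1) := by
      intro t ht
      exact (((hg t ht).continuousAt).continuousWithinAt).sub continuousWithinAt_const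
    have hBcont : ContinuousOn Bnd (Set.Icc 0 1) := by
      apply ContinuousOn.mul continuousOn_const
      apply ContinuousOn.sub _ continuousOn_const
      apply ContinuousOn.log
      · fun_prop
      · intro t ht
        exact (hl t ht).ne'
    have main := image_norm_le_of_norm_deriv_right_le_deriv_boundary'
      (f := fun t => g t - g 0) (f' := g') (a := 0) (b := 1)
      hcont
      (fun t ht => by
        simpa using ((hg t (Ico_subset_Icc_self ht)).sub_const (g 0)).hasDerivWithinAt.mono
          (Set.subset_univ _) |>.mono_of_mem_nhdsWithin (by
            exact self_mem_nhdsWithin))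
      (by simp [hBnd, hL])
      hBcont
      hBnd'
      (fun t ht => by
        have hlt : 0 < L t := hl t (Ico_subset_Icc_self ht)
        rw [le_div_iff₀ hlt]
        exact hbound t (Ico_subset_Icc_self ht))
    have h1 := main (right_mem_Icc.2 (by norm_num))
    have hL1 : L 1 = B := by simp [hL]
    rw [hBnd] at h1
    simp only [hL1] at h1
    -- h1 : ‖g 1 - g 0‖ ≤ K / (B - A) * (Real.log B - Real.log A)
    have hgm := gm_le_lm hA hAB'
    have hs : (0:ℝ) ≤ Real.sqrt A * Real.sqrt B := by positivity
    calc Real.sqrt A * Real.sqrt B * ‖g 1 - g 0‖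
        ≤ Real.sqrt A * Real.sqrt B * (K / (B - A) * (Real.log B - Real.log A)) :=
          mul_le_mul_of_nonneg_left h1 hs
      _ = K / (B - A) * (Real.sqrt A * Real.sqrt B * (Real.log B - Real.log A)) := by ring
      _ ≤ K / (B - A) * (B - A) := mul_le_mul_of_nonneg_left hgm (by positivity)
      _ = K := by field_simp

lemma pav_key' (f : X → Y) (L : ℝ) (hL0 : 0 ≤ L)
    (hf : ∀ z ∈ Metric.ball (0 : X) 1, DifferentiableAt ℝ f z)
    (hb : ∀ z ∈ Metric.ball (0 : X) 1, (1 - ‖z‖ ^ 2) * ‖fderiv ℝ f z‖ ≤ L)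
    {x y : X} (hx : x ∈ Metric.ball (0 : X) 1) (hy : y ∈ Metric.ball (0 : X) 1)
    (hyx : ‖y‖ ≤ ‖x‖) :
    Real.sqrt (1 - ‖x‖ ^ 2) * Real.sqrt (1 - ‖y‖ ^ 2) * ‖f x - f y‖ ≤ L * ‖x - y‖ := by
  rw [Metric.mem_ball, dist_zero_right] at hx hy
  set A := 1 - ‖x‖ ^ 2 with hAdef
  set B := 1 - ‖y‖ ^ 2 with hBdef
  have hA : 0 < A := by have := norm_nonneg x; nlinarith
  have hB : 0 < B := by have := norm_nonneg y; nlinarith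
  have hAB : A ≤ B := by nlinarith [norm_nonneg x, norm_nonneg y]
  set z : ℝ → X := fun t => x + t • (y - x) with hz
  have hzball : ∀ t ∈ Set.Icc (0:ℝ) 1, ‖z t‖ ≤ (1 - t) * ‖x‖ + t * ‖y‖ := by
    intro t ht
    have : z t = (1 - t) • x + t • y := by
      simp only [hz]; module
    rw [this]
    calc ‖(1 - t) • x + t • y‖ ≤ ‖(1 - t) • x‖ + ‖t • y‖ := norm_add_le _ _
      _ = (1 - t) * ‖x‖ + t * ‖y‖ := by
          rw [norm_smul, norm_smul, Real.norm_eq_abs, Real.norm_eq_abs,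
            abs_of_nonneg (by linarith [ht.2]), abs_of_nonneg ht.1]
  have hzin : ∀ t ∈ Set.Icc (0:ℝ) 1, z t ∈ Metric.ball (0 : X) 1 := by
    intro t ht
    rw [Metric.mem_ball, dist_zero_right]
    have h1 := hzball t ht
    have h2 : (1 - t) * ‖x‖ + t * ‖y‖ < 1 := by nlinarith [ht.1, ht.2]
    linarith
  set g' : ℝ → Y := fun t => fderiv ℝ f (z t) (y - x) with hg'
  have hg : ∀ t ∈ Set.Icc (0:ℝ) 1, HasDerivAt (fun t => f (z t)) (g' t) t := by
    intro t ht
    have hder : HasDerivAt z (y - x) t := by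
      simpa [hz] using ((hasDerivAt_id t).smul_const (y - x)).const_add x
    exact ((hf (z t) (hzin t ht)).hasFDerivAt).comp_hasDerivAt t hder
  have hbound : ∀ t ∈ Set.Icc (0:ℝ) 1, ‖g' t‖ * (A + t * (B - A)) ≤ L * ‖y - x‖ := by
    intro t ht
    have hzt := hzin t ht
    have h1 : ‖g' t‖ ≤ ‖fderiv ℝ f (z t)‖ * ‖y - x‖ :=
      (fderiv ℝ f (z t)).le_opNorm (y - x)
    have h2 : A + t * (B - A) ≤ 1 - ‖z t‖ ^ 2 := by
      have h3 := hzball t ht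
      have hu : 0 ≤ (1 - t) * ‖x‖ + t * ‖y‖ :=
        add_nonneg (mul_nonneg (by linarith [ht.2]) (norm_nonneg x))
          (mul_nonneg ht.1 (norm_nonneg y))
      have h4 : ‖z t‖ ^ 2 ≤ ((1 - t) * ‖x‖ + t * ‖y‖) ^ 2 := by
        apply sq_le_sq' _ h3
        linarith [norm_nonneg (z t)]
      have h5 : ((1 - t) * ‖x‖ + t * ‖y‖) ^ 2 ≤ (1 - t) * ‖x‖ ^ 2 + t * ‖y‖ ^ 2 := by
        nlinarith [mul_nonneg (mul_nonneg ht.1 (by linarith [ht.2] : (0:ℝ) ≤ 1 - t))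
          (sq_nonneg (‖x‖ - ‖y‖))]
      simp only [hAdef, hBdef]
      nlinarith
    have h6 := hb (z t) hzt
    have h7 : 0 < 1 - ‖z t‖ ^ 2 := by
      rw [Metric.mem_ball, dist_zero_right] at hzt
      nlinarith [norm_nonneg (z t)]
    have h8 : 0 ≤ A + t * (B - A) := by nlinarith [ht.1, ht.2]
    calc ‖g' t‖ * (A + t * (B - A)) ≤ ‖g' t‖ * (1 - ‖z t‖ ^ 2) :=
          mul_le_mul_of_nonneg_left h2 (norm_nonneg _)
      _ ≤ ‖fderiv ℝ f (z t)‖ * ‖y - x‖ * (1 - ‖z t‖ ^ 2) :=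
          mul_le_mul_of_nonneg_right h1 h7.le
      _ = ((1 - ‖z t‖ ^ 2) * ‖fderiv ℝ f (z t)‖) * ‖y - x‖ := by ring
      _ ≤ L * ‖y - x‖ := mul_le_mul_of_nonneg_right h6 (norm_nonneg _)
  have hK : 0 ≤ L * ‖y - x‖ := mul_nonneg hL0 (norm_nonneg _)
  have main := seg_bound hK hA hB hAB hg hbound
  have e0 : z 0 = x := by simp [hz]
  have e1 : z 1 = y := by simp [hz]
  rw [e0, e1] at main
  rw [norm_sub_rev (f y) (f x), norm_sub_rev y x] at main
  exact main

lemma easy_dir (f : X → Y) (hf : ∀ z ∈ Metric.ball (0 : X) 1, DifferentiableAt ℝ f z)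
    {x : X} (hx : x ∈ Metric.ball (0 : X) 1) (M : ℝ) (hM : 0 ≤ M)
    (hq : ∀ y ∈ Metric.ball (0 : X) 1, y ≠ x →
      Real.sqrt (1 - ‖x‖ ^ 2) * Real.sqrt (1 - ‖y‖ ^ 2) * ‖f x - f y‖ ≤ M * ‖x - y‖) :
    (1 - ‖x‖ ^ 2) * ‖fderiv ℝ f x‖ ≤ M := by
  have hx' : ‖x‖ < 1 := by rwa [Metric.mem_ball, dist_zero_right] at hx
  set A := 1 - ‖x‖ ^ 2 with hAdef
  have hA : 0 < A := by have := norm_nonneg x; nlinarith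
  set T := fderiv ℝ f x with hT
  suffices h : ∀ v : X, A * ‖T v‖ ≤ M * ‖v‖ by
    have hTle : ‖T‖ ≤ M / A := by
      apply ContinuousLinearMap.opNorm_le_bound T (div_nonneg hM hA.le)
      intro v
      rw [div_mul_eq_mul_div, le_div_iff₀ hA]
      have := h v
      linarith
    calc A * ‖T‖ ≤ A * (M / A) := mul_le_mul_of_nonneg_left hTle hA.le
      _ = M := by field_simp
  intro v
  by_cases hv : v = 0
  · simp [hv, hM]
  have hvn : 0 < ‖v‖ := norm_pos_iff.2 hv
  set φ : ℝ → X := fun t => x + t • v with hφ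
  set g : ℝ → Y := fun t => f (φ t) with hg
  -- derivative of g at 0
  have hder : HasDerivAt g (T v) 0 := by
    have h1 : HasDerivAt φ v 0 := by
      simpa [hφ] using ((hasDerivAt_id (0:ℝ)).smul_const v).const_add x
    have h2 : HasFDerivAt f T (φ 0) := by
      have : φ 0 = x := by simp [hφ]
      rw [this]
      exact (hf x hx).hasFDerivAt
    exact h2.comp_hasDerivAt 0 h1
  -- limit of the quotient
  have S2 : Tendsto (fun t => ‖g t - f x‖ / t) (𝓝[>] (0:ℝ)) (𝓝 ‖T v‖) := by
    have hslope := hasDerivAt_iff_tendsto_slope.1 hder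
    have hmono : 𝓝[>] (0:ℝ) ≤ 𝓝[≠] (0:ℝ) :=
      nhdsWithin_mono _ (fun t ht => ne_of_gt ht)
    have h3 : Tendsto (fun t => ‖slope g 0 t‖) (𝓝[>] (0:ℝ)) (𝓝 ‖T v‖) :=
      ((continuous_norm.tendsto _).comp (hslope.mono_left hmono))
    apply h3.congr'
    filter_upwards [self_mem_nhdsWithin] with t ht
    have ht' : (0:ℝ) < t := ht
    rw [slope_def_module, sub_zero, norm_smul, Real.norm_eq_abs,
      abs_of_pos (inv_pos.2 ht')]
    have : g 0 = f x := by simp [hg, hφ]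
    rw [this, inv_mul_eq_div]
  -- limit of the sqrt factor
  have S1 : Tendsto (fun t => Real.sqrt (1 - ‖φ t‖ ^ 2)) (𝓝[>] (0:ℝ))
      (𝓝 (Real.sqrt A)) := by
    have hc : Continuous (fun t : ℝ => Real.sqrt (1 - ‖φ t‖ ^ 2)) := by
      apply Real.continuous_sqrt.comp
      fun_prop
    have := hc.tendsto 0
    have h0 : Real.sqrt (1 - ‖φ 0‖ ^ 2) = Real.sqrt A := by simp [hφ, hAdef]
    rw [h0] at this
    exact this.mono_left nhdsWithin_le_nhds
  have S3 : Tendsto (fun t => Real.sqrt A * Real.sqrt (1 - ‖φ t‖ ^ 2) *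
      (‖g t - f x‖ / t)) (𝓝[>] (0:ℝ)) (𝓝 (A * ‖T v‖)) := by
    have := (tendsto_const_nhds (x := Real.sqrt A) (f := 𝓝[>] (0:ℝ))).mul S1 |>.mul S2
    have e : Real.sqrt A * Real.sqrt A * ‖T v‖ = A * ‖T v‖ := by
      rw [Real.mul_self_sqrt hA.le]
    rwa [e] at this
  -- eventual bound
  have hev : ∀ᶠ t in 𝓝[>] (0:ℝ), Real.sqrt A * Real.sqrt (1 - ‖φ t‖ ^ 2) *
      (‖g t - f x‖ / t) ≤ M * ‖v‖ := by
    have hε : (0:ℝ) < (1 - ‖x‖) / ‖v‖ := by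
      apply div_pos (by linarith) hvn
    filter_upwards [Ioo_mem_nhdsGT_of_mem (Set.left_mem_Ico.2 hε)] with t ht
    obtain ⟨ht0, htε⟩ := ht
    have hφball : φ t ∈ Metric.ball (0 : X) 1 := by
      rw [Metric.mem_ball, dist_zero_right]
      calc ‖x + t • v‖ ≤ ‖x‖ + ‖t • v‖ := norm_add_le _ _
        _ = ‖x‖ + t * ‖v‖ := by rw [norm_smul, Real.norm_eq_abs, abs_of_pos ht0]
        _ < ‖x‖ + ((1 - ‖x‖) / ‖v‖) * ‖v‖ := by
            have := mul_lt_mul_of_pos_right htε hvn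
            linarith
        _ = 1 := by field_simp; ring
    have hφne : φ t ≠ x := by
      simp only [hφ, ne_eq, add_eq_left]
      exact smul_ne_zero ht0.ne' hv
    have hdist : ‖x - φ t‖ = t * ‖v‖ := by
      have : x - φ t = -(t • v) := by simp [hφ]
      rw [this, norm_neg, norm_smul, Real.norm_eq_abs, abs_of_pos ht0]
    have hfs : ‖g t - f x‖ = ‖f x - f (φ t)‖ := by
      rw [norm_sub_rev]
    have := hq (φ t) hφball hφne
    rw [hdist] at this
    rw [hfs]
    rw [mul_div_assoc']
    rw [div_le_iff₀ ht0]
    calc Real.sqrt A * Real.sqrt (1 - ‖φ t‖ ^ 2) * ‖f x - f (φ t)‖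
        ≤ M * (t * ‖v‖) := this
      _ = M * ‖v‖ * t := by ring
  exact le_of_tendsto S3 hev

/-- symmetric version of pav_key' -/
lemma pav_key (f : X → Y) (L : ℝ) (hL0 : 0 ≤ L)
    (hf : ∀ z ∈ Metric.ball (0 : X) 1, DifferentiableAt ℝ f z)
    (hb : ∀ z ∈ Metric.ball (0 : X) 1, (1 - ‖z‖ ^ 2) * ‖fderiv ℝ f z‖ ≤ L)
    {x y : X} (hx : x ∈ Metric.ball (0 : X) 1) (hy : y ∈ Metric.ball (0 : X) 1) :
    Real.sqrt (1 - ‖x‖ ^ 2) * Real.sqrt (1 - ‖y‖ ^ 2) * ‖f x - f y‖ ≤ L * ‖x - y‖ := by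
  rcases le_total ‖y‖ ‖x‖ with h | h
  · exact pav_key' f L hL0 hf hb hx hy h
  · have := pav_key' f L hL0 hf hb hy hx h
    rw [norm_sub_rev (f y), norm_sub_rev y] at this
    linarith [this, mul_comm (Real.sqrt (1 - ‖y‖ ^ 2)) (Real.sqrt (1 - ‖x‖ ^ 2))]


end PavlovicAux

/-- Pavlović's equality for the Bloch semi-norm, for Fréchet differentiable mappings
between normed spaces. -/
theorem blochSeminorm_eq_pavlovic
    {X Y : Type*} [NormedAddCommGroup X] [NormedSpace ℝ X]
    [NormedAddCommGroup Y] [NormedSpace ℝ Y]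
    (f : X → Y) (hf : ∀ z ∈ Metric.ball (0 : X) 1, DifferentiableAt ℝ f z) :
    (⨆ x ∈ Metric.ball (0 : X) 1,
        ENNReal.ofReal ((1 - ‖x‖ ^ 2) * ‖fderiv ℝ f x‖))
      = ⨆ x ∈ Metric.ball (0 : X) 1, ⨆ y ∈ Metric.ball (0 : X) 1, ⨆ _ : x ≠ y,
          ENNReal.ofReal
              (Real.sqrt (1 - ‖x‖ ^ 2) * Real.sqrt (1 - ‖y‖ ^ 2) * ‖f x - f y‖) /
            ENNReal.ofReal ‖x - y‖ := by
  set R := ⨆ x ∈ Metric.ball (0 : X) 1, ⨆ y ∈ Metric.ball (0 : X) 1, ⨆ _ : x ≠ y,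
          ENNReal.ofReal
              (Real.sqrt (1 - ‖x‖ ^ 2) * Real.sqrt (1 - ‖y‖ ^ 2) * ‖f x - f y‖) /
            ENNReal.ofReal ‖x - y‖ with hR
  set S := ⨆ x ∈ Metric.ball (0 : X) 1,
        ENNReal.ofReal ((1 - ‖x‖ ^ 2) * ‖fderiv ℝ f x‖) with hS
  apply le_antisymm
  · -- S ≤ R
    apply iSup₂_le
    intro x hx
    by_cases htop : R = ⊤
    · rw [htop]; exact le_top
    have hM : (0:ℝ) ≤ R.toReal := ENNReal.toReal_nonneg
    rw [ENNReal.ofReal_le_iff_le_toReal htop]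
    apply easy_dir f hf hx R.toReal hM
    intro y hy hyx
    have hxy : x ≠ y := fun h => hyx h.symm
    have hterm : ENNReal.ofReal
        (Real.sqrt (1 - ‖x‖ ^ 2) * Real.sqrt (1 - ‖y‖ ^ 2) * ‖f x - f y‖) /
        ENNReal.ofReal ‖x - y‖ ≤ R := by
      rw [hR]
      have h1 : (ENNReal.ofReal (Real.sqrt (1 - ‖x‖ ^ 2) * Real.sqrt (1 - ‖y‖ ^ 2)
          * ‖f x - f y‖) / ENNReal.ofReal ‖x - y‖)
          ≤ ⨆ _ : x ≠ y, ENNReal.ofReal (Real.sqrt (1 - ‖x‖ ^ 2)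
            * Real.sqrt (1 - ‖y‖ ^ 2) * ‖f x - f y‖) / ENNReal.ofReal ‖x - y‖ :=
        le_iSup (fun _ : x ≠ y => _) hxy
      refine h1.trans ?_
      refine le_trans (le_iSup₂ (f := fun y (_ : y ∈ Metric.ball (0:X) 1) =>
        ⨆ _ : x ≠ y, ENNReal.ofReal (Real.sqrt (1 - ‖x‖ ^ 2)
          * Real.sqrt (1 - ‖y‖ ^ 2) * ‖f x - f y‖) / ENNReal.ofReal ‖x - y‖) y hy) ?_
      exact le_iSup₂ (f := fun x (_ : x ∈ Metric.ball (0:X) 1) =>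
        ⨆ y ∈ Metric.ball (0:X) 1, ⨆ _ : x ≠ y,
          ENNReal.ofReal (Real.sqrt (1 - ‖x‖ ^ 2)
            * Real.sqrt (1 - ‖y‖ ^ 2) * ‖f x - f y‖) / ENNReal.ofReal ‖x - y‖) x hx
    -- convert hterm to a real inequality
    have hne : ENNReal.ofReal ‖x - y‖ ≠ 0 := by
      simp only [ne_eq, ENNReal.ofReal_eq_zero, not_le]
      rw [norm_pos_iff, sub_ne_zero]
      exact hxy
    have h2 : ENNReal.ofReal
        (Real.sqrt (1 - ‖x‖ ^ 2) * Real.sqrt (1 - ‖y‖ ^ 2) * ‖f x - f y‖)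
        ≤ R * ENNReal.ofReal ‖x - y‖ :=
      (ENNReal.div_le_iff hne ENNReal.ofReal_ne_top).1 hterm
    have h3 : R * ENNReal.ofReal ‖x - y‖ ≠ ⊤ :=
      ENNReal.mul_ne_top htop ENNReal.ofReal_ne_top
    have h4 := (ENNReal.ofReal_le_iff_le_toReal h3).1 h2
    rwa [ENNReal.toReal_mul, ENNReal.toReal_ofReal (norm_nonneg _)] at h4
  · -- R ≤ S
    apply iSup₂_le
    intro x hx
    apply iSup₂_le
    intro y hy
    apply iSup_le
    intro hxy
    by_cases htop : S = ⊤
    · rw [htop]; exact le_top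
    have hL0 : (0:ℝ) ≤ S.toReal := ENNReal.toReal_nonneg
    have hb : ∀ z ∈ Metric.ball (0 : X) 1,
        (1 - ‖z‖ ^ 2) * ‖fderiv ℝ f z‖ ≤ S.toReal := by
      intro z hz
      have : ENNReal.ofReal ((1 - ‖z‖ ^ 2) * ‖fderiv ℝ f z‖) ≤ S :=
        le_iSup₂ (f := fun z (_ : z ∈ Metric.ball (0:X) 1) =>
          ENNReal.ofReal ((1 - ‖z‖ ^ 2) * ‖fderiv ℝ f z‖)) z hz
      exact (ENNReal.ofReal_le_iff_le_toReal htop).1 this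
    have hkey := pav_key f S.toReal hL0 hf hb hx hy
    have hne : ENNReal.ofReal ‖x - y‖ ≠ 0 := by
      simp only [ne_eq, ENNReal.ofReal_eq_zero, not_le]
      rw [norm_pos_iff, sub_ne_zero]
      exact hxy
    rw [ENNReal.div_le_iff hne ENNReal.ofReal_ne_top]
    calc ENNReal.ofReal
          (Real.sqrt (1 - ‖x‖ ^ 2) * Real.sqrt (1 - ‖y‖ ^ 2) * ‖f x - f y‖)
        ≤ ENNReal.ofReal (S.toReal * ‖x - y‖) := ENNReal.ofReal_le_ofReal hkey
      _ = ENNReal.ofReal S.toReal * ENNReal.ofReal ‖x - y‖ :=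
          ENNReal.ofReal_mul hL0
      _ ≤ S * ENNReal.ofReal ‖x - y‖ := by
          gcongr
          exact ENNReal.ofReal_toReal_le
end

section
/- Let m ≥ 2 and let B^m = {x ∈ ℝ^m : ‖x‖ < 1} be the open unit ball of the Euclidean space ℝ^m. Let f : B^m → ℂ be continuously differentiable (of class C¹) on B^m. Then, as elements of [0,∞], ⨆_{x ∈ B^m} (1 − ‖x‖²) · ‖d_f(x)‖ = ⨆_{x, y ∈ B^m, x ≠ y} √(1 − ‖x‖²) · √(1 − ‖y‖²) · |f(x) − f(y)| / ‖x − y‖. -/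
open Filter Topology

private lemma pav_two_log_le (u : ℝ) (hu : 1 ≤ u) : 2 * Real.log u ≤ u - u⁻¹ := by
  have hmono : MonotoneOn (fun s : ℝ => s - s⁻¹ - 2 * Real.log s) (Set.Ici 1) := by
    have hd : ∀ s : ℝ, 1 < s →
        HasDerivAt (fun s : ℝ => s - s⁻¹ - 2 * Real.log s) (1 - -(s ^ 2)⁻¹ - 2 * s⁻¹) s := by
      intro s hs
      have hs0 : s ≠ 0 := by positivity
      exact ((hasDerivAt_id s).sub (hasDerivAt_inv hs0)).sub
        ((Real.hasDerivAt_log hs0).const_mul 2)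
    apply monotoneOn_of_deriv_nonneg (convex_Ici 1)
    · intro s hs
      have hs0 : s ≠ 0 := by
        have : (1 : ℝ) ≤ s := hs
        positivity
      have hs1 : 1 ≤ s := hs
      have : ContinuousAt (fun s : ℝ => s - s⁻¹ - 2 * Real.log s) s := by
        rcases lt_or_eq_of_le hs1 with h | h
        · exact (hd s h).continuousAt
        · have h0 : (0:ℝ) < s := by linarith
          exact ((continuous_id.continuousAt.sub
            (continuousAt_inv₀ hs0)).sub
            ((Real.continuousAt_log hs0).const_smul (2:ℝ)))
      exact this.continuousWithinAt
    · rw [interior_Ici]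
      intro s hs
      exact ((hd s hs).differentiableAt).differentiableWithinAt
    · rw [interior_Ici]
      intro s hs
      rw [(hd s hs).deriv]
      have hs0 : (0:ℝ) < s := lt_trans one_pos hs
      rw [← inv_pow]
      nlinarith [sq_nonneg (1 - s⁻¹)]
  have h0 : (fun s : ℝ => s - s⁻¹ - 2 * Real.log s) 1 ≤
      (fun s : ℝ => s - s⁻¹ - 2 * Real.log s) u :=
    hmono (Set.self_mem_Ici) hu hu
  simp only [Real.log_one, inv_one] at h0
  linarith

private lemma pav_logMean_aux {a b : ℝ} (ha : 0 < a) (hab : a < b) :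
    Real.log b - Real.log a ≤ (b - a) / Real.sqrt (a * b) := by
  have hb : 0 < b := lt_trans ha hab
  set sa := Real.sqrt a with hsa
  set sb := Real.sqrt b with hsb
  have hsa0 : 0 < sa := Real.sqrt_pos.mpr ha
  have hsb0 : 0 < sb := Real.sqrt_pos.mpr hb
  have hsa2 : sa ^ 2 = a := Real.sq_sqrt ha.le
  have hsb2 : sb ^ 2 = b := Real.sq_sqrt hb.le
  have hu : 1 ≤ sb / sa := by
    rw [le_div_iff₀ hsa0, one_mul]
    exact Real.sqrt_le_sqrt hab.le
  have hkey := pav_two_log_le (sb / sa) hu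
  have hlog : Real.log (sb / sa) = (Real.log b - Real.log a) / 2 := by
    rw [Real.log_div hsb0.ne' hsa0.ne', hsa, hsb, Real.log_sqrt ha.le, Real.log_sqrt hb.le]
    ring
  have hsab : Real.sqrt (a * b) = sa * sb := Real.sqrt_mul ha.le b
  rw [hlog] at hkey
  have hinv : (sb / sa)⁻¹ = sa / sb := by
    rw [inv_div]
  rw [hinv] at hkey
  have hdiff : sb / sa - sa / sb = (b - a) / (sa * sb) := by
    field_simp
    nlinarith [hsa2, hsb2]
  rw [hdiff] at hkey
  rw [hsab]
  linarith

private lemma pav_logMean2 {a b : ℝ} (ha : 0 < a) (hab : a < b) :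
    (Real.log b - Real.log a) / (b - a) ≤ 1 / Real.sqrt (a * b) := by
  have hb : 0 < b := lt_trans ha hab
  have hs : 0 < Real.sqrt (a * b) := Real.sqrt_pos.mpr (by positivity)
  rw [div_le_div_iff₀ (by linarith) hs, one_mul]
  have h := pav_logMean_aux ha hab
  calc (Real.log b - Real.log a) * Real.sqrt (a * b)
      ≤ ((b - a) / Real.sqrt (a * b)) * Real.sqrt (a * b) :=
        mul_le_mul_of_nonneg_right h hs.le
    _ = b - a := by field_simp

private lemma pav_logMean {a b : ℝ} (ha : 0 < a) (hb : 0 < b) (hab : a ≠ b) :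
    (Real.log b - Real.log a) / (b - a) ≤ 1 / Real.sqrt (a * b) := by
  rcases lt_or_gt_of_ne hab with h | h
  · exact pav_logMean2 ha h
  · have h2 := pav_logMean2 hb h
    rw [mul_comm a b]
    calc (Real.log b - Real.log a) / (b - a)
        = (Real.log a - Real.log b) / (a - b) := by
          rw [← neg_div_neg_eq, neg_sub, neg_sub]
      _ ≤ 1 / Real.sqrt (b * a) := h2

/-- The weighted Lipschitz estimate: if `(1 - ‖z‖²)‖df(z)‖ ≤ C` on the ball, then
`√(1-‖x‖²)√(1-‖y‖²)‖f x - f y‖ ≤ C ‖x - y‖`. -/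
private lemma pav_lipschitz {E : Type*} [NormedAddCommGroup E] [InnerProductSpace ℝ E]
    (f : E → ℂ) (hf : ContDiffOn ℝ 1 f (Metric.ball 0 1)) {C : ℝ} (hC0 : 0 ≤ C)
    (hbound : ∀ z ∈ Metric.ball (0 : E) 1, (1 - ‖z‖ ^ 2) * ‖fderiv ℝ f z‖ ≤ C)
    {x y : E} (hx : x ∈ Metric.ball (0 : E) 1) (hy : y ∈ Metric.ball (0 : E) 1) :
    Real.sqrt (1 - ‖x‖ ^ 2) * Real.sqrt (1 - ‖y‖ ^ 2) * ‖f x - f y‖ ≤ C * ‖x - y‖ := by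
  have hxn : ‖x‖ < 1 := by simpa using hx
  have hyn : ‖y‖ < 1 := by simpa using hy
  set a : ℝ := 1 - ‖x‖ ^ 2 with ha_def
  set b : ℝ := 1 - ‖y‖ ^ 2 with hb_def
  have ha : 0 < a := by
    have := norm_nonneg x; nlinarith
  have hb : 0 < b := by
    have := norm_nonneg y; nlinarith
  set w : ℝ → ℝ := fun t => a + t * (b - a) with hw_def
  have hwpos : ∀ t ∈ Set.Icc (0:ℝ) 1, 0 < w t := by
    intro t ht
    rcases ht with ⟨ht0, ht1⟩
    have hwt : w t = (1 - t) * a + t * b := by simp only [hw_def]; ring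
    have hmin : 0 < min a b := lt_min ha hb
    have h1 : 0 ≤ (1 - t) * (a - min a b) :=
      mul_nonneg (by linarith) (sub_nonneg.mpr (min_le_left a b))
    have h2 : 0 ≤ t * (b - min a b) :=
      mul_nonneg ht0 (sub_nonneg.mpr (min_le_right a b))
    rw [hwt]; nlinarith [h1, h2, hmin]
  set γ : ℝ → E := fun t => x + t • (y - x) with hγ_def
  have hγmem : ∀ t ∈ Set.Icc (0:ℝ) 1, γ t ∈ Metric.ball (0 : E) 1 := by
    intro t ht
    rcases ht with ⟨ht0, ht1⟩
    have heq : γ t = (1 - t) • x + t • y := by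
      simp only [hγ_def, smul_sub, sub_smul, one_smul]; abel
    rw [heq]
    exact (convex_ball (0:E) 1) hx hy (by linarith) ht0 (by ring)
  have hgeo : ∀ t ∈ Set.Icc (0:ℝ) 1, w t ≤ 1 - ‖γ t‖ ^ 2 := by
    intro t ht
    rcases ht with ⟨ht0, ht1⟩
    have hexp : ‖γ t‖ ^ 2 = ‖x‖ ^ 2 + 2 * (t * inner ℝ x (y - x)) + t ^ 2 * ‖y - x‖ ^ 2 := by
      simp only [hγ_def]
      rw [norm_add_sq_real, real_inner_smul_right, norm_smul, mul_pow, Real.norm_eq_abs,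
        sq_abs]
    have hinner : inner ℝ x (y - x) = (inner ℝ x y : ℝ) - ‖x‖ ^ 2 := by
      rw [inner_sub_right, real_inner_self_eq_norm_sq]
    have hns : ‖y - x‖ ^ 2 = ‖y‖ ^ 2 - 2 * (inner ℝ x y : ℝ) + ‖x‖ ^ 2 := by
      rw [norm_sub_sq_real, real_inner_comm]
    have hns2 : (0:ℝ) ≤ ‖y - x‖ ^ 2 := sq_nonneg _
    rw [hns] at hns2
    simp only [hw_def, ha_def, hb_def]
    rw [hexp, hinner, hns]
    nlinarith [mul_nonneg ht0 (sub_nonneg.mpr ht1)]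
  -- derivative of t ↦ f (γ t)
  have hγ' : ∀ t : ℝ, HasDerivAt γ (y - x) t := by
    intro t
    simpa [hγ_def] using ((hasDerivAt_id t).smul_const (y - x)).const_add x
  have hdiff : ∀ t ∈ Set.Icc (0:ℝ) 1, HasFDerivAt f (fderiv ℝ f (γ t)) (γ t) := by
    intro t ht
    have := (hf.contDiffAt (Metric.isOpen_ball.mem_nhds (hγmem t ht))).differentiableAt one_ne_zero
    exact this.hasFDerivAt
  set g : ℝ → ℂ := fun t => f (γ t) - f x with hg_def
  have hg' : ∀ t ∈ Set.Icc (0:ℝ) 1, HasDerivAt g (fderiv ℝ f (γ t) (y - x)) t := by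
    intro t ht
    exact ((hdiff t ht).comp_hasDerivAt t (hγ' t)).sub_const (f x)
  have hgc : ContinuousOn g (Set.Icc 0 1) :=
    fun t ht => ((hg' t ht).continuousAt).continuousWithinAt
  set K : ℝ := C * ‖y - x‖ with hK_def
  have hK0 : 0 ≤ K := mul_nonneg hC0 (norm_nonneg _)
  have hbnd : ∀ t ∈ Set.Ico (0:ℝ) 1, ‖fderiv ℝ f (γ t) (y - x)‖ ≤ K * (w t)⁻¹ := by
    intro t ht
    have htI : t ∈ Set.Icc (0:ℝ) 1 := Set.Ico_subset_Icc_self ht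
    have h1 : 0 < w t := hwpos t htI
    have h2 : w t ≤ 1 - ‖γ t‖ ^ 2 := hgeo t htI
    have h3 : 0 < 1 - ‖γ t‖ ^ 2 := lt_of_lt_of_le h1 h2
    have h4 : ‖fderiv ℝ f (γ t)‖ ≤ C / (1 - ‖γ t‖ ^ 2) := by
      rw [le_div_iff₀ h3, mul_comm]
      exact hbound (γ t) (hγmem t htI)
    have h5 : C / (1 - ‖γ t‖ ^ 2) ≤ C / w t :=
      div_le_div_of_nonneg_left hC0 h1 h2
    calc ‖fderiv ℝ f (γ t) (y - x)‖ ≤ ‖fderiv ℝ f (γ t)‖ * ‖y - x‖ :=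
          (fderiv ℝ f (γ t)).le_opNorm _
      _ ≤ (C / w t) * ‖y - x‖ := by
          apply mul_le_mul_of_nonneg_right (le_trans h4 h5) (norm_nonneg _)
      _ = K * (w t)⁻¹ := by rw [hK_def, div_eq_mul_inv]; ring
  -- main estimate via fencing
  have hmain : ‖f y - f x‖ ≤ K / Real.sqrt (a * b) := by
    have hw0 : w 0 = a := by simp [hw_def]
    have hw1 : w 1 = b := by simp [hw_def]
    have hγ0 : γ 0 = x := by simp [hγ_def]
    have hγ1 : γ 1 = y := by simp [hγ_def]
    by_cases hab : a = b
    · -- constant weight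
      set B : ℝ → ℝ := fun t => (K * a⁻¹) * t with hB_def
      have hB : ∀ t : ℝ, HasDerivAt B (K * a⁻¹) t := by
        intro t
        simpa using (hasDerivAt_id t).const_mul (K * a⁻¹)
      have hres : ∀ ⦃t⦄, t ∈ Set.Icc (0:ℝ) 1 → ‖g t‖ ≤ B t := by
        apply image_norm_le_of_norm_deriv_right_le_deriv_boundary hgc
          (fun t ht => (hg' t (Set.Ico_subset_Icc_self ht)).hasDerivWithinAt)
          (by simp [hg_def, hγ0, hB_def]) hB
        intro t ht
        have : w t = a := by
          simp only [hw_def]; rw [← hab]; ring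
        have := hbnd t ht
        rwa [‹w t = a›] at this
      have := hres (Set.right_mem_Icc.mpr zero_le_one)
      simp only [hg_def, hγ1, hB_def, mul_one] at this
      have hsab : Real.sqrt (a * b) = a := by
        rw [← hab]; exact Real.sqrt_mul_self ha.le
      rw [hsab]
      rw [div_eq_mul_inv]
      exact this
    · -- log antiderivative
      set B : ℝ → ℝ := fun t => (K / (b - a)) * (Real.log (w t) - Real.log a) with hB_def
      have hba : b - a ≠ 0 := sub_ne_zero.mpr (Ne.symm hab)
      have hBd : ∀ t ∈ Set.Icc (0:ℝ) 1, HasDerivAt B (K * (w t)⁻¹) t := by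
        intro t ht
        have hw' : HasDerivAt w (b - a) t := by
          simpa [hw_def] using ((hasDerivAt_id t).mul_const (b - a)).const_add a
        have hlog : HasDerivAt (fun s => Real.log (w s)) ((w t)⁻¹ * (b - a)) t := by
          exact (Real.hasDerivAt_log (hwpos t ht).ne').comp t hw'
        have := ((hlog.sub_const (Real.log a)).const_mul (K / (b - a)))
        rw [show K / (b - a) * ((w t)⁻¹ * (b - a)) = K * (w t)⁻¹ by
          rw [mul_comm ((w t)⁻¹), ← mul_assoc, div_mul_cancel₀ K hba]] at this
        exact this
      have hres : ∀ ⦃t⦄, t ∈ Set.Icc (0:ℝ) 1 → ‖g t‖ ≤ B t := by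
        apply image_norm_le_of_norm_deriv_right_le_deriv_boundary' hgc
          (fun t ht => (hg' t (Set.Ico_subset_Icc_self ht)).hasDerivWithinAt)
          (by simp [hg_def, hγ0, hB_def, hw0])
          (fun t ht => (hBd t ht).continuousAt.continuousWithinAt)
          (fun t ht => (hBd t (Set.Ico_subset_Icc_self ht)).hasDerivWithinAt)
          hbnd
      have hfin := hres (Set.right_mem_Icc.mpr zero_le_one)
      simp only [hg_def, hγ1, hB_def, hw1] at hfin
      have hlm : (Real.log b - Real.log a) / (b - a) ≤ 1 / Real.sqrt (a * b) :=
        pav_logMean ha hb hab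
      calc ‖f y - f x‖ ≤ K / (b - a) * (Real.log b - Real.log a) := hfin
        _ = K * ((Real.log b - Real.log a) / (b - a)) := by ring
        _ ≤ K * (1 / Real.sqrt (a * b)) := by
            apply mul_le_mul_of_nonneg_left hlm hK0
        _ = K / Real.sqrt (a * b) := by ring
  -- conclude
  have hsab : 0 < Real.sqrt (a * b) := Real.sqrt_pos.mpr (by positivity)
  have hsplit : Real.sqrt a * Real.sqrt b = Real.sqrt (a * b) := (Real.sqrt_mul ha.le b).symm
  have hxy : ‖f x - f y‖ = ‖f y - f x‖ := norm_sub_rev _ _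
  have hyx : ‖y - x‖ = ‖x - y‖ := norm_sub_rev _ _
  calc Real.sqrt a * Real.sqrt b * ‖f x - f y‖
      = Real.sqrt (a * b) * ‖f y - f x‖ := by rw [hsplit, hxy]
    _ ≤ Real.sqrt (a * b) * (K / Real.sqrt (a * b)) := by
        apply mul_le_mul_of_nonneg_left hmain hsab.le
    _ = K := by field_simp
    _ = C * ‖x - y‖ := by rw [hK_def, hyx]

/-- Pavlović's theorem: the Bloch semi-norm equality for a C¹ complex-valued function
on the unit ball of `ℝ^m`, `m ≥ 2`. -/
theorem blochSeminorm_eq_pavlovic_euclidean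
    (m : ℕ) (hm : 2 ≤ m)
    (f : EuclideanSpace ℝ (Fin m) → ℂ)
    (hf : ContDiffOn ℝ 1 f (Metric.ball (0 : EuclideanSpace ℝ (Fin m)) 1)) :
    (⨆ x ∈ Metric.ball (0 : EuclideanSpace ℝ (Fin m)) 1,
        ENNReal.ofReal ((1 - ‖x‖ ^ 2) * ‖fderiv ℝ f x‖))
      = ⨆ x ∈ Metric.ball (0 : EuclideanSpace ℝ (Fin m)) 1,
          ⨆ y ∈ Metric.ball (0 : EuclideanSpace ℝ (Fin m)) 1, ⨆ _ : x ≠ y,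
            ENNReal.ofReal
                (Real.sqrt (1 - ‖x‖ ^ 2) * Real.sqrt (1 - ‖y‖ ^ 2) * ‖f x - f y‖) /
              ENNReal.ofReal ‖x - y‖ := by
  set Ball := Metric.ball (0 : EuclideanSpace ℝ (Fin m)) 1 with hBall
  set L := ⨆ x ∈ Ball, ENNReal.ofReal ((1 - ‖x‖ ^ 2) * ‖fderiv ℝ f x‖) with hL
  set R := ⨆ x ∈ Ball, ⨆ y ∈ Ball, ⨆ _ : x ≠ y,
      ENNReal.ofReal
          (Real.sqrt (1 - ‖x‖ ^ 2) * Real.sqrt (1 - ‖y‖ ^ 2) * ‖f x - f y‖) /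
        ENNReal.ofReal ‖x - y‖ with hR
  apply le_antisymm
  · -- L ≤ R : limit argument
    refine iSup₂_le fun x hx => ?_
    by_cases hRtop : R = ⊤
    · rw [hRtop]; exact le_top
    set C := R.toReal with hC_def
    have hC0 : 0 ≤ C := ENNReal.toReal_nonneg
    have hxn : ‖x‖ < 1 := by simpa [hBall] using hx
    set a : ℝ := 1 - ‖x‖ ^ 2 with ha_def
    have ha : 0 < a := by have := norm_nonneg x; nlinarith
    set D := fderiv ℝ f x with hD_def
    -- pointwise bound along unit directions
    have claim : ∀ v : EuclideanSpace ℝ (Fin m), ‖v‖ = 1 → a * ‖D v‖ ≤ C := by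
      intro v hv
      set ε : ℝ := 1 - ‖x‖ with hε_def
      have hε : 0 < ε := by linarith
      -- for each small positive t, the two-point bound
      have hstep : ∀ t : ℝ, t ∈ Set.Ioo 0 ε →
          Real.sqrt a * Real.sqrt (1 - ‖x + t • v‖ ^ 2) * ‖f (x + t • v) - f x‖ / t ≤ C := by
        intro t ⟨ht0, htε⟩
        set y := x + t • v with hy_def
        have hyb : y ∈ Ball := by
          simp only [hBall, Metric.mem_ball, dist_zero_right]
          calc ‖y‖ ≤ ‖x‖ + ‖t • v‖ := norm_add_le _ _
            _ = ‖x‖ + t := by rw [norm_smul, hv, Real.norm_eq_abs, abs_of_pos ht0, mul_one]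
            _ < 1 := by simp only [hε_def] at htε; linarith
        have hne : x ≠ y := by
          simp only [hy_def, ne_eq, left_eq_add, smul_eq_zero, not_or]
          exact ⟨ht0.ne', fun h => by rw [h] at hv; simp at hv⟩
        have hxmy : ‖x - y‖ = t := by
          have : x - y = -(t • v) := by rw [hy_def]; abel
          rw [this, norm_neg, norm_smul, hv, Real.norm_eq_abs, abs_of_pos ht0, mul_one]
        have hterm : ENNReal.ofReal
              (Real.sqrt a * Real.sqrt (1 - ‖y‖ ^ 2) * ‖f x - f y‖) /
            ENNReal.ofReal ‖x - y‖ ≤ R := by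
          rw [hR]
          exact le_iSup_of_le x (le_iSup_of_le hx (le_iSup_of_le y (le_iSup_of_le hyb
            (le_iSup_of_le hne le_rfl))))
        have hden0 : (ENNReal.ofReal ‖x - y‖) ≠ 0 := by
          rw [hxmy]
          exact (ENNReal.ofReal_pos.mpr ht0).ne'
        have hdent : (ENNReal.ofReal ‖x - y‖) ≠ ⊤ := ENNReal.ofReal_ne_top
        rw [ENNReal.div_le_iff_le_mul (Or.inl hden0) (Or.inl hdent)] at hterm
        have hmulne : R * ENNReal.ofReal ‖x - y‖ ≠ ⊤ :=
          ENNReal.mul_ne_top hRtop ENNReal.ofReal_ne_top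
        have hreal : Real.sqrt a * Real.sqrt (1 - ‖y‖ ^ 2) * ‖f x - f y‖ ≤ C * t := by
          have := ENNReal.toReal_mono hmulne hterm
          rw [ENNReal.toReal_ofReal (by positivity), ENNReal.toReal_mul,
            ENNReal.toReal_ofReal (norm_nonneg _), hxmy] at this
          exact this
        rw [div_le_iff₀ ht0, norm_sub_rev]
        exact hreal
      -- the limit of the difference quotients
      have hlim : Tendsto
          (fun t : ℝ => Real.sqrt a * Real.sqrt (1 - ‖x + t • v‖ ^ 2) *
            ‖f (x + t • v) - f x‖ / t) (𝓝[>] (0:ℝ)) (𝓝 (a * ‖D v‖)) := by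
        have hDf : HasFDerivAt f D x := by
          have := (hf.contDiffAt (Metric.isOpen_ball.mem_nhds hx)).differentiableAt one_ne_zero
          exact this.hasFDerivAt
        have hc : HasDerivAt (fun t : ℝ => x + t • v) v 0 := by
          simpa using ((hasDerivAt_id (0:ℝ)).smul_const v).const_add x
        have hcomp : HasDerivAt (fun t : ℝ => f (x + t • v)) (D v) 0 := by
          have h0 : x + (0:ℝ) • v = x := by simp
          have hDf' : HasFDerivAt f D (x + (0:ℝ) • v) := by rwa [h0]
          exact hDf'.comp_hasDerivAt 0 hc
        have hslope := hasDerivAt_iff_tendsto_slope.mp hcomp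
        have hslope' : Tendsto (fun t : ℝ => ‖f (x + t • v) - f x‖ / t)
            (𝓝[>] (0:ℝ)) (𝓝 ‖D v‖) := by
          have h1 : Tendsto (slope (fun t : ℝ => f (x + t • v)) 0) (𝓝[>] (0:ℝ)) (𝓝 (D v)) :=
            hslope.mono_left (nhdsWithin_mono 0 fun t ht => ne_of_gt ht)
          have h2 := h1.norm
          apply h2.congr'
          filter_upwards [self_mem_nhdsWithin] with t (ht : (0:ℝ) < t)
          have hsl : slope (fun s : ℝ => f (x + s • v)) 0 t
              = t⁻¹ • (f (x + t • v) - f x) := by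
            simp [slope_def_module]
          rw [hsl, norm_smul, Real.norm_eq_abs, abs_of_pos (inv_pos.mpr ht),
            div_eq_inv_mul]
        have hsq : Tendsto (fun t : ℝ => Real.sqrt (1 - ‖x + t • v‖ ^ 2))
            (𝓝[>] (0:ℝ)) (𝓝 (Real.sqrt a)) := by
          have hcont : Continuous fun t : ℝ => Real.sqrt (1 - ‖x + t • v‖ ^ 2) := by
            apply Real.continuous_sqrt.comp
            exact continuous_const.sub
              ((continuous_const.add (continuous_id.smul continuous_const)).norm.pow 2)
          have h0 : Real.sqrt (1 - ‖x + (0:ℝ) • v‖ ^ 2) = Real.sqrt a := by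
            simp [ha_def]
          have := hcont.tendsto 0
          rw [h0] at this
          exact this.mono_left nhdsWithin_le_nhds
        have := (tendsto_const_nhds (x := Real.sqrt a)
          (f := 𝓝[>] (0:ℝ))).mul hsq |>.mul hslope'
        have heq : Real.sqrt a * Real.sqrt a * ‖D v‖ = a * ‖D v‖ := by
          rw [Real.mul_self_sqrt ha.le]
        rw [heq] at this
        apply this.congr'
        filter_upwards [self_mem_nhdsWithin] with t (ht : (0:ℝ) < t)
        ring
      have hEvent : ∀ᶠ t in 𝓝[>] (0:ℝ),
          Real.sqrt a * Real.sqrt (1 - ‖x + t • v‖ ^ 2) *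
            ‖f (x + t • v) - f x‖ / t ≤ C := by
        filter_upwards [Ioo_mem_nhdsGT_of_mem (Set.left_mem_Ico.mpr hε)] with t ht
        exact hstep t ht
      exact le_of_tendsto hlim hEvent
    -- conclude via operator norm
    have hop : ‖D‖ ≤ C / a := by
      apply ContinuousLinearMap.opNorm_le_bound _ (div_nonneg hC0 ha.le)
      intro z
      by_cases hz : z = 0
      · simp [hz]
      · have hz0 : 0 < ‖z‖ := norm_pos_iff.mpr hz
        set u := ‖z‖⁻¹ • z with hu_def
        have hu : ‖u‖ = 1 := by
          rw [hu_def, norm_smul, Real.norm_eq_abs, abs_of_pos (inv_pos.mpr hz0),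
            inv_mul_cancel₀ hz0.ne']
        have hDu : D u = ‖z‖⁻¹ • D z := by rw [hu_def, map_smul]
        have := claim u hu
        rw [hDu, norm_smul, Real.norm_eq_abs, abs_of_pos (inv_pos.mpr hz0)] at this
        rw [div_mul_eq_mul_div, le_div_iff₀ ha]
        calc ‖D z‖ * a = (a * (‖z‖⁻¹ * ‖D z‖)) * ‖z‖ := by field_simp
          _ ≤ C * ‖z‖ := by
              apply mul_le_mul_of_nonneg_right this (norm_nonneg _)
    have hfinal : a * ‖D‖ ≤ C := by
      calc a * ‖D‖ ≤ a * (C / a) := mul_le_mul_of_nonneg_left hop ha.le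
        _ = C := by field_simp
    show ENNReal.ofReal (a * ‖D‖) ≤ R
    calc ENNReal.ofReal (a * ‖D‖) ≤ ENNReal.ofReal C := ENNReal.ofReal_le_ofReal hfinal
      _ = R := ENNReal.ofReal_toReal hRtop
  · -- R ≤ L : the weighted Lipschitz estimate
    refine iSup₂_le fun x hx => iSup₂_le fun y hy => iSup_le fun hxy => ?_
    by_cases hLtop : L = ⊤
    · rw [hLtop]; exact le_top
    set C := L.toReal with hC_def
    have hC0 : 0 ≤ C := ENNReal.toReal_nonneg
    have hbound : ∀ z ∈ Ball, (1 - ‖z‖ ^ 2) * ‖fderiv ℝ f z‖ ≤ C := by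
      intro z hz
      have hzn : ‖z‖ < 1 := by simpa [hBall] using hz
      have hnn : 0 ≤ (1 - ‖z‖ ^ 2) * ‖fderiv ℝ f z‖ := by
        have := norm_nonneg z
        have h1 : (0:ℝ) ≤ 1 - ‖z‖ ^ 2 := by nlinarith
        positivity
      have h1 : ENNReal.ofReal ((1 - ‖z‖ ^ 2) * ‖fderiv ℝ f z‖) ≤ L := by
        rw [hL]
        exact le_iSup_of_le z (le_iSup_of_le hz le_rfl)
      have := ENNReal.toReal_mono hLtop h1
      rwa [ENNReal.toReal_ofReal hnn] at this
    have hkey := pav_lipschitz f hf hC0 hbound hx hy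
    have hden0 : (ENNReal.ofReal ‖x - y‖) ≠ 0 := by
      have h : (0:ℝ) < ‖x - y‖ := norm_pos_iff.mpr (sub_ne_zero.mpr hxy)
      exact (ENNReal.ofReal_pos.mpr h).ne'
    rw [ENNReal.div_le_iff_le_mul (Or.inl hden0) (Or.inl ENNReal.ofReal_ne_top)]
    calc ENNReal.ofReal (Real.sqrt (1 - ‖x‖ ^ 2) * Real.sqrt (1 - ‖y‖ ^ 2) * ‖f x - f y‖)
        ≤ ENNReal.ofReal (C * ‖x - y‖) := ENNReal.ofReal_le_ofReal hkey
      _ = ENNReal.ofReal C * ENNReal.ofReal ‖x - y‖ := ENNReal.ofReal_mul hC0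
      _ ≤ L * ENNReal.ofReal ‖x - y‖ := by
          apply mul_le_mul_left ENNReal.ofReal_toReal_le
end

section
/- Let X and Y be real normed vector spaces, let Ω ⊆ X be a nonempty open convex set, let g : ℝ → ℝ be continuous and monotone nondecreasing with g(‖x‖) > 0 for every x ∈ Ω, and let f : Ω → Y be Fréchet differentiable at every point of Ω. Then, as elements of [0,∞], ⨆_{x ∈ Ω} ‖d_f(x)‖ / g(‖x‖) = ⨆_{x, y ∈ Ω, x ≠ y} min{ 1/g(‖x‖), 1/g(‖y‖) } · ‖f(x) − f(y)‖ / ‖x − y‖. -/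
open Filter Topology

/-- Min–max representation of the Bloch type semi-norm for a weight that is a
continuous nondecreasing positive function of the norm, on a convex domain. -/
theorem blochSeminorm_eq_minmax
    {X Y : Type*} [NormedAddCommGroup X] [NormedSpace ℝ X]
    [NormedAddCommGroup Y] [NormedSpace ℝ Y]
    (Ω : Set X) (hΩne : Ω.Nonempty) (hΩo : IsOpen Ω) (hΩc : Convex ℝ Ω)
    (g : ℝ → ℝ) (hgc : Continuous g) (hgm : Monotone g)
    (hgpos : ∀ x ∈ Ω, 0 < g ‖x‖)
    (f : X → Y) (hf : ∀ z ∈ Ω, DifferentiableAt ℝ f z) :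
    (⨆ x ∈ Ω, ENNReal.ofReal ‖fderiv ℝ f x‖ / ENNReal.ofReal (g ‖x‖))
      = ⨆ x ∈ Ω, ⨆ y ∈ Ω, ⨆ _ : x ≠ y,
          ENNReal.ofReal (min (g ‖x‖)⁻¹ (g ‖y‖)⁻¹) *
            (ENNReal.ofReal ‖f x - f y‖ / ENNReal.ofReal ‖x - y‖) := by
  refine le_antisymm ?_ ?_
  · -- LHS ≤ RHS
    set T := (⨆ x ∈ Ω, ⨆ y ∈ Ω, ⨆ _ : x ≠ y,
          ENNReal.ofReal (min (g ‖x‖)⁻¹ (g ‖y‖)⁻¹) *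
            (ENNReal.ofReal ‖f x - f y‖ / ENNReal.ofReal ‖x - y‖)) with hTdef
    by_cases hTtop : T = ⊤
    · rw [hTtop]; exact le_top
    set M := T.toReal with hM
    have hM0 : 0 ≤ M := ENNReal.toReal_nonneg
    refine iSup₂_le fun x hx => ?_
    have hgx := hgpos x hx
    rw [← ENNReal.ofReal_div_of_pos hgx, ENNReal.ofReal_le_iff_le_toReal hTtop]
    have key : ∀ y ∈ Ω, x ≠ y →
        min (g ‖x‖)⁻¹ (g ‖y‖)⁻¹ * (‖f x - f y‖ / ‖x - y‖) ≤ M := by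
      intro y hy hxy
      have hgy := hgpos y hy
      have hxy' : (0:ℝ) < ‖x - y‖ := norm_pos_iff.2 (sub_ne_zero.2 hxy)
      have h1 : ENNReal.ofReal (min (g ‖x‖)⁻¹ (g ‖y‖)⁻¹ * (‖f x - f y‖ / ‖x - y‖)) ≤ T := by
        rw [ENNReal.ofReal_mul (le_min (by positivity) (by positivity)),
            ENNReal.ofReal_div_of_pos hxy']
        exact le_iSup₂_of_le x hx (le_iSup₂_of_le y hy (le_iSup_of_le hxy le_rfl))
      rwa [ENNReal.ofReal_le_iff_le_toReal hTtop] at h1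
    have hop : ‖fderiv ℝ f x‖ ≤ M * g ‖x‖ := by
      refine ContinuousLinearMap.opNorm_le_bound _ (by positivity) fun v => ?_
      rcases eq_or_ne v 0 with rfl | hv
      · simp
      have hvpos : 0 < ‖v‖ := norm_pos_iff.2 hv
      set d := fderiv ℝ f x v with hd
      have hmap : Continuous (fun t : ℝ => x + t • v) := by fun_prop
      have hline : HasDerivAt (fun t : ℝ => x + t • v) v 0 := by
        simpa using ((hasDerivAt_id (0:ℝ)).smul_const v).const_add x
      have hfd := (hf x hx).hasFDerivAt
      have hx0 : x = x + (0:ℝ) • v := by simp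
      rw [hx0] at hfd
      have hγ : HasDerivAt (fun t : ℝ => f (x + t • v)) d 0 := by
        have h := hfd.comp_hasDerivAt 0 hline
        rw [← hx0] at h
        exact h
      rw [hasDerivAt_iff_tendsto_slope] at hγ
      have hmono : 𝓝[>] (0:ℝ) ≤ 𝓝[≠] (0:ℝ) :=
        nhdsWithin_mono _ fun t ht => ht.ne'
      have hnorm : Tendsto (fun t => ‖slope (fun s : ℝ => f (x + s • v)) 0 t‖)
          (𝓝[>] (0:ℝ)) (𝓝 ‖d‖) :=
        (continuous_norm.tendsto d).comp (hγ.mono_left hmono)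
      have hcont : Tendsto (fun t : ℝ => min (g ‖x‖)⁻¹ (g ‖x + t • v‖)⁻¹)
          (𝓝[>] (0:ℝ)) (𝓝 (g ‖x‖)⁻¹) := by
        have hinner : Tendsto (fun t : ℝ => (g ‖x + t • v‖)⁻¹) (𝓝 (0:ℝ)) (𝓝 (g ‖x‖)⁻¹) := by
          have h1 : Tendsto (fun t : ℝ => g ‖x + t • v‖) (𝓝 (0:ℝ)) (𝓝 (g ‖x‖)) := by
            have := (hgc.comp (continuous_norm.comp hmap)).tendsto (0:ℝ)
            simpa [Function.comp_def] using this
          exact h1.inv₀ hgx.ne'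
        have h2 : Tendsto (fun t : ℝ => min (g ‖x‖)⁻¹ (g ‖x + t • v‖)⁻¹) (𝓝 (0:ℝ))
            (𝓝 (min (g ‖x‖)⁻¹ (g ‖x‖)⁻¹)) := Tendsto.min tendsto_const_nhds hinner
        rw [min_self] at h2
        exact h2.mono_left nhdsWithin_le_nhds
      have hψ : Tendsto (fun t => min (g ‖x‖)⁻¹ (g ‖x + t • v‖)⁻¹ *
            (‖slope (fun s : ℝ => f (x + s • v)) 0 t‖ / ‖v‖))
          (𝓝[>] (0:ℝ)) (𝓝 ((g ‖x‖)⁻¹ * (‖d‖ / ‖v‖))) :=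
        hcont.mul (hnorm.div_const ‖v‖)
      have hev : ∀ᶠ t in 𝓝[>] (0:ℝ), min (g ‖x‖)⁻¹ (g ‖x + t • v‖)⁻¹ *
            (‖slope (fun s : ℝ => f (x + s • v)) 0 t‖ / ‖v‖) ≤ M := by
        have hmem : ∀ᶠ t in 𝓝[>] (0:ℝ), x + t • v ∈ Ω := by
          have hct : Tendsto (fun t : ℝ => x + t • v) (𝓝 0) (𝓝 x) := by
            have := hmap.tendsto (0:ℝ)
            simpa using this
          exact (hct.eventually_mem (hΩo.mem_nhds hx)).filter_mono nhdsWithin_le_nhds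
        filter_upwards [hmem, self_mem_nhdsWithin] with t htΩ ht
        have ht0 : (0:ℝ) < t := ht
        have hne : x ≠ x + t • v := by
          intro hcontra
          have htv : t • v = 0 := by
            have := hcontra.symm
            rwa [add_eq_left] at this
          rcases smul_eq_zero.1 htv with h | h
          · exact ht0.ne' h
          · exact hv h
        have hkey := key (x + t • v) htΩ hne
        have hsval : ‖slope (fun s : ℝ => f (x + s • v)) 0 t‖ / ‖v‖
            = ‖f x - f (x + t • v)‖ / ‖x - (x + t • v)‖ := by
          have h1 : x - (x + t • v) = -(t • v) := by abel
          have hA : ‖x - (x + t • v)‖ = t * ‖v‖ := by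
            rw [h1, norm_neg, norm_smul, Real.norm_eq_abs, abs_of_pos ht0]
          have hB : ‖f x - f (x + t • v)‖ = ‖f (x + t • v) - f (x + (0:ℝ) • v)‖ := by
            rw [norm_sub_rev]; simp
          rw [slope_def_module, sub_zero, norm_smul, hA, hB, norm_inv, Real.norm_eq_abs,
            abs_of_pos ht0, inv_mul_eq_div, div_div]
        rw [hsval]
        exact hkey
      have hle := le_of_tendsto hψ hev
      rw [inv_mul_le_iff₀ hgx, div_le_iff₀ hvpos] at hle
      calc ‖d‖ ≤ g ‖x‖ * M * ‖v‖ := hle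
        _ = M * g ‖x‖ * ‖v‖ := by ring
    rw [div_le_iff₀ hgx]
    exact hop
  · -- RHS ≤ LHS
    set S := (⨆ x ∈ Ω, ENNReal.ofReal ‖fderiv ℝ f x‖ / ENNReal.ofReal (g ‖x‖)) with hSdef
    by_cases hStop : S = ⊤
    · rw [hStop]; exact le_top
    set M := S.toReal with hM
    have hM0 : 0 ≤ M := ENNReal.toReal_nonneg
    have key : ∀ z ∈ Ω, ‖fderiv ℝ f z‖ ≤ M * g ‖z‖ := by
      intro z hz
      have hgz := hgpos z hz
      have h1 : ENNReal.ofReal (‖fderiv ℝ f z‖ / g ‖z‖) ≤ S := by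
        rw [ENNReal.ofReal_div_of_pos hgz]
        exact le_iSup₂_of_le z hz le_rfl
      rw [ENNReal.ofReal_le_iff_le_toReal hStop, div_le_iff₀ hgz] at h1
      exact h1
    refine iSup₂_le fun x hx => iSup₂_le fun y hy => iSup_le fun hxy => ?_
    have hgx := hgpos x hx
    have hgy := hgpos y hy
    set G := max (g ‖x‖) (g ‖y‖) with hG
    have hGpos : 0 < G := lt_max_of_lt_left hgx
    have hseg : segment ℝ x y ⊆ Ω := hΩc.segment_subset hx hy
    have hbound : ∀ z ∈ segment ℝ x y, ‖fderiv ℝ f z‖ ≤ M * G := by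
      intro z hz
      have hzn : ‖z‖ ≤ max ‖x‖ ‖y‖ := by
        obtain ⟨a, b, ha, hb, hab, rfl⟩ := hz
        calc ‖a • x + b • y‖ ≤ a * ‖x‖ + b * ‖y‖ := by
              refine (norm_add_le _ _).trans ?_
              simp [norm_smul, abs_of_nonneg ha, abs_of_nonneg hb]
          _ ≤ a * max ‖x‖ ‖y‖ + b * max ‖x‖ ‖y‖ := by
              gcongr
              · exact le_max_left _ _
              · exact le_max_right _ _
          _ = max ‖x‖ ‖y‖ := by rw [← add_mul, hab, one_mul]
      have hgzG : g ‖z‖ ≤ G := by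
        calc g ‖z‖ ≤ g (max ‖x‖ ‖y‖) := hgm hzn
          _ = G := hgm.map_max
      calc ‖fderiv ℝ f z‖ ≤ M * g ‖z‖ := key z (hseg hz)
        _ ≤ M * G := mul_le_mul_of_nonneg_left hgzG hM0
    have hmvt : ‖f x - f y‖ ≤ M * G * ‖x - y‖ :=
      Convex.norm_image_sub_le_of_norm_fderiv_le
        (fun z hz => hf z (hseg hz)) hbound (convex_segment x y)
        (right_mem_segment ℝ x y) (left_mem_segment ℝ x y)
    have hxy' : (0:ℝ) < ‖x - y‖ := norm_pos_iff.2 (sub_ne_zero.2 hxy)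
    have hmin : min (g ‖x‖)⁻¹ (g ‖y‖)⁻¹ = G⁻¹ := by
      rcases le_total (g ‖x‖) (g ‖y‖) with h | h
      · rw [hG, max_eq_right h, min_eq_right (inv_anti₀ hgx h)]
      · rw [hG, max_eq_left h, min_eq_left (inv_anti₀ hgy h)]
    have hreal : min (g ‖x‖)⁻¹ (g ‖y‖)⁻¹ * (‖f x - f y‖ / ‖x - y‖) ≤ M := by
      rw [hmin]
      have h2 : ‖f x - f y‖ / ‖x - y‖ ≤ M * G := by
        rw [div_le_iff₀ hxy']; exact hmvt
      calc G⁻¹ * (‖f x - f y‖ / ‖x - y‖) ≤ G⁻¹ * (M * G) :=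
            mul_le_mul_of_nonneg_left h2 (inv_nonneg.2 hGpos.le)
        _ = M := by field_simp
    calc ENNReal.ofReal (min (g ‖x‖)⁻¹ (g ‖y‖)⁻¹) *
          (ENNReal.ofReal ‖f x - f y‖ / ENNReal.ofReal ‖x - y‖)
        = ENNReal.ofReal (min (g ‖x‖)⁻¹ (g ‖y‖)⁻¹ * (‖f x - f y‖ / ‖x - y‖)) := by
          rw [ENNReal.ofReal_mul (le_min (by positivity) (by positivity)),
            ENNReal.ofReal_div_of_pos hxy']
      _ ≤ ENNReal.ofReal M := ENNReal.ofReal_le_ofReal hreal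
      _ = S := ENNReal.ofReal_toReal hStop
end

section
/- Let X and Y be real normed vector spaces, let Ω ⊆ X be an open convex set, let g : ℝ → ℝ be monotone nondecreasing with g ≥ 0 on [0,∞), let K ≥ 0, and let f : Ω → Y be Fréchet differentiable at every point of Ω with ‖d_f(z)‖ ≤ K · g(‖z‖) for every z ∈ Ω. Then for all x, y ∈ Ω: ‖f(x) − f(y)‖ ≤ K · max{ g(‖x‖), g(‖y‖) } · ‖x − y‖. -/
open Filter Topology

/-- The Bloch type growth condition with a weight nondecreasing in the norm implies
the corresponding differential-free two-point estimate. -/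
theorem norm_sub_le_max_weight
    {X Y : Type*} [NormedAddCommGroup X] [NormedSpace ℝ X]
    [NormedAddCommGroup Y] [NormedSpace ℝ Y]
    (Ω : Set X) (hΩo : IsOpen Ω) (hΩc : Convex ℝ Ω)
    (g : ℝ → ℝ) (hgm : Monotone g) (hg0 : ∀ t : ℝ, 0 ≤ t → 0 ≤ g t)
    (K : ℝ) (hK : 0 ≤ K)
    (f : X → Y) (hf : ∀ z ∈ Ω, DifferentiableAt ℝ f z)
    (hbd : ∀ z ∈ Ω, ‖fderiv ℝ f z‖ ≤ K * g ‖z‖) :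
    ∀ x ∈ Ω, ∀ y ∈ Ω, ‖f x - f y‖ ≤ K * max (g ‖x‖) (g ‖y‖) * ‖x - y‖ := by
  intro x hx y hy
  have hseg : segment ℝ y x ⊆ Ω := hΩc.segment_subset hy hx
  have hconv : Convex ℝ (segment ℝ y x) := convex_segment y x
  have bound : ∀ z ∈ segment ℝ y x, ‖fderiv ℝ f z‖ ≤ K * max (g ‖x‖) (g ‖y‖) := by
    intro z hz
    refine (hbd z (hseg hz)).trans ?_
    refine mul_le_mul_of_nonneg_left ?_ hK
    have hz' : ‖z‖ ≤ max ‖x‖ ‖y‖ := by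
      obtain ⟨a, b, ha, hb, hab, rfl⟩ := hz
      calc ‖a • y + b • x‖ ≤ a * ‖y‖ + b * ‖x‖ := by
            refine (norm_add_le _ _).trans ?_
            rw [norm_smul, norm_smul, Real.norm_of_nonneg ha, Real.norm_of_nonneg hb]
        _ ≤ a * max ‖x‖ ‖y‖ + b * max ‖x‖ ‖y‖ := by
            gcongr
            · exact le_max_right _ _
            · exact le_max_left _ _
        _ = max ‖x‖ ‖y‖ := by rw [← add_mul, hab, one_mul]
    calc g ‖z‖ ≤ g (max ‖x‖ ‖y‖) := hgm hz'
      _ = max (g ‖x‖) (g ‖y‖) := hgm.map_max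
  exact hconv.norm_image_sub_le_of_norm_fderiv_le
    (fun z hz => hf z (hseg hz)) bound (left_mem_segment ℝ y x) (right_mem_segment ℝ y x)
end

section
/- Let X and Y be real normed vector spaces, let Ω ⊆ X be an open convex set, let δ > 0, and let M ∈ ℝ satisfy ‖x‖ < M for every x ∈ Ω. Let φ : ℝ → ℝ be differentiable on (−δ, M) with φ′ continuous and nonnegative on (−δ, M), φ′ monotone nondecreasing on [0, M), and φ(t) − φ(s) ≤ √(φ′(t) · φ′(s)) · (t − s) whenever −δ < s < t < M. Let K ≥ 0 and let f : Ω → Y be Fréchet differentiable at every point of Ω with ‖d_f(z)‖ ≤ K · φ′(‖z‖) for all z ∈ Ω. Then for all x, y ∈ Ω: ‖f(x) − f(y)‖ ≤ K · √(φ′(‖x‖)) · √(φ′(‖y‖)) · ‖x − y‖. -/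
open Filter Topology

private lemma aux_norm_sub_le
    {X Y : Type*} [NormedAddCommGroup X] [NormedSpace ℝ X]
    [NormedAddCommGroup Y] [NormedSpace ℝ Y]
    (Ω : Set X) (hΩc : Convex ℝ Ω)
    (δ M : ℝ) (hδ : 0 < δ) (hM : ∀ x ∈ Ω, ‖x‖ < M)
    (φ φ' : ℝ → ℝ)
    (hφ : ∀ t ∈ Set.Ioo (-δ) M, HasDerivAt φ (φ' t) t)
    (hφ'nonneg : ∀ t ∈ Set.Ioo (-δ) M, 0 ≤ φ' t)
    (hφ'mono : MonotoneOn φ' (Set.Ico 0 M))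
    (hineq : ∀ s t : ℝ, -δ < s → s < t → t < M →
      φ t - φ s ≤ Real.sqrt (φ' t * φ' s) * (t - s))
    (K : ℝ) (hK : 0 ≤ K)
    (f : X → Y) (hf : ∀ z ∈ Ω, DifferentiableAt ℝ f z)
    (hbd : ∀ z ∈ Ω, ‖fderiv ℝ f z‖ ≤ K * φ' ‖z‖)
    (x : X) (hx : x ∈ Ω) (y : X) (hy : y ∈ Ω) (hxy : ‖y‖ ≤ ‖x‖) :
      ‖f x - f y‖ ≤ K * Real.sqrt (φ' ‖x‖) * Real.sqrt (φ' ‖y‖) * ‖x - y‖ := by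
  set s := ‖y‖ with hs
  set r := ‖x‖ with hr
  have hsM : s < M := hM y hy
  have hrM : r < M := hM x hx
  have hs0 : (0:ℝ) ≤ s := norm_nonneg _
  have hr0 : (0:ℝ) ≤ r := norm_nonneg _
  set u := ‖x - y‖ with hu
  have hu0 : (0:ℝ) ≤ u := norm_nonneg _
  set γ : ℝ → X := fun t => y + t • (x - y) with hγ
  have hγmem : ∀ t ∈ Set.Icc (0:ℝ) 1, γ t ∈ Ω := fun t ht =>
    hΩc.add_smul_sub_mem hy hx ht
  have hγderiv : ∀ t : ℝ, HasDerivAt γ (x - y) t := by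
    intro t
    exact (((hasDerivAt_id t).smul_const (x - y)).const_add y).congr_deriv (one_smul _ _)
  have hgderiv : ∀ t ∈ Set.Icc (0:ℝ) 1,
      HasDerivAt (fun t => f (γ t)) ((fderiv ℝ f (γ t)) (x - y)) t := by
    intro t ht
    exact ((hf (γ t) (hγmem t ht)).hasFDerivAt).comp_hasDerivAt t (hγderiv t)
  have hγnorm : ∀ t ∈ Set.Icc (0:ℝ) 1, ‖γ t‖ ≤ s + t * (r - s) := by
    intro t ht
    have h1 : γ t = (1 - t) • y + t • x := by
      simp [hγ, smul_sub, sub_smul]; abel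
    calc ‖γ t‖ = ‖(1 - t) • y + t • x‖ := by rw [h1]
      _ ≤ ‖(1 - t) • y‖ + ‖t • x‖ := norm_add_le _ _
      _ = (1 - t) * s + t * r := by
          rw [norm_smul, norm_smul, Real.norm_eq_abs, Real.norm_eq_abs,
            abs_of_nonneg (by linarith [ht.2]), abs_of_nonneg ht.1]
      _ = s + t * (r - s) := by ring
  have hline : ∀ t ∈ Set.Icc (0:ℝ) 1, s + t * (r - s) ∈ Set.Icc s r := by
    intro t ht
    constructor
    · nlinarith [ht.1, ht.2]
    · nlinarith [ht.1, ht.2]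
  have hφ'bound : ∀ t ∈ Set.Icc (0:ℝ) 1,
      ‖(fderiv ℝ f (γ t)) (x - y)‖ ≤ K * u * φ' (s + t * (r - s)) := by
    intro t ht
    have h1 : ‖(fderiv ℝ f (γ t)) (x - y)‖ ≤ ‖fderiv ℝ f (γ t)‖ * u :=
      (fderiv ℝ f (γ t)).le_opNorm _
    have h2 : ‖fderiv ℝ f (γ t)‖ ≤ K * φ' ‖γ t‖ := hbd _ (hγmem t ht)
    have h3 : φ' ‖γ t‖ ≤ φ' (s + t * (r - s)) := by
      apply hφ'mono ⟨norm_nonneg _, hM _ (hγmem t ht)⟩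
        ⟨by linarith [(hline t ht).1], by linarith [(hline t ht).2]⟩
        (hγnorm t ht)
    calc ‖(fderiv ℝ f (γ t)) (x - y)‖ ≤ ‖fderiv ℝ f (γ t)‖ * u := h1
      _ ≤ (K * φ' (s + t * (r - s))) * u := by
          apply mul_le_mul_of_nonneg_right _ hu0
          exact h2.trans (mul_le_mul_of_nonneg_left h3 hK)
      _ = K * u * φ' (s + t * (r - s)) := by ring
  rcases eq_or_lt_of_le hxy with heq | hlt
  · -- case ‖y‖ = ‖x‖ : constant bound K * φ' s
    have hC : ∀ t ∈ Set.Ico (0:ℝ) 1,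
        ‖(fderiv ℝ f (γ t)) (x - y)‖ ≤ K * u * φ' s := by
      intro t ht
      have := hφ'bound t ⟨ht.1, le_of_lt ht.2⟩
      rw [← heq] at this
      simpa using this
    have key := norm_image_sub_le_of_norm_deriv_right_le_segment
      (f := fun t => f (γ t)) (f' := fun t => (fderiv ℝ f (γ t)) (x - y))
      (a := 0) (b := 1)
      (fun t ht => (hgderiv t ht).continuousAt.continuousWithinAt)
      (fun t ht => (hgderiv t ⟨ht.1, le_of_lt ht.2⟩).hasDerivWithinAt) hC
      1 (by norm_num)
    have hγ1 : γ 1 = x := by simp [hγ]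
    have hγ0 : γ 0 = y := by simp [hγ]
    simp only [hγ1, hγ0] at key
    have hsq : Real.sqrt (φ' r) * Real.sqrt (φ' s) = φ' s := by
      rw [← heq]; exact Real.mul_self_sqrt (hφ'nonneg s ⟨by linarith, hsM⟩)
    calc ‖f x - f y‖ ≤ K * u * φ' s * (1 - 0) := key
      _ = K * (Real.sqrt (φ' r) * Real.sqrt (φ' s)) * u := by rw [hsq]; ring
      _ = K * Real.sqrt (φ' r) * Real.sqrt (φ' s) * u := by ring
  · -- case s < r
    have hrs : (0:ℝ) < r - s := by linarith
    set B : ℝ → ℝ := fun t => (K * u / (r - s)) * (φ (s + t * (r - s)) - φ s) with hB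
    have hBderiv : ∀ t ∈ Set.Icc (0:ℝ) 1,
        HasDerivAt B (K * u * φ' (s + t * (r - s))) t := by
      intro t ht
      have hmem : s + t * (r - s) ∈ Set.Ioo (-δ) M :=
        ⟨by linarith [(hline t ht).1], by linarith [(hline t ht).2]⟩
      have h1 : HasDerivAt (fun t : ℝ => s + t * (r - s)) (r - s) t := by
        simpa using ((hasDerivAt_id t).mul_const (r - s)).const_add s
      have h2 := ((hφ _ hmem).comp t h1).sub_const (φ s)
      have h3 := h2.const_mul (K * u / (r - s))
      refine h3.congr_deriv ?_
      rw [div_mul_eq_mul_div, div_eq_iff hrs.ne']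
      ring
    have key := image_norm_le_of_norm_deriv_right_le_deriv_boundary'
      (f := fun t => f (γ t) - f y)
      (f' := fun t => (fderiv ℝ f (γ t)) (x - y))
      (a := 0) (b := 1) (B := B) (B' := fun t => K * u * φ' (s + t * (r - s)))
      (ContinuousOn.sub
        (fun t ht => (hgderiv t ht).continuousAt.continuousWithinAt)
        continuousOn_const)
      (fun t ht => (((hgderiv t ⟨ht.1, le_of_lt ht.2⟩).sub_const
        (f y)).hasDerivWithinAt))
      (by simp [hγ, B])
      (fun t ht => (hBderiv t ht).continuousAt.continuousWithinAt)
      (fun t ht => (hBderiv t ⟨ht.1, le_of_lt ht.2⟩).hasDerivWithinAt)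
      (fun t ht => hφ'bound t ⟨ht.1, le_of_lt ht.2⟩)
      (show (1:ℝ) ∈ Set.Icc (0:ℝ) 1 by norm_num)
    have hγ1 : γ 1 = x := by simp [hγ]
    simp only [hγ1] at key
    have hB1 : B 1 = (K * u / (r - s)) * (φ r - φ s) := by
      simp [hB]
    rw [hB1] at key
    have hmain : (K * u / (r - s)) * (φ r - φ s) ≤
        K * Real.sqrt (φ' r) * Real.sqrt (φ' s) * u := by
      have h1 := hineq s r (by linarith) hlt hrM
      have h2 : (0:ℝ) ≤ K * u / (r - s) := by positivity
      have h3 : Real.sqrt (φ' r * φ' s) = Real.sqrt (φ' r) * Real.sqrt (φ' s) :=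
        Real.sqrt_mul (hφ'nonneg r ⟨by linarith, hrM⟩) _
      calc (K * u / (r - s)) * (φ r - φ s)
          ≤ (K * u / (r - s)) * (Real.sqrt (φ' r * φ' s) * (r - s)) :=
            mul_le_mul_of_nonneg_left h1 h2
        _ = K * u * Real.sqrt (φ' r * φ' s) := by field_simp
        _ = K * Real.sqrt (φ' r) * Real.sqrt (φ' s) * u := by rw [h3]; ring
    exact key.trans hmain

/-- The substantive direction of Theorem 4.4: a Bloch type growth condition with
weight `φ'(‖·‖)` implies the two-point estimate with weight `√(φ'(‖x‖))·√(φ'(‖y‖))`. -/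
theorem norm_sub_le_sqrt_weights
    {X Y : Type*} [NormedAddCommGroup X] [NormedSpace ℝ X]
    [NormedAddCommGroup Y] [NormedSpace ℝ Y]
    (Ω : Set X) (hΩo : IsOpen Ω) (hΩc : Convex ℝ Ω)
    (δ M : ℝ) (hδ : 0 < δ) (hM : ∀ x ∈ Ω, ‖x‖ < M)
    (φ φ' : ℝ → ℝ)
    (hφ : ∀ t ∈ Set.Ioo (-δ) M, HasDerivAt φ (φ' t) t)
    (hφ'c : ContinuousOn φ' (Set.Ioo (-δ) M))
    (hφ'nonneg : ∀ t ∈ Set.Ioo (-δ) M, 0 ≤ φ' t)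
    (hφ'mono : MonotoneOn φ' (Set.Ico 0 M))
    (hineq : ∀ s t : ℝ, -δ < s → s < t → t < M →
      φ t - φ s ≤ Real.sqrt (φ' t * φ' s) * (t - s))
    (K : ℝ) (hK : 0 ≤ K)
    (f : X → Y) (hf : ∀ z ∈ Ω, DifferentiableAt ℝ f z)
    (hbd : ∀ z ∈ Ω, ‖fderiv ℝ f z‖ ≤ K * φ' ‖z‖) :
    ∀ x ∈ Ω, ∀ y ∈ Ω,
      ‖f x - f y‖ ≤ K * Real.sqrt (φ' ‖x‖) * Real.sqrt (φ' ‖y‖) * ‖x - y‖ := by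
  intro x hx y hy
  rcases le_total ‖y‖ ‖x‖ with h | h
  · exact aux_norm_sub_le Ω hΩc δ M hδ hM φ φ' hφ hφ'nonneg hφ'mono hineq
      K hK f hf hbd x hx y hy h
  · have := aux_norm_sub_le Ω hΩc δ M hδ hM φ φ' hφ hφ'nonneg hφ'mono hineq
      K hK f hf hbd y hy x hx h
    rw [norm_sub_rev, norm_sub_rev x y]
    calc ‖f y - f x‖ ≤ K * Real.sqrt (φ' ‖y‖) * Real.sqrt (φ' ‖x‖) * ‖y - x‖ := this
      _ = K * Real.sqrt (φ' ‖x‖) * Real.sqrt (φ' ‖y‖) * ‖y - x‖ := by ring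
end

section
/- Let 𝔻 = {z ∈ ℂ : |z| < 1} and let f : ℂ → ℂ be complex differentiable (holomorphic) on 𝔻. Then there exists a constant C ≥ 0 with (1 − |z|²)·|f′(z)|/(1 + |f(z)|²) ≤ C for all z ∈ 𝔻 if and only if there exists a constant C′ ≥ 0 with √(1 − |z|²) · √(1 − |w|²) · |f(z) − f(w)| ≤ C′ · |z − w| · √(1 + |f(z)|²) · √(1 + |f(w)|²) for all z, w ∈ 𝔻. -/
noncomputable def sP (u : ℂ) : EuclideanSpace ℝ (Fin 3) :=
  (WithLp.equiv 2 (Fin 3 → ℝ)).symm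
    ![2 * u.re / (1 + u.re ^ 2 + u.im ^ 2), 2 * u.im / (1 + u.re ^ 2 + u.im ^ 2),
      1 - 2 / (1 + u.re ^ 2 + u.im ^ 2)]

lemma N_pos (u : ℂ) : 0 < 1 + u.re ^ 2 + u.im ^ 2 := by positivity

lemma norm_sq_eq (u : ℂ) : ‖u‖ ^ 2 = u.re ^ 2 + u.im ^ 2 := by
  rw [Complex.sq_norm, Complex.normSq_apply]; ring

lemma sP_sub_norm (u w : ℂ) : ‖sP u - sP w‖
    = 2 * ‖u - w‖ / (Real.sqrt (1 + ‖u‖ ^ 2) * Real.sqrt (1 + ‖w‖ ^ 2)) := by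
  have hu : (0:ℝ) < 1 + ‖u‖ ^ 2 := by positivity
  have hw : (0:ℝ) < 1 + ‖w‖ ^ 2 := by positivity
  have hrhs : 0 ≤ 2 * ‖u - w‖ / (Real.sqrt (1 + ‖u‖ ^ 2) * Real.sqrt (1 + ‖w‖ ^ 2)) := by
    positivity
  rw [EuclideanSpace.norm_eq, ← Real.sqrt_sq hrhs]
  congr 1
  have h2 : (2 * ‖u - w‖ / (Real.sqrt (1 + ‖u‖ ^ 2) * Real.sqrt (1 + ‖w‖ ^ 2))) ^ 2
      = 4 * ‖u - w‖ ^ 2 / ((1 + ‖u‖ ^ 2) * (1 + ‖w‖ ^ 2)) := by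
    rw [div_pow, mul_pow, mul_pow, Real.sq_sqrt hu.le, Real.sq_sqrt hw.le]
    ring
  rw [h2, norm_sq_eq, norm_sq_eq, norm_sq_eq]
  have hu' := N_pos u
  have hw' := N_pos w
  simp only [sP, Fin.sum_univ_three, PiLp.sub_apply, WithLp.equiv_symm_apply, PiLp.toLp_apply,
    Matrix.cons_val_zero, Matrix.cons_val_one, Matrix.head_cons, Matrix.cons_val_two,
    Matrix.tail_cons, Real.norm_eq_abs, sq_abs, Complex.sub_re, Complex.sub_im]
  field_simp
  ring

noncomputable def sD (u v : ℂ) : EuclideanSpace ℝ (Fin 3) :=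
  (WithLp.equiv 2 (Fin 3 → ℝ)).symm
    ![2 * v.re / (1 + u.re ^ 2 + u.im ^ 2)
        - 4 * u.re * (u.re * v.re + u.im * v.im) / (1 + u.re ^ 2 + u.im ^ 2) ^ 2,
      2 * v.im / (1 + u.re ^ 2 + u.im ^ 2)
        - 4 * u.im * (u.re * v.re + u.im * v.im) / (1 + u.re ^ 2 + u.im ^ 2) ^ 2,
      4 * (u.re * v.re + u.im * v.im) / (1 + u.re ^ 2 + u.im ^ 2) ^ 2]

lemma sD_norm (u v : ℂ) : ‖sD u v‖ = 2 * ‖v‖ / (1 + ‖u‖ ^ 2) := by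
  have hu : (0:ℝ) < 1 + ‖u‖ ^ 2 := by positivity
  have hrhs : 0 ≤ 2 * ‖v‖ / (1 + ‖u‖ ^ 2) := by positivity
  rw [EuclideanSpace.norm_eq, ← Real.sqrt_sq hrhs]
  congr 1
  have h2 : (2 * ‖v‖ / (1 + ‖u‖ ^ 2)) ^ 2 = 4 * ‖v‖ ^ 2 / (1 + ‖u‖ ^ 2) ^ 2 := by
    rw [div_pow, mul_pow]; ring
  rw [h2, norm_sq_eq, norm_sq_eq]
  have hu' := N_pos u
  simp only [sD, Fin.sum_univ_three, WithLp.equiv_symm_apply, PiLp.toLp_apply,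
    Matrix.cons_val_zero, Matrix.cons_val_one, Matrix.head_cons, Matrix.cons_val_two,
    Matrix.tail_cons, Real.norm_eq_abs, sq_abs]
  field_simp
  ring

lemma sP_hasDerivAt (g : ℝ → ℂ) (v : ℂ) (t : ℝ) (hg : HasDerivAt g v t) :
    HasDerivAt (fun s => sP (g s)) (sD (g t) v) t := by
  have hre : HasDerivAt (fun s => (g s).re) v.re t :=
    (Complex.reCLM.hasFDerivAt (x := g t)).comp_hasDerivAt t hg
  have him : HasDerivAt (fun s => (g s).im) v.im t :=
    (Complex.imCLM.hasFDerivAt (x := g t)).comp_hasDerivAt t hg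
  have hN : HasDerivAt (fun s => 1 + (g s).re ^ 2 + (g s).im ^ 2)
      (2 * (g t).re * v.re + 2 * (g t).im * v.im) t := by
    have := ((hasDerivAt_const t (1:ℝ)).fun_add ((hre.fun_pow 2))).fun_add (him.fun_pow 2)
    refine this.congr_deriv ?_
    ring
  have hNne : (1 + (g t).re ^ 2 + (g t).im ^ 2) ≠ 0 := (N_pos (g t)).ne'
  have hc0 : HasDerivAt (fun s => 2 * (g s).re / (1 + (g s).re ^ 2 + (g s).im ^ 2))
      (2 * v.re / (1 + (g t).re ^ 2 + (g t).im ^ 2)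
        - 4 * (g t).re * ((g t).re * v.re + (g t).im * v.im)
            / (1 + (g t).re ^ 2 + (g t).im ^ 2) ^ 2) t := by
    have := (hre.const_mul 2).fun_div hN hNne
    refine this.congr_deriv ?_
    field_simp
    ring
  have hc1 : HasDerivAt (fun s => 2 * (g s).im / (1 + (g s).re ^ 2 + (g s).im ^ 2))
      (2 * v.im / (1 + (g t).re ^ 2 + (g t).im ^ 2)
        - 4 * (g t).im * ((g t).re * v.re + (g t).im * v.im)
            / (1 + (g t).re ^ 2 + (g t).im ^ 2) ^ 2) t := by
    have := (him.const_mul 2).fun_div hN hNne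
    refine this.congr_deriv ?_
    field_simp
    ring
  have hc2 : HasDerivAt (fun s => 1 - 2 / (1 + (g s).re ^ 2 + (g s).im ^ 2))
      (4 * ((g t).re * v.re + (g t).im * v.im)
          / (1 + (g t).re ^ 2 + (g t).im ^ 2) ^ 2) t := by
    have := (hasDerivAt_const t (1:ℝ)).fun_sub ((hasDerivAt_const t (2:ℝ)).fun_div hN hNne)
    refine this.congr_deriv ?_
    field_simp
    ring
  have hF : HasDerivAt (fun s => (![2 * (g s).re / (1 + (g s).re ^ 2 + (g s).im ^ 2),
        2 * (g s).im / (1 + (g s).re ^ 2 + (g s).im ^ 2),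
        1 - 2 / (1 + (g s).re ^ 2 + (g s).im ^ 2)] : Fin 3 → ℝ))
      ![2 * v.re / (1 + (g t).re ^ 2 + (g t).im ^ 2)
          - 4 * (g t).re * ((g t).re * v.re + (g t).im * v.im)
              / (1 + (g t).re ^ 2 + (g t).im ^ 2) ^ 2,
        2 * v.im / (1 + (g t).re ^ 2 + (g t).im ^ 2)
          - 4 * (g t).im * ((g t).re * v.re + (g t).im * v.im)
              / (1 + (g t).re ^ 2 + (g t).im ^ 2) ^ 2,
        4 * ((g t).re * v.re + (g t).im * v.im)
            / (1 + (g t).re ^ 2 + (g t).im ^ 2) ^ 2] t := by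
    rw [hasDerivAt_pi]
    intro i
    fin_cases i
    · simpa using hc0
    · simpa using hc1
    · simpa using hc2
  have := ((PiLp.continuousLinearEquiv 2 ℝ (fun _ : Fin 3 => ℝ)).symm
      : (Fin 3 → ℝ) →L[ℝ] EuclideanSpace ℝ (Fin 3)).hasFDerivAt.comp_hasDerivAt t hF
  exact this

lemma trivial_chordal (u v : ℂ) : ‖u - v‖ ≤ Real.sqrt (1 + ‖u‖ ^ 2) * Real.sqrt (1 + ‖v‖ ^ 2) := by
  have h1 : ‖u - v‖ ≤ ‖u‖ + ‖v‖ := norm_sub_le u v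
  have h2 : (‖u‖ + ‖v‖) ^ 2 ≤ (1 + ‖u‖ ^ 2) * (1 + ‖v‖ ^ 2) := by
    nlinarith [sq_nonneg (1 - ‖u‖ * ‖v‖), norm_nonneg u, norm_nonneg v]
  calc ‖u - v‖ ≤ ‖u‖ + ‖v‖ := h1
    _ = Real.sqrt ((‖u‖ + ‖v‖) ^ 2) := by
        rw [Real.sqrt_sq (by positivity)]
    _ ≤ Real.sqrt ((1 + ‖u‖ ^ 2) * (1 + ‖v‖ ^ 2)) := Real.sqrt_le_sqrt h2
    _ = Real.sqrt (1 + ‖u‖ ^ 2) * Real.sqrt (1 + ‖v‖ ^ 2) := Real.sqrt_mul (by positivity) _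

lemma sqrt_prod_le (z w : ℂ) (hz : ‖z‖ < 1) (hw : ‖w‖ < 1) :
    Real.sqrt (1 - ‖z‖ ^ 2) * Real.sqrt (1 - ‖w‖ ^ 2)
      ≤ 2 * Real.sqrt ((1 - ‖z‖) * (1 - ‖w‖)) := by
  have hz0 := norm_nonneg z
  have hw0 := norm_nonneg w
  have h1 : (0:ℝ) ≤ 1 - ‖z‖ ^ 2 := by nlinarith
  have h1' : (1 - ‖z‖ ^ 2) ≤ 2 * (1 - ‖z‖) := by nlinarith
  have h2 : (0:ℝ) ≤ 1 - ‖w‖ ^ 2 := by nlinarith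
  have h2' : (1 - ‖w‖ ^ 2) ≤ 2 * (1 - ‖w‖) := by nlinarith
  calc Real.sqrt (1 - ‖z‖ ^ 2) * Real.sqrt (1 - ‖w‖ ^ 2)
      = Real.sqrt ((1 - ‖z‖ ^ 2) * (1 - ‖w‖ ^ 2)) := (Real.sqrt_mul h1 _).symm
    _ ≤ Real.sqrt (4 * ((1 - ‖z‖) * (1 - ‖w‖))) := Real.sqrt_le_sqrt (by nlinarith [mul_le_mul h1' h2' h2 (by linarith : (0:ℝ) ≤ 2*(1-‖z‖))])
    _ = 2 * Real.sqrt ((1 - ‖z‖) * (1 - ‖w‖)) := by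
        rw [show (4:ℝ) * ((1 - ‖z‖) * (1 - ‖w‖)) = 2^2 * ((1 - ‖z‖) * (1 - ‖w‖)) by ring,
          Real.sqrt_mul (by positivity), Real.sqrt_sq (by norm_num)]

lemma half_sqrt_le_min (a b : ℝ) (ha : 0 < a) (hb : 0 < b)
    (h : |a - b| ≤ Real.sqrt (a * b) / 2) : Real.sqrt (a * b) / 2 ≤ min a b := by
  have hs : Real.sqrt (a * b) ^ 2 = a * b := Real.sq_sqrt (by positivity)
  have hs0 : 0 ≤ Real.sqrt (a * b) := Real.sqrt_nonneg _
  have h1 : b - a ≤ Real.sqrt (a * b) / 2 := (abs_le.mp (by rwa [abs_sub_comm] at h)).2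
  have h2 : a - b ≤ Real.sqrt (a * b) / 2 := (abs_le.mp h).2
  rw [le_min_iff]
  constructor
  · nlinarith [sq_nonneg (Real.sqrt (a * b) - 2 * a), sq_nonneg (Real.sqrt (a * b) + a)]
  · nlinarith [sq_nonneg (Real.sqrt (a * b) - 2 * b), sq_nonneg (Real.sqrt (a * b) + b)]

lemma backward_lemma (f : ℂ → ℂ) (hf : DifferentiableOn ℂ f (Metric.ball (0 : ℂ) 1))
    (C' : ℝ)
    (hC' : ∀ z ∈ Metric.ball (0 : ℂ) 1, ∀ w ∈ Metric.ball (0 : ℂ) 1,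
      Real.sqrt (1 - ‖z‖ ^ 2) * Real.sqrt (1 - ‖w‖ ^ 2) * ‖f z - f w‖
        ≤ C' * ‖z - w‖ * Real.sqrt (1 + ‖f z‖ ^ 2) * Real.sqrt (1 + ‖f w‖ ^ 2))
    (z : ℂ) (hz : z ∈ Metric.ball (0 : ℂ) 1) :
    (1 - ‖z‖ ^ 2) * ‖deriv f z‖ / (1 + ‖f z‖ ^ 2) ≤ C' := by
  have hz1 : ‖z‖ < 1 := mem_ball_zero_iff.mp hz
  have hdz : (0:ℝ) < 1 - ‖z‖ ^ 2 := by nlinarith [norm_nonneg z]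
  have hfz2 : (0:ℝ) < 1 + ‖f z‖ ^ 2 := by positivity
  have hnhds : Metric.ball (0 : ℂ) 1 ∈ nhds z := Metric.isOpen_ball.mem_nhds hz
  have hfd : HasDerivAt f (deriv f z) z := (hf.differentiableAt hnhds).hasDerivAt
  have hfc : ContinuousAt f z := hfd.continuousAt
  set φ : ℂ → ℝ := fun w => C' * Real.sqrt (1 + ‖f z‖ ^ 2) * Real.sqrt (1 + ‖f w‖ ^ 2)
      / (Real.sqrt (1 - ‖z‖ ^ 2) * Real.sqrt (1 - ‖w‖ ^ 2)) with hφdef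
  have hden : ContinuousAt (fun w : ℂ => Real.sqrt (1 - ‖z‖ ^ 2) * Real.sqrt (1 - ‖w‖ ^ 2)) z := by
    fun_prop
  have hdenne : Real.sqrt (1 - ‖z‖ ^ 2) * Real.sqrt (1 - ‖z‖ ^ 2) ≠ 0 := by positivity
  have hnum : ContinuousAt (fun w : ℂ => C' * Real.sqrt (1 + ‖f z‖ ^ 2)
      * Real.sqrt (1 + ‖f w‖ ^ 2)) z := by
    apply continuousAt_const.mul
    exact Real.continuous_sqrt.continuousAt.comp (continuousAt_const.add (hfc.norm.pow 2))
  have hφc : ContinuousAt φ z := hnum.div hden hdenne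
  have hφt : Filter.Tendsto φ (nhdsWithin z {z}ᶜ) (nhds (φ z)) :=
    hφc.tendsto.mono_left nhdsWithin_le_nhds
  have hslope : Filter.Tendsto (fun w => ‖slope f z w‖) (nhdsWithin z {z}ᶜ)
      (nhds ‖deriv f z‖) := (hasDerivAt_iff_tendsto_slope.mp hfd).norm
  have hev : ∀ᶠ w in nhdsWithin z {z}ᶜ, ‖slope f z w‖ ≤ φ w := by
    filter_upwards [nhdsWithin_le_nhds hnhds, self_mem_nhdsWithin] with w hw hne
    have hw1 : ‖w‖ < 1 := mem_ball_zero_iff.mp hw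
    have hdw : (0:ℝ) < 1 - ‖w‖ ^ 2 := by nlinarith [norm_nonneg w]
    have hwz : w - z ≠ 0 := sub_ne_zero.mpr hne
    have hwz' : (0:ℝ) < ‖w - z‖ := norm_pos_iff.mpr hwz
    have hPP : (0:ℝ) < Real.sqrt (1 - ‖z‖ ^ 2) * Real.sqrt (1 - ‖w‖ ^ 2) := by positivity
    have hsl : ‖slope f z w‖ = ‖f w - f z‖ / ‖w - z‖ := by
      rw [slope_def_field]
      rw [norm_div]
    rw [hsl, hφdef]
    rw [div_le_div_iff₀ hwz' hPP]
    have h := hC' z hz w hw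
    calc ‖f w - f z‖ * (Real.sqrt (1 - ‖z‖ ^ 2) * Real.sqrt (1 - ‖w‖ ^ 2))
        = Real.sqrt (1 - ‖z‖ ^ 2) * Real.sqrt (1 - ‖w‖ ^ 2) * ‖f z - f w‖ := by
          rw [norm_sub_rev]; ring
      _ ≤ C' * ‖z - w‖ * Real.sqrt (1 + ‖f z‖ ^ 2) * Real.sqrt (1 + ‖f w‖ ^ 2) := h
      _ = C' * Real.sqrt (1 + ‖f z‖ ^ 2) * Real.sqrt (1 + ‖f w‖ ^ 2) * ‖w - z‖ := by
          rw [norm_sub_rev]; ring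
  have hle : ‖deriv f z‖ ≤ φ z := le_of_tendsto_of_tendsto hslope hφt hev
  have hφz : φ z = C' * (1 + ‖f z‖ ^ 2) / (1 - ‖z‖ ^ 2) := by
    have e1 : Real.sqrt (1 + ‖f z‖ ^ 2) * Real.sqrt (1 + ‖f z‖ ^ 2) = 1 + ‖f z‖ ^ 2 :=
      Real.mul_self_sqrt hfz2.le
    have e2 : Real.sqrt (1 - ‖z‖ ^ 2) * Real.sqrt (1 - ‖z‖ ^ 2) = 1 - ‖z‖ ^ 2 :=
      Real.mul_self_sqrt hdz.le
    show C' * Real.sqrt (1 + ‖f z‖ ^ 2) * Real.sqrt (1 + ‖f z‖ ^ 2)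
        / (Real.sqrt (1 - ‖z‖ ^ 2) * Real.sqrt (1 - ‖z‖ ^ 2)) = _
    rw [show C' * Real.sqrt (1 + ‖f z‖ ^ 2) * Real.sqrt (1 + ‖f z‖ ^ 2)
        = C' * (Real.sqrt (1 + ‖f z‖ ^ 2) * Real.sqrt (1 + ‖f z‖ ^ 2)) by ring, e1, e2]
  rw [hφz] at hle
  rw [div_le_iff₀ hfz2]
  calc (1 - ‖z‖ ^ 2) * ‖deriv f z‖
      ≤ (1 - ‖z‖ ^ 2) * (C' * (1 + ‖f z‖ ^ 2) / (1 - ‖z‖ ^ 2)) :=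
        mul_le_mul_of_nonneg_left hle hdz.le
    _ = C' * (1 + ‖f z‖ ^ 2) := by
        rw [mul_comm ((1:ℝ) - ‖z‖ ^ 2) _, div_mul_cancel₀ _ hdz.ne']

set_option maxHeartbeats 1000000 in
lemma forward_lemma (f : ℂ → ℂ) (hf : DifferentiableOn ℂ f (Metric.ball (0 : ℂ) 1))
    (C : ℝ) (hC0 : 0 ≤ C)
    (hC : ∀ z ∈ Metric.ball (0 : ℂ) 1, (1 - ‖z‖ ^ 2) * ‖deriv f z‖ / (1 + ‖f z‖ ^ 2) ≤ C)
    (z : ℂ) (hz : z ∈ Metric.ball (0 : ℂ) 1) (w : ℂ) (hw : w ∈ Metric.ball (0 : ℂ) 1) :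
    Real.sqrt (1 - ‖z‖ ^ 2) * Real.sqrt (1 - ‖w‖ ^ 2) * ‖f z - f w‖
      ≤ (4 * C + 4) * ‖z - w‖ * Real.sqrt (1 + ‖f z‖ ^ 2) * Real.sqrt (1 + ‖f w‖ ^ 2) := by
  have hz1 : ‖z‖ < 1 := mem_ball_zero_iff.mp hz
  have hw1 : ‖w‖ < 1 := mem_ball_zero_iff.mp hw
  set a : ℝ := 1 - ‖z‖ with hadef
  set b : ℝ := 1 - ‖w‖ with hbdef
  have ha : 0 < a := by rw [hadef]; linarith
  have hb : 0 < b := by rw [hbdef]; linarith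
  set s : ℝ := Real.sqrt (a * b) with hsdef
  have hs : 0 < s := Real.sqrt_pos.mpr (by positivity)
  have hA : 0 < Real.sqrt (1 + ‖f z‖ ^ 2) := Real.sqrt_pos.mpr (by positivity)
  have hB : 0 < Real.sqrt (1 + ‖f w‖ ^ 2) := Real.sqrt_pos.mpr (by positivity)
  have hX : 0 ≤ ‖z - w‖ * (Real.sqrt (1 + ‖f z‖ ^ 2) * Real.sqrt (1 + ‖f w‖ ^ 2)) := by
    positivity
  have hsp : Real.sqrt (1 - ‖z‖ ^ 2) * Real.sqrt (1 - ‖w‖ ^ 2) ≤ 2 * s :=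
    sqrt_prod_le z w hz1 hw1
  by_cases hcase : ‖z - w‖ ≤ s / 2
  · -- main case: mean value along the segment
    have hmin : s / 2 ≤ min a b := by
      apply half_sqrt_le_min a b ha hb
      have h1 : |a - b| ≤ ‖z - w‖ := by
        have := abs_norm_sub_norm_le w z
        rw [norm_sub_rev] at this
        calc |a - b| = |‖w‖ - ‖z‖| := by rw [hadef, hbdef]; congr 1; ring
          _ ≤ ‖z - w‖ := this
      linarith
    set γ : ℝ → ℂ := fun t => z + t • (w - z) with hγdef
    have hγmem : ∀ t ∈ Set.Icc (0:ℝ) 1, s / 2 ≤ 1 - ‖γ t‖ := by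
      intro t ht
      obtain ⟨ht0, ht1⟩ := ht
      have hγeq : γ t = (1 - t) • z + t • w := by rw [hγdef]; module
      have hle : ‖γ t‖ ≤ (1 - t) * ‖z‖ + t * ‖w‖ := by
        rw [hγeq]
        refine (norm_add_le _ _).trans ?_
        rw [norm_smul, norm_smul, Real.norm_eq_abs, Real.norm_eq_abs,
          abs_of_nonneg (by linarith : (0:ℝ) ≤ 1 - t), abs_of_nonneg ht0]
      have hcomb : min a b ≤ (1 - t) * a + t * b := by
        rcases le_total a b with h | h
        · rw [min_eq_left h]; nlinarith
        · rw [min_eq_right h]; nlinarith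
      have h2 : ‖γ t‖ ≤ 1 - ((1 - t) * a + t * b) := by
        have : (1 - t) * ‖z‖ + t * ‖w‖ = 1 - ((1 - t) * a + t * b) := by
          rw [hadef, hbdef]; ring
        linarith
      linarith
    have hγball : ∀ t ∈ Set.Icc (0:ℝ) 1, γ t ∈ Metric.ball (0 : ℂ) 1 := by
      intro t ht
      have := hγmem t ht
      rw [mem_ball_zero_iff]
      linarith
    have hderiv : ∀ t ∈ Set.Icc (0:ℝ) 1,
        HasDerivWithinAt (fun t' => sP (f (γ t')))
          (sD (f (γ t)) ((w - z) • deriv f (γ t))) (Set.Icc 0 1) t := by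
      intro t ht
      have hγ' : HasDerivAt γ (w - z) t := by
        have := ((hasDerivAt_id t).smul_const (w - z)).const_add z
        simpa [hγdef] using this
      have hfd : HasDerivAt f (deriv f (γ t)) (γ t) :=
        (hf.differentiableAt (Metric.isOpen_ball.mem_nhds (hγball t ht))).hasDerivAt
      have hcomp : HasDerivAt (fun t' => f (γ t')) ((w - z) • deriv f (γ t)) t :=
        hfd.scomp t hγ'
      exact (sP_hasDerivAt _ _ t hcomp).hasDerivWithinAt
    have hbound : ∀ t ∈ Set.Icc (0:ℝ) 1,
        ‖sD (f (γ t)) ((w - z) • deriv f (γ t))‖ ≤ 4 * C * ‖z - w‖ / s := by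
      intro t ht
      rw [sD_norm]
      have hγt := hγball t ht
      have hγt1 : ‖γ t‖ < 1 := mem_ball_zero_iff.mp hγt
      have hD : s / 2 ≤ 1 - ‖γ t‖ ^ 2 := by
        have h1 := hγmem t ht
        nlinarith [norm_nonneg (γ t)]
      have hQpos : (0:ℝ) < 1 + ‖f (γ t)‖ ^ 2 := by positivity
      have hCt := hC (γ t) hγt
      have hvn : ‖(w - z) • deriv f (γ t)‖ = ‖z - w‖ * ‖deriv f (γ t)‖ := by
        rw [smul_eq_mul, norm_mul, norm_sub_rev]
      rw [hvn, div_le_div_iff₀ hQpos hs]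
      have hkey : s * ‖deriv f (γ t)‖ ≤ 2 * C * (1 + ‖f (γ t)‖ ^ 2) := by
        have h2 : (1 - ‖γ t‖ ^ 2) * ‖deriv f (γ t)‖ ≤ C * (1 + ‖f (γ t)‖ ^ 2) := by
          rw [div_le_iff₀ hQpos] at hCt
          linarith
        have h3 := mul_le_mul_of_nonneg_right hD (norm_nonneg (deriv f (γ t)))
        linarith
      calc 2 * (‖z - w‖ * ‖deriv f (γ t)‖) * s
          = 2 * ‖z - w‖ * (s * ‖deriv f (γ t)‖) := by ring
        _ ≤ 2 * ‖z - w‖ * (2 * C * (1 + ‖f (γ t)‖ ^ 2)) := by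
            have := mul_le_mul_of_nonneg_left hkey
              (by positivity : (0:ℝ) ≤ 2 * ‖z - w‖)
            linarith
        _ = 4 * C * ‖z - w‖ * (1 + ‖f (γ t)‖ ^ 2) := by ring
    have hmvt := norm_image_sub_le_of_norm_deriv_le_segment' hderiv (fun t ht => hbound t (Set.Ico_subset_Icc_self ht)) 1
      (Set.right_mem_Icc.mpr zero_le_one)
    have hγ1 : γ 1 = w := by rw [hγdef]; simp
    have hγ0 : γ 0 = z := by rw [hγdef]; simp
    rw [hγ1, hγ0, sub_zero, mul_one, sP_sub_norm] at hmvt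
    rw [div_le_div_iff₀ (by positivity) hs] at hmvt
    -- hmvt : 2 * ‖f w - f z‖ * s ≤ 4*C*‖z-w‖/s ... now multiplied out
    calc Real.sqrt (1 - ‖z‖ ^ 2) * Real.sqrt (1 - ‖w‖ ^ 2) * ‖f z - f w‖
        ≤ 2 * s * ‖f w - f z‖ := by
          rw [norm_sub_rev]; exact mul_le_mul_of_nonneg_right hsp (norm_nonneg _)
      _ = 2 * ‖f w - f z‖ * s := by ring
      _ ≤ 4 * C * ‖z - w‖ * (Real.sqrt (1 + ‖f w‖ ^ 2) * Real.sqrt (1 + ‖f z‖ ^ 2)) := hmvt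
      _ = 4 * C * (‖z - w‖ * (Real.sqrt (1 + ‖f z‖ ^ 2) * Real.sqrt (1 + ‖f w‖ ^ 2))) := by
          ring
      _ ≤ (4 * C + 4) * (‖z - w‖ * (Real.sqrt (1 + ‖f z‖ ^ 2) * Real.sqrt (1 + ‖f w‖ ^ 2)))
          := mul_le_mul_of_nonneg_right (by linarith) hX
      _ = (4 * C + 4) * ‖z - w‖ * Real.sqrt (1 + ‖f z‖ ^ 2) * Real.sqrt (1 + ‖f w‖ ^ 2) := by
          ring
  · -- trivial case
    push_neg at hcase
    have h1 : 2 * s ≤ 4 * ‖z - w‖ := by linarith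
    have htr := trivial_chordal (f z) (f w)
    calc Real.sqrt (1 - ‖z‖ ^ 2) * Real.sqrt (1 - ‖w‖ ^ 2) * ‖f z - f w‖
        ≤ 2 * s * ‖f z - f w‖ := mul_le_mul_of_nonneg_right hsp (norm_nonneg _)
      _ ≤ 4 * ‖z - w‖ * (Real.sqrt (1 + ‖f z‖ ^ 2) * Real.sqrt (1 + ‖f w‖ ^ 2)) :=
          mul_le_mul h1 htr (norm_nonneg _) (by positivity)
      _ = 4 * (‖z - w‖ * (Real.sqrt (1 + ‖f z‖ ^ 2) * Real.sqrt (1 + ‖f w‖ ^ 2))) := by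
          ring
      _ ≤ (4 * C + 4) * (‖z - w‖ * (Real.sqrt (1 + ‖f z‖ ^ 2) * Real.sqrt (1 + ‖f w‖ ^ 2)))
          := mul_le_mul_of_nonneg_right (by linarith) hX
      _ = (4 * C + 4) * ‖z - w‖ * Real.sqrt (1 + ‖f z‖ ^ 2) * Real.sqrt (1 + ‖f w‖ ^ 2) := by
          ring

open Filter Topology

/-- Two-point characterization of normal functions on the unit disc. -/
theorem normal_iff_two_point
    (f : ℂ → ℂ) (hf : DifferentiableOn ℂ f (Metric.ball (0 : ℂ) 1)) :
    (∃ C : ℝ, 0 ≤ C ∧ ∀ z ∈ Metric.ball (0 : ℂ) 1,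
        (1 - ‖z‖ ^ 2) * ‖deriv f z‖ / (1 + ‖f z‖ ^ 2) ≤ C)
      ↔ (∃ C' : ℝ, 0 ≤ C' ∧ ∀ z ∈ Metric.ball (0 : ℂ) 1,
          ∀ w ∈ Metric.ball (0 : ℂ) 1,
            Real.sqrt (1 - ‖z‖ ^ 2) * Real.sqrt (1 - ‖w‖ ^ 2) * ‖f z - f w‖
              ≤ C' * ‖z - w‖ * Real.sqrt (1 + ‖f z‖ ^ 2) * Real.sqrt (1 + ‖f w‖ ^ 2)) := by
  constructor
  · rintro ⟨C, hC0, hC⟩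
    exact ⟨4 * C + 4, by linarith, fun z hz w hw => forward_lemma f hf C hC0 hC z hz w hw⟩
  · rintro ⟨C', hC'0, hC'⟩
    exact ⟨C', hC'0, fun z hz => backward_lemma f hf C' hC' z hz⟩
end

section
/- Let μ be a finite Borel measure on the interval [−1,1] ⊆ ℝ and let a ∈ ℝ. For x ∈ (−1,1) define φ(x) = a + ∫_{[−1,1]} x/(1 − u x) dμ(u) and D(x) = ∫_{[−1,1]} (1 − u x)^{−2} dμ(u). Then (i) for every x ∈ (−1,1), φ has derivative D(x) at x, and (ii) for all s, t with −1 < s < t < 1: φ(t) − φ(s) ≤ √(D(t) · D(s)) · (t − s). -/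
open Filter Topology MeasureTheory

private lemma key_bound {u x : ℝ} (hu : u ∈ Set.Icc (-1 : ℝ) 1) (hx : |x| < 1) :
    1 - |x| ≤ 1 - u * x := by
  have : u * x ≤ |x| := by
    calc u * x ≤ |u * x| := le_abs_self _
    _ = |u| * |x| := abs_mul u x
    _ ≤ 1 * |x| := by
        apply mul_le_mul_of_nonneg_right _ (abs_nonneg x)
        exact abs_le.mpr ⟨hu.1, hu.2⟩
    _ = |x| := one_mul _
  linarith

private lemma deriv_part (μ : Measure ℝ) [IsFiniteMeasure μ] (x : ℝ)
    (hx : x ∈ Set.Ioo (-1 : ℝ) 1) :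
    HasDerivAt (fun x : ℝ => ∫ u in Set.Icc (-1 : ℝ) 1, x / (1 - u * x) ∂μ)
      (∫ u in Set.Icc (-1 : ℝ) 1, ((1 - u * x) ^ 2)⁻¹ ∂μ) x := by
  have hxabs : |x| < 1 := abs_lt.mpr ⟨hx.1, hx.2⟩
  set r : ℝ := (1 + |x|) / 2 with hr
  have hr1 : r < 1 := by simp only [hr]; linarith
  have hrpos : (0:ℝ) < 1 - r := by linarith
  set ε : ℝ := (1 - |x|) / 2 with hε
  have hεpos : (0:ℝ) < ε := by simp only [hε]; linarith
  -- for y in ball x ε, |y| ≤ r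
  have hball : ∀ y ∈ Metric.ball x ε, |y| < r := by
    intro y hy
    have : |y - x| < ε := by simpa [Real.dist_eq] using hy
    calc |y| = |x + (y - x)| := by ring_nf
    _ ≤ |x| + |y - x| := abs_add_le _ _
    _ < |x| + ε := by linarith
    _ = r := by simp only [hε, hr]; ring
  have hmeas : ∀ y : ℝ, AEStronglyMeasurable (fun u : ℝ => y / (1 - u * y))
      (μ.restrict (Set.Icc (-1:ℝ) 1)) := fun y =>
    (measurable_const.div ((measurable_const.sub (measurable_id.mul_const y)))).aestronglyMeasurable
  have h := hasDerivAt_integral_of_dominated_loc_of_deriv_le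
    (F := fun (y : ℝ) (u : ℝ) => y / (1 - u * y))
    (F' := fun (y : ℝ) (u : ℝ) => ((1 - u * y) ^ 2)⁻¹)
    (μ := μ.restrict (Set.Icc (-1:ℝ) 1)) (x₀ := x)
    (bound := fun _ => ((1 - r) ^ 2)⁻¹) (Metric.ball_mem_nhds x hεpos)
    (Eventually.of_forall fun y => hmeas y)
    ?_ ?_ ?_ (integrable_const _) ?_
  · exact h.2
  · -- integrability of F x₀
    apply Integrable.mono' (g := fun _ => |x| / (1 - |x|)) (integrable_const _) (hmeas x)
    filter_upwards [ae_restrict_mem measurableSet_Icc] with u hu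
    have hb := key_bound hu hxabs
    have h1 : (0:ℝ) < 1 - |x| := by linarith
    rw [Real.norm_eq_abs, abs_div]
    apply div_le_div₀ (abs_nonneg x) le_rfl h1
    rw [abs_of_pos (lt_of_lt_of_le h1 hb)]; exact hb
  · exact ((measurable_const.sub (measurable_id.mul_const x)).pow_const 2).inv.aestronglyMeasurable
  · -- bound
    filter_upwards [ae_restrict_mem measurableSet_Icc] with u hu y hy
    have hb := key_bound hu (lt_trans (hball y hy) hr1)
    have h1 : (0:ℝ) < 1 - u * y := by
      have := (hball y hy); have : 1 - r ≤ 1 - |y| := by linarith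
      linarith
    rw [Real.norm_eq_abs, abs_inv, abs_of_pos (by positivity : (0:ℝ) < (1 - u*y)^2)]
    apply inv_anti₀ (by positivity)
    have h2 : 1 - r ≤ 1 - u * y := by
      have := hball y hy; linarith
    exact pow_le_pow_left₀ (le_of_lt hrpos) h2 2
  · -- differentiability
    filter_upwards [ae_restrict_mem measurableSet_Icc] with u hu y hy
    have hb := key_bound hu (lt_trans (hball y hy) hr1)
    have h1 : (1:ℝ) - u * y ≠ 0 := by
      have := hball y hy
      have : (0:ℝ) < 1 - r := hrpos
      intro h; rw [h] at hb; have : |y| < r := hball y hy; linarith [key_bound hu (lt_trans (hball y hy) hr1)]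
    have hd : HasDerivAt (fun y : ℝ => y / (1 - u * y))
        ((1 * (1 - u * y) - y * (0 - u * 1)) / (1 - u * y) ^ 2) y := by
      exact (hasDerivAt_id y).div ((hasDerivAt_const y 1).sub ((hasDerivAt_id y).const_mul u)) h1
    exact hd.congr_deriv (by ring)

/-- Jocić's lemma on `(-1,1)` via the Nevanlinna representation: the function
`φ(x) = a + ∫_{[-1,1]} x/(1-ux) dμ(u)` has derivative `D(x) = ∫_{[-1,1]} (1-ux)⁻² dμ(u)`
at every `x ∈ (-1,1)`, and `φ(t) - φ(s) ≤ √(D(t)·D(s))·(t-s)` for `-1 < s < t < 1`. -/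
theorem nevanlinna_hasDerivAt_and_jocic_ineq
    (μ : Measure ℝ) [IsFiniteMeasure μ] (a : ℝ) :
    (∀ x ∈ Set.Ioo (-1 : ℝ) 1,
        HasDerivAt (fun x : ℝ => a + ∫ u in Set.Icc (-1 : ℝ) 1, x / (1 - u * x) ∂μ)
          (∫ u in Set.Icc (-1 : ℝ) 1, ((1 - u * x) ^ 2)⁻¹ ∂μ) x)
    ∧ ∀ s t : ℝ, -1 < s → s < t → t < 1 →
        (a + ∫ u in Set.Icc (-1 : ℝ) 1, t / (1 - u * t) ∂μ)
            - (a + ∫ u in Set.Icc (-1 : ℝ) 1, s / (1 - u * s) ∂μ)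
          ≤ Real.sqrt ((∫ u in Set.Icc (-1 : ℝ) 1, ((1 - u * t) ^ 2)⁻¹ ∂μ) *
                (∫ u in Set.Icc (-1 : ℝ) 1, ((1 - u * s) ^ 2)⁻¹ ∂μ)) * (t - s) := by
  constructor
  · intro x hx
    exact (deriv_part μ x hx).const_add a
  · intro s t hs hst ht
    have hsabs : |s| < 1 := abs_lt.mpr ⟨hs, lt_trans hst ht⟩
    have htabs : |t| < 1 := abs_lt.mpr ⟨lt_trans hs hst, ht⟩
    have hspos : (0:ℝ) < 1 - |s| := by linarith
    have htpos : (0:ℝ) < 1 - |t| := by linarith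
    set ν := μ.restrict (Set.Icc (-1:ℝ) 1) with hν
    -- integrability of all functions
    have hmeasf : ∀ y : ℝ, AEStronglyMeasurable (fun u : ℝ => (1 - u * y)⁻¹) ν := fun y =>
      ((measurable_const.sub (measurable_id.mul_const y)).inv).aestronglyMeasurable
    have hmemf : ∀ y : ℝ, |y| < 1 → MemLp (fun u : ℝ => (1 - u * y)⁻¹) 2 ν := by
      intro y hy
      apply MemLp.of_bound (hmeasf y) ((1 - |y|)⁻¹)
      filter_upwards [ae_restrict_mem measurableSet_Icc] with u hu
      have hb := key_bound hu hy
      have h1 : (0:ℝ) < 1 - |y| := by linarith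
      rw [Real.norm_eq_abs, abs_inv, abs_of_pos (lt_of_lt_of_le h1 hb)]
      exact inv_anti₀ h1 hb
    have hintsq : ∀ y : ℝ, |y| < 1 → Integrable (fun u : ℝ => ((1 - u * y) ^ 2)⁻¹) ν := by
      intro y hy
      have := ((hmemf y hy).integrable_sq)
      apply this.congr
      filter_upwards with u
      rw [sq, ← mul_inv, ← sq]
    have hintf : ∀ y : ℝ, |y| < 1 → Integrable (fun u : ℝ => y / (1 - u * y)) ν := by
      intro y hy
      have := ((hmemf y hy).integrable (by norm_num)).const_mul y
      apply this.congr
      filter_upwards with u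
      rw [div_eq_mul_inv]
    -- Cauchy-Schwarz
    have hCS : ∫ u, (1 - u * t)⁻¹ * (1 - u * s)⁻¹ ∂ν ≤
        Real.sqrt (∫ u, ((1 - u * t) ^ 2)⁻¹ ∂ν) * Real.sqrt (∫ u, ((1 - u * s) ^ 2)⁻¹ ∂ν) := by
      have hnn : ∀ y : ℝ, |y| < 1 → (0 : ℝ → ℝ) ≤ᵐ[ν] fun u => (1 - u * y)⁻¹ := by
        intro y hy
        filter_upwards [ae_restrict_mem measurableSet_Icc] with u hu
        have hb := key_bound hu hy
        have h1 : (0:ℝ) < 1 - |y| := by linarith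
        have h2 : (0:ℝ) < 1 - u * y := by linarith
        positivity
      have h2 : Real.HolderConjugate 2 2 := Real.HolderConjugate.two_two
      have := MeasureTheory.integral_mul_le_Lp_mul_Lq_of_nonneg h2 (hnn t htabs) (hnn s hsabs)
        (by simpa using hmemf t htabs) (by simpa using hmemf s hsabs)
      calc ∫ u, (1 - u * t)⁻¹ * (1 - u * s)⁻¹ ∂ν
          ≤ (∫ u, (1 - u * t)⁻¹ ^ (2:ℝ) ∂ν) ^ (1/(2:ℝ)) * (∫ u, (1 - u * s)⁻¹ ^ (2:ℝ) ∂ν) ^ (1/(2:ℝ)) := this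
        _ = Real.sqrt (∫ u, ((1 - u * t) ^ 2)⁻¹ ∂ν) * Real.sqrt (∫ u, ((1 - u * s) ^ 2)⁻¹ ∂ν) := by
            have he : ∀ y : ℝ, (∫ u, (1 - u * y)⁻¹ ^ (2:ℝ) ∂ν) = ∫ u, ((1 - u * y) ^ 2)⁻¹ ∂ν := by
              intro y
              apply integral_congr_ae
              filter_upwards with u
              rw [show ((2:ℝ) = ((2:ℕ):ℝ)) by norm_num, Real.rpow_natCast, inv_pow]
            rw [he, he, ← Real.sqrt_eq_rpow, ← Real.sqrt_eq_rpow]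
    -- pointwise identity
    have hdiff : (∫ u, t / (1 - u * t) ∂ν) - ∫ u, s / (1 - u * s) ∂ν
        = (t - s) * ∫ u, (1 - u * t)⁻¹ * (1 - u * s)⁻¹ ∂ν := by
      rw [← integral_sub (hintf t htabs) (hintf s hsabs), ← integral_const_mul]
      apply integral_congr_ae
      filter_upwards [ae_restrict_mem measurableSet_Icc] with u hu
      have hbt := key_bound hu htabs
      have hbs := key_bound hu hsabs
      have h1 : (1:ℝ) - u * t ≠ 0 := by intro h; rw [h] at hbt; linarith
      have h2 : (1:ℝ) - u * s ≠ 0 := by intro h; rw [h] at hbs; linarith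
      rw [div_sub_div _ _ h1 h2, div_eq_mul_inv, mul_inv]
      ring
    have hts : (0:ℝ) ≤ t - s := by linarith
    calc (a + ∫ u, t / (1 - u * t) ∂ν) - (a + ∫ u, s / (1 - u * s) ∂ν)
        = (t - s) * ∫ u, (1 - u * t)⁻¹ * (1 - u * s)⁻¹ ∂ν := by rw [← hdiff]; ring
      _ ≤ (t - s) * (Real.sqrt (∫ u, ((1 - u * t) ^ 2)⁻¹ ∂ν) * Real.sqrt (∫ u, ((1 - u * s) ^ 2)⁻¹ ∂ν)) :=
          mul_le_mul_of_nonneg_left hCS hts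
      _ = Real.sqrt ((∫ u, ((1 - u * t) ^ 2)⁻¹ ∂ν) * ∫ u, ((1 - u * s) ^ 2)⁻¹ ∂ν) * (t - s) := by
          rw [← Real.sqrt_mul (integral_nonneg fun u => by positivity)]; ring
end
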